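/- arXiv:1111.4809 — 6 statements merged into one kernel-verified Lean document; each statement's English description precedes it below -/
import Mathlib

section
/- Let Γ1 and Γ2 be triangulations of the n-gon related by a Whitehead move: there are vertices p<q<r<s such that a1={p,q}, a2={q,r}, a3={r,s}, a4={p,s} are edges of Γ1, the diagonal d={p,r} belongs to D1, and D2=(D1∖{d})∪{d′} where d′={q,s}. Then D2 is again a set of n−3 pairwise non-crossing diagonals (so Γ2 is a triangulation), and the map sending a function u on the edges of Γ1 to the function u′ on the edges of Γ2 defined by u′(a)=u(a) for every edge a common to Γ1 and Γ2 and u′(d′)=u(d)−min(u(a1)+u(a2), u(a3)+u(a4))+min(u(a1)+u(a4), u(a2)+u(a3)) restricts to a bijection from the set of functions satisfying the triangle inequalities of Γ1 onto the set of functions satisfying the triangle inequalities of Γ2. -/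
open Classical

/-- `IsSide n p q` : the pair `{p, q}` (with `p < q`) is a side of the convex `n`-gon with
vertices labeled `0, 1, …, n-1`; the sides are `e_i = {i-1, i}` for `i = 1, …, n-1`
together with `e_n = {0, n-1}`. -/
def IsSide (n p q : ℕ) : Prop :=
  p < q ∧ q < n ∧ (q = p + 1 ∨ (p = 0 ∧ q = n - 1))

/-- `IsDiag n p q` : the pair `{p, q}` (with `p < q`) is a diagonal of the `n`-gon, i.e.
a pair of distinct vertices which is not a side. -/
def IsDiag (n p q : ℕ) : Prop :=
  p < q ∧ q < n ∧ ¬(q = p + 1 ∨ (p = 0 ∧ q = n - 1))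

/-- Two diagonals `{p, q}` (`p < q`) and `{p', q'}` (`p' < q'`) cross if
`p < p' < q < q'` or `p' < p < q' < q`. -/
def Crosses (d d' : ℕ × ℕ) : Prop :=
  (d.1 < d'.1 ∧ d'.1 < d.2 ∧ d.2 < d'.2) ∨ (d'.1 < d.1 ∧ d.1 < d'.2 ∧ d'.2 < d.2)

/-- A triangulation of the `n`-gon: a set of `n - 3` pairwise non-crossing diagonals. -/
def IsTriangulation (n : ℕ) (D : Finset (ℕ × ℕ)) : Prop :=
  D.card = n - 3 ∧ (∀ d ∈ D, IsDiag n d.1 d.2) ∧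
    ∀ d ∈ D, ∀ d' ∈ D, d ≠ d' → ¬Crosses d d'

/-- The edges of the triangulation with diagonal set `D`: the sides of the `n`-gon
together with the diagonals in `D`. -/
def IsEdge (n : ℕ) (D : Finset (ℕ × ℕ)) (p q : ℕ) : Prop :=
  IsSide n p q ∨ (p, q) ∈ D

/-- A triangle of the triangulation: vertices `p < q < r` such that all three pairs are
edges. -/
def IsTriangleOf (n : ℕ) (D : Finset (ℕ × ℕ)) (p q r : ℕ) : Prop :=
  p < q ∧ q < r ∧ IsEdge n D p q ∧ IsEdge n D q r ∧ IsEdge n D p r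

/-- A function `u` on edges (given on ordered pairs) satisfies the triangle inequalities of
the triangulation if for every triangle with edges `a, b, c` one has
`|u a - u b| ≤ u c ≤ u a + u b`. -/
def SatisfiesTriangleIneqs (n : ℕ) (D : Finset (ℕ × ℕ)) (u : ℕ × ℕ → ℝ) : Prop :=
  ∀ p q r : ℕ, IsTriangleOf n D p q r →
    |u (p, q) - u (q, r)| ≤ u (p, r) ∧ u (p, r) ≤ u (p, q) + u (q, r)

/-- Functions on the edges of the triangulation (encoded as functions on ordered pairs
vanishing off the edges) satisfying the triangle inequalities. -/
def TriangPolytope (n : ℕ) (D : Finset (ℕ × ℕ)) : Set (ℕ × ℕ → ℝ) :=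
  {u | (∀ a : ℕ × ℕ, ¬IsEdge n D a.1 a.2 → u a = 0) ∧ SatisfiesTriangleIneqs n D u}

/-- The map associated to the Whitehead move replacing the diagonal `d = {p, r}` by
`d' = {q, s}` in the quadrilateral with sides `a1 = {p,q}`, `a2 = {q,r}`, `a3 = {r,s}`,
`a4 = {p,s}`: it keeps the value of `u` on every edge common to both triangulations and
assigns to the new diagonal `d'` the value
`u d - min (u a1 + u a2) (u a3 + u a4) + min (u a1 + u a4) (u a2 + u a3)`
(values off the edges of the new triangulation `D2` are set to zero). -/
noncomputable def whiteheadMap (n : ℕ) (D2 : Finset (ℕ × ℕ)) (p q r s : ℕ)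
    (u : ℕ × ℕ → ℝ) : ℕ × ℕ → ℝ := fun a =>
  if IsEdge n D2 a.1 a.2 then
    if a = (q, s) then
      u (p, r) - min (u (p, q) + u (q, r)) (u (r, s) + u (p, s))
        + min (u (p, q) + u (p, s)) (u (q, r) + u (r, s))
    else u a
  else 0

private lemma wh_key (u1 u2 u3 u4 t : ℝ) (h1 : u1 ≤ u2 + t) (h2 : u2 ≤ u1 + t)
    (h3 : t ≤ u1 + u2) (h4 : t ≤ u3 + u4) (h5 : u3 ≤ t + u4) (h6 : u4 ≤ t + u3) :
    (u1 ≤ u4 + (t - min (u1 + u2) (u3 + u4) + min (u1 + u4) (u2 + u3)) ∧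
      u4 ≤ u1 + (t - min (u1 + u2) (u3 + u4) + min (u1 + u4) (u2 + u3)) ∧
      t - min (u1 + u2) (u3 + u4) + min (u1 + u4) (u2 + u3) ≤ u1 + u4) ∧
    (u2 ≤ u3 + (t - min (u1 + u2) (u3 + u4) + min (u1 + u4) (u2 + u3)) ∧
      u3 ≤ u2 + (t - min (u1 + u2) (u3 + u4) + min (u1 + u4) (u2 + u3)) ∧
      t - min (u1 + u2) (u3 + u4) + min (u1 + u4) (u2 + u3) ≤ u2 + u3) := by
  simp only [min_def]
  split_ifs <;>
    exact ⟨⟨by linarith, by linarith, by linarith⟩, by linarith, by linarith, by linarith⟩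

private lemma wh_cancel (w1 w2 w3 w4 v : ℝ) :
    (v - min (w2 + w3) (w4 + w1) + min (w2 + w1) (w3 + w4)) - min (w1 + w2) (w3 + w4)
      + min (w1 + w4) (w2 + w3) = v := by
  rw [min_comm (w2 + w3) (w4 + w1), add_comm w4 w1, add_comm w2 w1]; ring

/-- If `Γ1` and `Γ2` are related by a Whitehead move replacing the diagonal `d = {p, r}`
by `d' = {q, s}`, then `D2 = (D1 \ {d}) ∪ {d'}` is again a triangulation, and the
piecewise-linear Whitehead map restricts to a bijection from the set of edge-functions
satisfying the triangle inequalities of `Γ1` onto the corresponding set for `Γ2`. -/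
theorem whitehead_move_triangulation_and_bijection (n : ℕ) (hn : 4 ≤ n)
    (D1 : Finset (ℕ × ℕ)) (hD1 : IsTriangulation n D1)
    (p q r s : ℕ) (hpq : p < q) (hqr : q < r) (hrs : r < s)
    (ha1 : IsEdge n D1 p q) (ha2 : IsEdge n D1 q r)
    (ha3 : IsEdge n D1 r s) (ha4 : IsEdge n D1 p s)
    (hd : (p, r) ∈ D1) :
    IsTriangulation n (D1.erase (p, r) ∪ {(q, s)}) ∧
      Set.BijOn (whiteheadMap n (D1.erase (p, r) ∪ {(q, s)}) p q r s)
        (TriangPolytope n D1) (TriangPolytope n (D1.erase (p, r) ∪ {(q, s)})) := by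
  obtain ⟨hcard, hdiag, hcross⟩ := hD1
  have hpr : p < r := hpq.trans hqr
  have hps : p < s := hpr.trans hrs
  have hqs : q < s := hqr.trans hrs
  have hprdiag : IsDiag n p r := hdiag _ hd
  have hrn : r < n := hprdiag.2.1
  have hsn : s < n := by
    rcases ha3 with h | h
    · exact h.2.1
    · exact (hdiag _ h).2.1
  -- diagonals of D1 do not cross edges of Γ1
  have hnc1 : ∀ x y a b : ℕ, (x, y) ∈ D1 → IsEdge n D1 a b → ¬Crosses (x, y) (a, b) := by
    intro x y a b hxy hab
    have hx := hdiag _ hxy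
    rcases hab with h | h
    · simp only [Crosses, IsDiag, IsSide] at hx h ⊢
      omega
    · by_cases hh : ((x, y) : ℕ × ℕ) = (a, b)
      · rw [hh]; simp only [Crosses]; omega
      · exact hcross _ hxy _ h hh
  have hqs_cross : Crosses (p, r) (q, s) := Or.inl ⟨hpq, hqr, hrs⟩
  have hne_prqs : ((p, r) : ℕ × ℕ) ≠ (q, s) := by
    simp only [ne_eq, Prod.mk.injEq]; omega
  have hqs_not_D1 : (q, s) ∉ D1 := fun h => hcross _ hd _ h hne_prqs hqs_cross
  have hqs_notin_erase : (q, s) ∉ D1.erase (p, r) := fun h =>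
    hqs_not_D1 (Finset.mem_erase.mp h).2
  have hmem2 : ∀ d : ℕ × ℕ, d ∈ D1.erase (p, r) ∪ {(q, s)} ↔
      (d ∈ D1 ∧ d ≠ (p, r)) ∨ d = (q, s) := by
    intro d
    simp only [Finset.mem_union, Finset.mem_erase, Finset.mem_singleton]
    tauto
  have hqsdiag : IsDiag n q s := by
    simp only [IsDiag]; omega
  have hcard2 : (D1.erase (p, r) ∪ {(q, s)}).card = n - 3 := by
    rw [Finset.card_union_of_disjoint (Finset.disjoint_singleton_right.mpr hqs_notin_erase),
      Finset.card_erase_of_mem hd, Finset.card_singleton, hcard]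
    omega
  have hdiag2 : ∀ d ∈ D1.erase (p, r) ∪ {(q, s)}, IsDiag n d.1 d.2 := by
    intro d hd2
    rw [hmem2] at hd2
    rcases hd2 with ⟨h, _⟩ | rfl
    · exact hdiag _ h
    · exact hqsdiag
  -- diagonals of D1 other than (p,r) do not cross (q,s)
  have hnc_qs : ∀ x y : ℕ, (x, y) ∈ D1 → ((x, y) : ℕ × ℕ) ≠ (p, r) →
      ¬Crosses (x, y) (q, s) := by
    intro x y hxy hne
    have h1 := hnc1 x y p q hxy ha1
    have h2 := hnc1 x y q r hxy ha2
    have h3 := hnc1 x y r s hxy ha3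
    have h4 := hnc1 x y p s hxy ha4
    have h5 := hnc1 x y p r hxy (Or.inr hd)
    have hx := hdiag _ hxy
    simp only [ne_eq, Prod.mk.injEq, not_and] at hne
    simp only [Crosses, IsDiag] at hx h1 h2 h3 h4 h5 ⊢
    omega
  have hcross2 : ∀ d ∈ D1.erase (p, r) ∪ {(q, s)}, ∀ d' ∈ D1.erase (p, r) ∪ {(q, s)},
      d ≠ d' → ¬Crosses d d' := by
    intro d hd2 d' hd'2 hne
    obtain ⟨x, y⟩ := d
    obtain ⟨x', y'⟩ := d'
    rw [hmem2] at hd2 hd'2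
    rcases hd2 with ⟨hm, hn'⟩ | heq
    · rcases hd'2 with ⟨hm', hn''⟩ | heq'
      · exact hcross _ hm _ hm' hne
      · rw [heq']; exact hnc_qs x y hm hn'
    · rcases hd'2 with ⟨hm', hn''⟩ | heq'
      · rw [heq]
        exact fun hc => hnc_qs x' y' hm' hn'' (Or.symm hc)
      · exact absurd (heq.trans heq'.symm) hne
  have hT2 : IsTriangulation n (D1.erase (p, r) ∪ {(q, s)}) := ⟨hcard2, hdiag2, hcross2⟩
  -- edge transfer lemmas
  have hL1 : ∀ a b : ℕ, IsEdge n (D1.erase (p, r) ∪ {(q, s)}) a b →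
      ((a, b) : ℕ × ℕ) ≠ (q, s) → IsEdge n D1 a b := by
    rintro a b (h | h) hne
    · exact Or.inl h
    · rw [hmem2] at h
      rcases h with ⟨h, _⟩ | h
      · exact Or.inr h
      · exact absurd h hne
  have hL2 : ∀ a b : ℕ, IsEdge n D1 a b → ((a, b) : ℕ × ℕ) ≠ (p, r) →
      IsEdge n (D1.erase (p, r) ∪ {(q, s)}) a b := by
    rintro a b (h | h) hne
    · exact Or.inl h
    · exact Or.inr ((hmem2 _).mpr (Or.inl ⟨h, hne⟩))
  have hqs_edge2 : IsEdge n (D1.erase (p, r) ∪ {(q, s)}) q s :=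
    Or.inr ((hmem2 _).mpr (Or.inr rfl))
  have hqs_not_edge1 : ¬IsEdge n D1 q s := by
    rintro (h | h)
    · simp only [IsSide] at h; omega
    · exact hqs_not_D1 h
  have hpr_not_edge2 : ¬IsEdge n (D1.erase (p, r) ∪ {(q, s)}) p r := by
    rintro (h | h)
    · simp only [IsSide, IsDiag] at h hprdiag; omega
    · rw [hmem2] at h
      rcases h with ⟨_, hne⟩ | h
      · exact hne rfl
      · exact hne_prqs h
  -- edges of Γ1 do not cross (p,r); edges of Γ2 do not cross (q,s)
  have hL3 : ∀ a b : ℕ, IsEdge n D1 a b → ¬Crosses (a, b) (p, r) := by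
    rintro a b (h | h)
    · simp only [Crosses, IsSide, IsDiag] at h hprdiag ⊢; omega
    · exact fun hc => hnc1 p r a b hd (Or.inr h) (Or.symm hc)
  have hL4 : ∀ a b : ℕ, IsEdge n (D1.erase (p, r) ∪ {(q, s)}) a b →
      ((a, b) : ℕ × ℕ) ≠ (q, s) → ¬Crosses (a, b) (q, s) := by
    intro a b h hne
    rcases h with h | h
    · simp only [Crosses, IsSide, IsDiag] at h hqsdiag ⊢; omega
    · rw [hmem2] at h
      rcases h with ⟨h, hne'⟩ | h
      · exact hnc_qs a b h hne'
      · exact absurd h hne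
  -- classification of triangles of Γ2
  have hT2class : ∀ x y z : ℕ, IsTriangleOf n (D1.erase (p, r) ∪ {(q, s)}) x y z →
      (IsTriangleOf n D1 x y z ∧ ((x, y) : ℕ × ℕ) ≠ (q, s) ∧ ((y, z) : ℕ × ℕ) ≠ (q, s) ∧
        ((x, z) : ℕ × ℕ) ≠ (q, s)) ∨
      (x = p ∧ y = q ∧ z = s) ∨ (x = q ∧ y = r ∧ z = s) := by
    rintro x y z ⟨hxy, hyz, e1, e2, e3⟩
    by_cases c1 : ((x, y) : ℕ × ℕ) = (q, s) ∨ ((y, z) : ℕ × ℕ) = (q, s) ∨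
        ((x, z) : ℕ × ℕ) = (q, s)
    · right
      have f1 : (x = q ∧ y = s) ∨ ¬Crosses (x, y) (p, r) := by
        by_cases h : ((x, y) : ℕ × ℕ) = (q, s)
        · left; simpa [Prod.mk.injEq] using h
        · right; exact hL3 _ _ (hL1 _ _ e1 h)
      have f2 : (y = q ∧ z = s) ∨ ¬Crosses (y, z) (p, r) := by
        by_cases h : ((y, z) : ℕ × ℕ) = (q, s)
        · left; simpa [Prod.mk.injEq] using h
        · right; exact hL3 _ _ (hL1 _ _ e2 h)
      have f3 : (x = q ∧ z = s) ∨ ¬Crosses (x, z) (p, r) := by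
        by_cases h : ((x, z) : ℕ × ℕ) = (q, s)
        · left; simpa [Prod.mk.injEq] using h
        · right; exact hL3 _ _ (hL1 _ _ e3 h)
      simp only [Prod.mk.injEq] at c1
      simp only [Crosses] at f1 f2 f3
      omega
    · left
      push_neg at c1
      exact ⟨⟨hxy, hyz, hL1 _ _ e1 c1.1, hL1 _ _ e2 c1.2.1, hL1 _ _ e3 c1.2.2⟩,
        c1.1, c1.2.1, c1.2.2⟩
  -- classification of triangles of Γ1
  have hT1class : ∀ x y z : ℕ, IsTriangleOf n D1 x y z →
      (IsTriangleOf n (D1.erase (p, r) ∪ {(q, s)}) x y z ∧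
        ((x, y) : ℕ × ℕ) ≠ (p, r) ∧ ((y, z) : ℕ × ℕ) ≠ (p, r) ∧
        ((x, z) : ℕ × ℕ) ≠ (p, r)) ∨
      (x = p ∧ y = q ∧ z = r) ∨ (x = p ∧ y = r ∧ z = s) := by
    rintro x y z ⟨hxy, hyz, e1, e2, e3⟩
    by_cases c1 : ((x, y) : ℕ × ℕ) = (p, r) ∨ ((y, z) : ℕ × ℕ) = (p, r) ∨
        ((x, z) : ℕ × ℕ) = (p, r)
    · right
      have f1 : (x = p ∧ y = r) ∨ ¬Crosses (x, y) (q, s) := by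
        by_cases h : ((x, y) : ℕ × ℕ) = (p, r)
        · left; simpa [Prod.mk.injEq] using h
        · right; exact hL4 _ _ (hL2 _ _ e1 h) (fun hh => hqs_not_edge1 (by
            rw [Prod.mk.injEq] at hh; rw [← hh.1, ← hh.2]; exact e1))
      have f2 : (y = p ∧ z = r) ∨ ¬Crosses (y, z) (q, s) := by
        by_cases h : ((y, z) : ℕ × ℕ) = (p, r)
        · left; simpa [Prod.mk.injEq] using h
        · right; exact hL4 _ _ (hL2 _ _ e2 h) (fun hh => hqs_not_edge1 (by
            rw [Prod.mk.injEq] at hh; rw [← hh.1, ← hh.2]; exact e2))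
      have f3 : (x = p ∧ z = r) ∨ ¬Crosses (x, z) (q, s) := by
        by_cases h : ((x, z) : ℕ × ℕ) = (p, r)
        · left; simpa [Prod.mk.injEq] using h
        · right; exact hL4 _ _ (hL2 _ _ e3 h) (fun hh => hqs_not_edge1 (by
            rw [Prod.mk.injEq] at hh; rw [← hh.1, ← hh.2]; exact e3))
      simp only [Prod.mk.injEq] at c1
      simp only [Crosses] at f1 f2 f3
      omega
    · left
      push_neg at c1
      exact ⟨⟨hxy, hyz, hL2 _ _ e1 c1.1, hL2 _ _ e2 c1.2.1, hL2 _ _ e3 c1.2.2⟩,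
        c1.1, c1.2.1, c1.2.2⟩
  -- value lemmas for the Whitehead map
  have hval : ∀ (u : ℕ × ℕ → ℝ) (a b : ℕ), IsEdge n (D1.erase (p, r) ∪ {(q, s)}) a b →
      ((a, b) : ℕ × ℕ) ≠ (q, s) →
      whiteheadMap n (D1.erase (p, r) ∪ {(q, s)}) p q r s u (a, b) = u (a, b) := by
    intro u a b h hne
    simp only [whiteheadMap, if_pos h, if_neg hne]
  have hvqs : ∀ u : ℕ × ℕ → ℝ,
      whiteheadMap n (D1.erase (p, r) ∪ {(q, s)}) p q r s u (q, s) =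
        u (p, r) - min (u (p, q) + u (q, r)) (u (r, s) + u (p, s))
          + min (u (p, q) + u (p, s)) (u (q, r) + u (r, s)) := by
    intro u
    simp only [whiteheadMap]
    split_ifs
    all_goals simp_all [hqs_edge2]
  have hv0 : ∀ (u : ℕ × ℕ → ℝ) (a : ℕ × ℕ), ¬IsEdge n (D1.erase (p, r) ∪ {(q, s)}) a.1 a.2 →
      whiteheadMap n (D1.erase (p, r) ∪ {(q, s)}) p q r s u a = 0 := by
    intro u a h
    simp only [whiteheadMap, if_neg h]
  -- nonequalities of quadrilateral sides with the diagonals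
  have hne1 : ((p, q) : ℕ × ℕ) ≠ (p, r) := by simp only [ne_eq, Prod.mk.injEq]; omega
  have hne2 : ((q, r) : ℕ × ℕ) ≠ (p, r) := by simp only [ne_eq, Prod.mk.injEq]; omega
  have hne3 : ((r, s) : ℕ × ℕ) ≠ (p, r) := by simp only [ne_eq, Prod.mk.injEq]; omega
  have hne4 : ((p, s) : ℕ × ℕ) ≠ (p, r) := by simp only [ne_eq, Prod.mk.injEq]; omega
  have hne1' : ((p, q) : ℕ × ℕ) ≠ (q, s) := by simp only [ne_eq, Prod.mk.injEq]; omega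
  have hne2' : ((q, r) : ℕ × ℕ) ≠ (q, s) := by simp only [ne_eq, Prod.mk.injEq]; omega
  have hne3' : ((r, s) : ℕ × ℕ) ≠ (q, s) := by simp only [ne_eq, Prod.mk.injEq]; omega
  have hne4' : ((p, s) : ℕ × ℕ) ≠ (q, s) := by simp only [ne_eq, Prod.mk.injEq]; omega
  have e2a1 : IsEdge n (D1.erase (p, r) ∪ {(q, s)}) p q := hL2 _ _ ha1 hne1
  have e2a2 : IsEdge n (D1.erase (p, r) ∪ {(q, s)}) q r := hL2 _ _ ha2 hne2
  have e2a3 : IsEdge n (D1.erase (p, r) ∪ {(q, s)}) r s := hL2 _ _ ha3 hne3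
  have e2a4 : IsEdge n (D1.erase (p, r) ∪ {(q, s)}) p s := hL2 _ _ ha4 hne4
  have htri_pqr : IsTriangleOf n D1 p q r := ⟨hpq, hqr, ha1, ha2, Or.inr hd⟩
  have htri_prs : IsTriangleOf n D1 p r s := ⟨hpr, hrs, Or.inr hd, ha3, ha4⟩
  have htri2_pqs : IsTriangleOf n (D1.erase (p, r) ∪ {(q, s)}) p q s :=
    ⟨hpq, hqs, e2a1, hqs_edge2, e2a4⟩
  have htri2_qrs : IsTriangleOf n (D1.erase (p, r) ∪ {(q, s)}) q r s :=
    ⟨hqr, hrs, e2a2, e2a3, hqs_edge2⟩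
  refine ⟨hT2, ?_, ?_, ?_⟩
  -- MapsTo
  · intro u hu
    obtain ⟨hu0, hu1⟩ := hu
    have k := wh_key (u (p, q)) (u (q, r)) (u (r, s)) (u (p, s)) (u (p, r))
      (by have h := hu1 p q r htri_pqr; rw [abs_sub_le_iff] at h; linarith [h.1.1, h.1.2, h.2])
      (by have h := hu1 p q r htri_pqr; rw [abs_sub_le_iff] at h; linarith [h.1.1, h.1.2, h.2])
      (by have h := hu1 p q r htri_pqr; rw [abs_sub_le_iff] at h; linarith [h.1.1, h.1.2, h.2])
      (by have h := hu1 p r s htri_prs; rw [abs_sub_le_iff] at h; linarith [h.1.1, h.1.2, h.2])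
      (by have h := hu1 p r s htri_prs; rw [abs_sub_le_iff] at h; linarith [h.1.1, h.1.2, h.2])
      (by have h := hu1 p r s htri_prs; rw [abs_sub_le_iff] at h; linarith [h.1.1, h.1.2, h.2])
    refine ⟨fun a ha => hv0 u a ha, ?_⟩
    intro x y z hxyz
    rcases hT2class x y z hxyz with ⟨ht1, m1, m2, m3⟩ | h | h
    · obtain ⟨hxy, hyz, e1, e2, e3⟩ := hxyz
      rw [hval u _ _ e1 m1, hval u _ _ e2 m2, hval u _ _ e3 m3]
      exact hu1 x y z ht1
    · obtain ⟨rfl, rfl, rfl⟩ := h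
      rw [hval u _ _ e2a1 hne1', hval u _ _ e2a4 hne4', hvqs u]
      obtain ⟨⟨k1, k2, k3⟩, _⟩ := k
      constructor
      · rw [abs_sub_le_iff]; constructor <;> linarith
      · linarith
    · obtain ⟨rfl, rfl, rfl⟩ := h
      rw [hval u _ _ e2a2 hne2', hval u _ _ e2a3 hne3', hvqs u]
      obtain ⟨_, k1, k2, k3⟩ := k
      constructor
      · rw [abs_sub_le_iff]; constructor <;> linarith
      · linarith
  -- InjOn
  · intro u hu u' hu' heq
    obtain ⟨hu0, _⟩ := hu
    obtain ⟨hu0', _⟩ := hu'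
    funext a
    obtain ⟨a, b⟩ := a
    by_cases he : IsEdge n D1 a b
    · by_cases hpr' : ((a, b) : ℕ × ℕ) = (p, r)
      · rw [Prod.mk.injEq] at hpr'
        rw [hpr'.1, hpr'.2]
        have g1 : u (p, q) = u' (p, q) := by
          have h := congrFun heq (p, q)
          rwa [hval u _ _ e2a1 hne1', hval u' _ _ e2a1 hne1'] at h
        have g2 : u (q, r) = u' (q, r) := by
          have h := congrFun heq (q, r)
          rwa [hval u _ _ e2a2 hne2', hval u' _ _ e2a2 hne2'] at h
        have g3 : u (r, s) = u' (r, s) := by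
          have h := congrFun heq (r, s)
          rwa [hval u _ _ e2a3 hne3', hval u' _ _ e2a3 hne3'] at h
        have g4 : u (p, s) = u' (p, s) := by
          have h := congrFun heq (p, s)
          rwa [hval u _ _ e2a4 hne4', hval u' _ _ e2a4 hne4'] at h
        have h := congrFun heq (q, s)
        rw [hvqs u, hvqs u', g1, g2, g3, g4] at h
        linarith
      · have hbe := hL2 _ _ he hpr'
        have hne : ((a, b) : ℕ × ℕ) ≠ (q, s) := by
          intro hh
          rw [Prod.mk.injEq] at hh
          rw [hh.1, hh.2] at he
          exact hqs_not_edge1 he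
        have h := congrFun heq (a, b)
        rwa [hval u _ _ hbe hne, hval u' _ _ hbe hne] at h
    · rw [hu0 (a, b) he, hu0' (a, b) he]
  -- SurjOn
  · intro w hw
    obtain ⟨hw0, hw1⟩ := hw
    set t' : ℝ := w (q, s) - min (w (q, r) + w (r, s)) (w (p, s) + w (p, q))
        + min (w (q, r) + w (p, q)) (w (r, s) + w (p, s)) with ht'
    set u : ℕ × ℕ → ℝ :=
      fun a => if IsEdge n D1 a.1 a.2 then (if a = (p, r) then t' else w a) else 0 with hu
    have huval : ∀ a b : ℕ, IsEdge n D1 a b → ((a, b) : ℕ × ℕ) ≠ (p, r) →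
        u (a, b) = w (a, b) := by
      intro a b h hne
      simp only [hu, if_pos h, if_neg hne]
    have hupr : u (p, r) = t' := by
      simp only [hu]
      split_ifs with h1
      · rfl
      · exact absurd (Or.inr hd) h1
    have k := wh_key (w (q, r)) (w (r, s)) (w (p, s)) (w (p, q)) (w (q, s))
      (by have h := hw1 q r s htri2_qrs; rw [abs_sub_le_iff] at h; linarith [h.1.1, h.1.2, h.2])
      (by have h := hw1 q r s htri2_qrs; rw [abs_sub_le_iff] at h; linarith [h.1.1, h.1.2, h.2])
      (by have h := hw1 q r s htri2_qrs; rw [abs_sub_le_iff] at h; linarith [h.1.1, h.1.2, h.2])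
      (by have h := hw1 p q s htri2_pqs; rw [abs_sub_le_iff] at h; linarith [h.1.1, h.1.2, h.2])
      (by have h := hw1 p q s htri2_pqs; rw [abs_sub_le_iff] at h; linarith [h.1.1, h.1.2, h.2])
      (by have h := hw1 p q s htri2_pqs; rw [abs_sub_le_iff] at h; linarith [h.1.1, h.1.2, h.2])
    rw [← ht'] at k
    have huP1 : u ∈ TriangPolytope n D1 := by
      refine ⟨fun a ha => by simp only [hu, if_neg ha], ?_⟩
      intro x y z hxyz
      rcases hT1class x y z hxyz with ⟨ht2, m1, m2, m3⟩ | h | h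
      · obtain ⟨hxy, hyz, e1, e2, e3⟩ := hxyz
        rw [huval _ _ e1 m1, huval _ _ e2 m2, huval _ _ e3 m3]
        exact hw1 x y z ht2
      · obtain ⟨rfl, rfl, rfl⟩ := h
        rw [huval _ _ ha1 hne1, huval _ _ ha2 hne2, hupr]
        obtain ⟨⟨k1, k2, k3⟩, _⟩ := k
        constructor
        · rw [abs_sub_le_iff]; constructor <;> linarith
        · linarith
      · obtain ⟨rfl, rfl, rfl⟩ := h
        rw [huval _ _ ha3 hne3, huval _ _ ha4 hne4, hupr]
        obtain ⟨_, k1, k2, k3⟩ := k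
        constructor
        · rw [abs_sub_le_iff]; constructor <;> linarith
        · linarith
    refine ⟨u, huP1, funext fun a => ?_⟩
    obtain ⟨a, b⟩ := a
    by_cases he : IsEdge n (D1.erase (p, r) ∪ {(q, s)}) a b
    · by_cases hqs' : ((a, b) : ℕ × ℕ) = (q, s)
      · rw [Prod.mk.injEq] at hqs'
        rw [hqs'.1, hqs'.2, hvqs u, hupr, huval _ _ ha1 hne1, huval _ _ ha2 hne2, huval _ _ ha3 hne3,
          huval _ _ ha4 hne4, ht']
        exact wh_cancel (w (p, q)) (w (q, r)) (w (r, s)) (w (p, s)) (w (q, s))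
      · have he1 : IsEdge n D1 a b := hL1 _ _ he hqs'
        have hnepr : ((a, b) : ℕ × ℕ) ≠ (p, r) := by
          intro hh
          rw [Prod.mk.injEq] at hh
          rw [hh.1, hh.2] at he
          exact hpr_not_edge2 he
        rw [hval u _ _ he hqs', huval _ _ he1 hnepr]
    · rw [hv0 u (a, b) he, hw0 (a, b) he]
end

section
/- For all real numbers u, u1, u2, u3, u4, setting u′ = u − min(u1+u2, u3+u4) + min(u1+u4, u2+u3), one has: max(|u1−u2|, |u3−u4|) ≤ u ≤ min(u1+u2, u3+u4) if and only if max(|u1−u4|, |u2−u3|) ≤ u′ ≤ min(u1+u4, u2+u3). -/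
/-- The piecewise-linear transformation
`u ↦ u' = u - min (u1+u2) (u3+u4) + min (u1+u4) (u2+u3)` associated to a Whitehead move
maps the admissible range of one diagonal of a quadrilateral with side lengths
`u1, u2, u3, u4` onto the admissible range of the other diagonal. -/
theorem whitehead_PL_range (u u1 u2 u3 u4 : ℝ) :
    (max |u1 - u2| |u3 - u4| ≤ u ∧ u ≤ min (u1 + u2) (u3 + u4)) ↔
      (max |u1 - u4| |u2 - u3| ≤
          u - min (u1 + u2) (u3 + u4) + min (u1 + u4) (u2 + u3) ∧
        u - min (u1 + u2) (u3 + u4) + min (u1 + u4) (u2 + u3) ≤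
          min (u1 + u4) (u2 + u3)) := by
  simp only [max_le_iff, le_min_iff, abs_sub_le_iff]
  rcases le_total (u1 + u2) (u3 + u4) with h1 | h1 <;>
    rcases le_total (u1 + u4) (u2 + u3) with h2 | h2 <;>
      simp only [min_eq_left, min_eq_right, h1, h2] <;>
        constructor <;> rintro ⟨⟨⟨a, b⟩, c, d⟩, e, f⟩ <;>
          refine ⟨⟨⟨?_, ?_⟩, ?_, ?_⟩, ?_, ?_⟩ <;> linarith
end

section
/- For all integers u1, u2, u3, u4, the number of integers u with max(|u1−u2|, |u3−u4|) ≤ u ≤ min(u1+u2, u3+u4) equals the number of integers u′ with max(|u1−u4|, |u2−u3|) ≤ u′ ≤ min(u1+u4, u2+u3). -/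
/-- For integer side lengths `u1, u2, u3, u4` of a quadrilateral, the number of admissible
integer lengths of one diagonal equals the number of admissible integer lengths of the
other diagonal. -/
theorem card_integral_diagonal_lengths_eq (u1 u2 u3 u4 : ℤ) :
    (Finset.Icc (max |u1 - u2| |u3 - u4|) (min (u1 + u2) (u3 + u4))).card =
      (Finset.Icc (max |u1 - u4| |u2 - u3|) (min (u1 + u4) (u2 + u3))).card := by
  simp only [Int.card_Icc, Int.abs_eq_natAbs]
  omega
end

section
/- Let Γ1 and Γ2 be triangulations of the n-gon related by a Whitehead move: there are vertices p<q<r<s such that a1={p,q}, a2={q,r}, a3={r,s}, a4={p,s} are edges of Γ1, the diagonal d={p,r} belongs to D1, d′={q,s}, D2=(D1∖{d})∪{d′}, and D2 is again a set of n−3 pairwise non-crossing diagonals. Let r_1,…,r_n be nonnegative integers. Then the set of functions u : D1 → ℤ such that the assignment e_i ↦ r_i on sides and δ ↦ u(δ) on diagonals satisfies the triangle inequalities of Γ1 is finite, and its cardinality equals the cardinality of the corresponding set of functions u′ : D2 → ℤ for Γ2. -/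
open Classical

/-- The extension of an integer-valued function `u` on the diagonals to all edges: a side
`e_i = (i-1, i)` (for `i = 1, …, n-1`) is assigned the length `r i`, the side
`e_n = (0, n-1)` is assigned `r n`, and a diagonal is assigned `u` of it. -/
noncomputable def extendByLengths (n : ℕ) (r : ℕ → ℤ) (u : ℕ × ℕ → ℤ) : ℕ × ℕ → ℤ :=
  fun a => if IsSide n a.1 a.2 then (if a.2 = a.1 + 1 then r a.2 else r n) else u a

/-- The set of integer-valued functions on the diagonals of the triangulation `D` (encoded
as functions on ordered pairs vanishing off `D`) such that the assignment `e_i ↦ r i` on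
sides and `δ ↦ u δ` on diagonals satisfies the triangle inequalities of the
triangulation. -/
def IntDiagSet (n : ℕ) (D : Finset (ℕ × ℕ)) (r : ℕ → ℤ) : Set (ℕ × ℕ → ℤ) :=
  {u | (∀ a : ℕ × ℕ, a ∉ D → u a = 0) ∧
    SatisfiesTriangleIneqs n D fun a => ((extendByLengths n r u a : ℤ) : ℝ)}

lemma not_side_of_diag {n a b : ℕ} (h : IsDiag n a b) : ¬ IsSide n a b :=
  fun hs => h.2.2 hs.2.2

lemma crosses_symm {d d' : ℕ × ℕ} (h : Crosses d d') : Crosses d' d := by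
  unfold Crosses at *; tauto

lemma edge_lt {n : ℕ} {D : Finset (ℕ × ℕ)} (hDd : ∀ d ∈ D, IsDiag n d.1 d.2)
    {a b : ℕ} (h : IsEdge n D a b) : a < b ∧ b < n := by
  rcases h with h | h
  · exact ⟨h.1, h.2.1⟩
  · exact ⟨(hDd _ h).1, (hDd _ h).2.1⟩

lemma edge_not_cross {n : ℕ} {D : Finset (ℕ × ℕ)}
    (hnc : ∀ d ∈ D, ∀ d' ∈ D, d ≠ d' → ¬Crosses d d')
    {a b c d : ℕ} (h1 : IsEdge n D a b) (h2 : IsEdge n D c d)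
    (hx : Crosses (a, b) (c, d)) : IsSide n a b ∨ IsSide n c d := by
  rcases h1 with h1 | h1
  · exact Or.inl h1
  rcases h2 with h2 | h2
  · exact Or.inr h2
  exfalso
  have hne : (a, b) ≠ (c, d) := by
    rintro h
    rw [h] at hx
    simp only [Crosses] at hx
    omega
  exact hnc _ h1 _ h2 hne hx

lemma noncross_card_le : ∀ (m : ℕ) (F : Finset (ℕ × ℕ)),
    (∀ d ∈ F, IsDiag m d.1 d.2) → (∀ d ∈ F, ∀ d' ∈ F, d ≠ d' → ¬Crosses d d') →
    F.card ≤ m - 3 := by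
  intro m
  induction m using Nat.strong_induction_on with
  | _ m ih =>
    intro F hFd hFnc
    rcases F.eq_empty_or_nonempty with rfl | hne
    · simp
    obtain ⟨⟨a, b⟩, habF, hmin⟩ := F.exists_min_image (fun d => d.2 - d.1) hne
    obtain ⟨hab, hbm, hnside⟩ := hFd _ habF
    simp only at hab hbm hnside hmin
    have hab2 : a + 2 ≤ b := by omega
    have hm4 : 4 ≤ m := by omega
    -- no element of F has endpoint a+1
    have havoid : ∀ d ∈ F, d.1 ≠ a + 1 ∧ d.2 ≠ a + 1 := by
      rintro ⟨c, d⟩ hcd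
      obtain ⟨hcd1, hdm, hnsd⟩ := hFd _ hcd
      have hmin' := hmin _ hcd
      simp only at hcd1 hdm hnsd hmin' ⊢
      constructor
      · intro hc
        by_cases hdb : b < d
        · exact hFnc _ habF _ hcd
            (by simp only [ne_eq, Prod.mk.injEq, not_and]; omega)
            (Or.inl ⟨by omega, by omega, hdb⟩)
        · omega
      · intro hd2
        rcases Nat.lt_or_ge c a with hlt | hge
        · exact hFnc _ habF _ hcd
            (by simp only [ne_eq, Prod.mk.injEq, not_and]; omega)
            (Or.inr ⟨hlt, by omega, by omega⟩)
        · omega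
    -- contraction map
    set f : ℕ × ℕ → ℕ × ℕ :=
      fun d => (if d.1 ≤ a then d.1 else d.1 - 1, if d.2 ≤ a then d.2 else d.2 - 1) with hf
    set F' := (F.erase (a, b)).image f with hF'
    have hinj : Set.InjOn f (F.erase (a, b)) := by
      rintro ⟨c, d⟩ hu ⟨c', d'⟩ hv huv
      have h1 := havoid _ (Finset.mem_of_mem_erase hu)
      have h2 := havoid _ (Finset.mem_of_mem_erase hv)
      simp only [hf, Prod.mk.injEq] at huv h1 h2 ⊢
      constructor
      · rcases huv.1 with h; split_ifs at h <;> omega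
      · rcases huv.2 with h; split_ifs at h <;> omega
    have hcard : F'.card = F.card - 1 := by
      rw [hF', Finset.card_image_of_injOn hinj, Finset.card_erase_of_mem habF]
    have hdiag : ∀ e ∈ F', IsDiag (m - 1) e.1 e.2 := by
      intro e he
      obtain ⟨⟨c, d⟩, hcdE, rfl⟩ := Finset.mem_image.mp he
      obtain ⟨hne', hcdF⟩ := Finset.mem_erase.mp hcdE
      obtain ⟨hcd1, hdm, hnsd⟩ := hFd _ hcdF
      have hav := havoid _ hcdF
      have hmin' := hmin _ hcdF
      have hnecd : ¬(c = a ∧ d = b) := by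
        intro h; exact hne' (by simp [Prod.ext_iff, h.1, h.2])
      simp only at hcd1 hdm hnsd hmin' hav
      simp only [hf, IsDiag]
      split_ifs <;> omega
    have hnc' : ∀ e ∈ F', ∀ e' ∈ F', e ≠ e' → ¬Crosses e e' := by
      intro e he e' he' hnee hcr
      obtain ⟨⟨c, d⟩, hcdE, rfl⟩ := Finset.mem_image.mp he
      obtain ⟨⟨c', d'⟩, hcdE', rfl⟩ := Finset.mem_image.mp he'
      have hav := havoid _ (Finset.mem_of_mem_erase hcdE)
      have hav' := havoid _ (Finset.mem_of_mem_erase hcdE')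
      simp only at hav hav'
      have hnexy : ((c, d) : ℕ × ℕ) ≠ (c', d') := fun h => hnee (by rw [h])
      apply hFnc _ (Finset.mem_of_mem_erase hcdE) _ (Finset.mem_of_mem_erase hcdE') hnexy
      simp only [Crosses, hf] at hcr ⊢
      split_ifs at hcr <;> omega
    have hIH := ih (m - 1) (by omega) F' hdiag hnc'
    have hpos : 0 < F.card := Finset.card_pos.mpr hne
    omega

lemma tri_exists (n : ℕ) (D : Finset (ℕ × ℕ)) (hD : IsTriangulation n D)
    (x y : ℕ) (hxy : (x, y) ∈ D) :
    ∃ t, x < t ∧ t < y ∧ IsEdge n D x t ∧ IsEdge n D t y := by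
  classical
  obtain ⟨hcard, hDd, hnc⟩ := hD
  obtain ⟨hxy1, hyn, hns⟩ := hDd _ hxy
  simp only at hxy1 hyn hns
  have hx2 : x + 2 ≤ y := by omega
  set T := (Finset.Ico (x + 1) y).filter (fun t => IsEdge n D x t) with hT
  have hmemT : x + 1 ∈ T := by
    simp only [hT, Finset.mem_filter, Finset.mem_Ico]
    exact ⟨⟨le_refl _, by omega⟩, Or.inl ⟨by omega, by omega, Or.inl rfl⟩⟩
  have hTne : T.Nonempty := ⟨_, hmemT⟩
  set t := T.max' hTne with ht
  have htT : t ∈ T := T.max'_mem hTne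
  obtain ⟨htIco, htE⟩ := Finset.mem_filter.mp htT
  rw [Finset.mem_Ico] at htIco
  refine ⟨t, by omega, htIco.2, htE, ?_⟩
  by_contra hty
  -- (t, y) is a diagonal not in D
  have htd : IsDiag n t y := by
    refine ⟨htIco.2, hyn, ?_⟩
    rintro (h | h)
    · exact hty (Or.inl ⟨htIco.2, hyn, Or.inl h⟩)
    · omega
  have htnotD : (t, y) ∉ D := fun h => hty (Or.inr h)
  by_cases hex : ∃ d ∈ D, Crosses (t, y) d
  · obtain ⟨⟨c, d⟩, hcdD, hcr⟩ := hex
    obtain ⟨hcd1, hdn, hnsd⟩ := hDd _ hcdD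
    simp only at hcd1 hdn hnsd
    rcases hcr with ⟨h1, h2, h3⟩ | ⟨h1, h2, h3⟩
    · simp only at h1 h2 h3
      -- t < c < y < d : (c,d) crosses (x,y)
      exact hnc _ hxy _ hcdD (by simp only [ne_eq, Prod.mk.injEq, not_and]; omega)
        (Or.inl ⟨by omega, by omega, by omega⟩)
    · simp only at h1 h2 h3
      -- c < t < d < y
      rcases Nat.lt_trichotomy c x with hcx | hcx | hcx
      · exact hnc _ hxy _ hcdD (by simp only [ne_eq, Prod.mk.injEq, not_and]; omega)
          (Or.inr ⟨by omega, by omega, by omega⟩)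
      · -- c = x : (x, d) edge with t < d < y contradicts maximality
        subst hcx
        have : d ∈ T := by
          simp only [hT, Finset.mem_filter, Finset.mem_Ico]
          exact ⟨⟨by omega, h3⟩, Or.inr hcdD⟩
        have := Finset.le_max' T d this
        omega
      · -- x < c : (c,d) crosses edge (x,t)
        rcases htE with hs | hm
        · obtain ⟨_, _, hor⟩ := hs; omega
        · exact hnc _ hm _ hcdD (by simp only [ne_eq, Prod.mk.injEq, not_and]; omega)
            (Or.inl ⟨hcx, h1, h2⟩)
  · push_neg at hex
    have hcard' : (insert (t, y) D).card = n - 3 + 1 := by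
      rw [Finset.card_insert_of_notMem htnotD, hcard]
    have hle := noncross_card_le n (insert (t, y) D)
      (by
        intro d hd
        rcases Finset.mem_insert.mp hd with rfl | hd
        · exact htd
        · exact hDd _ hd)
      (by
        intro d hd d' hd' hne
        rcases Finset.mem_insert.mp hd with rfl | hd <;>
          rcases Finset.mem_insert.mp hd' with rfl | hd'
        · exact absurd rfl hne
        · exact hex _ hd'
        · exact fun hc => hex _ hd (crosses_symm hc)
        · exact hnc _ hd _ hd' hne)
    omega

lemma extend_congr {n : ℕ} {rr : ℕ → ℤ} {u v : ℕ × ℕ → ℤ} {a : ℕ × ℕ} (h : u a = v a) :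
    extendByLengths n rr u a = extendByLengths n rr v a := by
  unfold extendByLengths
  split_ifs <;> simp [h]

lemma extend_diag {n : ℕ} {rr : ℕ → ℤ} {u : ℕ × ℕ → ℤ} {a b : ℕ} (h : ¬ IsSide n a b) :
    extendByLengths n rr u (a, b) = u (a, b) := by
  unfold extendByLengths
  simp [h]

lemma bound_aux (n : ℕ) (D : Finset (ℕ × ℕ)) (hD : IsTriangulation n D) (rr : ℕ → ℤ) (hrr : ∀ i, 0 ≤ rr i)
    (u : ℕ × ℕ → ℤ)
    (hu2 : SatisfiesTriangleIneqs n D (fun a => ((extendByLengths n rr u a : ℤ) : ℝ))) :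
    ∀ k x y, y ≤ x + k → ((x, y) ∈ D ∨ (y = x + 1 ∧ y < n)) →
      0 ≤ extendByLengths n rr u (x, y) ∧
        extendByLengths n rr u (x, y) ≤ ∑ i ∈ Finset.Ioc x y, rr i := by
  intro k
  induction k with
  | zero =>
    intro x y hxy h
    exfalso
    rcases h with h | h
    · have := (hD.2.1 _ h).1; simp only at this; omega
    · omega
  | succ k ih =>
    intro x y hxy h
    rcases h with hmem | hside
    · obtain ⟨t, hxt, hty, het1, het2⟩ := tri_exists n D hD x y hmem
      obtain ⟨hlt, hyn, hns⟩ := hD.2.1 _ hmem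
      simp only at hlt hyn hns
      have h1 : (x, t) ∈ D ∨ (t = x + 1 ∧ t < n) := by
        rcases het1 with hs | hm
        · obtain ⟨_, htn, hor⟩ := hs
          right; constructor
          · rcases hor with h | h
            · exact h
            · omega
          · omega
        · exact Or.inl hm
      have h2 : (t, y) ∈ D ∨ (y = t + 1 ∧ y < n) := by
        rcases het2 with hs | hm
        · obtain ⟨_, htn, hor⟩ := hs
          right; constructor
          · rcases hor with h | h
            · exact h
            · omega
          · omega
        · exact Or.inl hm
      have b1 := ih x t (by omega) h1
      have b2 := ih t y (by omega) h2
      have htri : IsTriangleOf n D x t y := ⟨hxt, hty, het1, het2, Or.inr hmem⟩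
      have hc := hu2 x t y htri
      dsimp only at hc
      have hcl : |extendByLengths n rr u (x, t) - extendByLengths n rr u (t, y)| ≤
          extendByLengths n rr u (x, y) := by exact_mod_cast hc.1
      have hcr : extendByLengths n rr u (x, y) ≤
          extendByLengths n rr u (x, t) + extendByLengths n rr u (t, y) := by
        exact_mod_cast hc.2
      refine ⟨le_trans (abs_nonneg _) hcl, ?_⟩
      calc extendByLengths n rr u (x, y)
          ≤ extendByLengths n rr u (x, t) + extendByLengths n rr u (t, y) := hcr
        _ ≤ (∑ i ∈ Finset.Ioc x t, rr i) + (∑ i ∈ Finset.Ioc t y, rr i) :=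
            add_le_add b1.2 b2.2
        _ = ∑ i ∈ Finset.Ioc x y, rr i :=
            Finset.sum_Ioc_consecutive rr (le_of_lt hxt) (le_of_lt hty)
    · obtain ⟨rfl, hyn⟩ := hside
      have hs : IsSide n x (x + 1) := ⟨by omega, hyn, Or.inl rfl⟩
      have : extendByLengths n rr u (x, x + 1) = rr (x + 1) := by
        unfold extendByLengths
        simp [hs]
      rw [this]
      have : Finset.Ioc x (x + 1) = {x + 1} := by
        ext i; simp only [Finset.mem_Ioc, Finset.mem_singleton]; omega
      rw [this, Finset.sum_singleton]
      exact ⟨hrr _, le_refl _⟩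

lemma intdiag_finite (n : ℕ) (D : Finset (ℕ × ℕ)) (hD : IsTriangulation n D)
    (rr : ℕ → ℤ) (hrr : ∀ i, 0 ≤ rr i) : (IntDiagSet n D rr).Finite := by
  classical
  set B := ∑ i ∈ Finset.Ioc 0 n, rr i with hB
  have hBnn : 0 ≤ B := Finset.sum_nonneg fun i _ => hrr i
  have key : ∀ u ∈ IntDiagSet n D rr, ∀ a : ℕ × ℕ, u a ∈ Set.Icc (0 : ℤ) B := by
    intro u hu a
    by_cases ha : a ∈ D
    · obtain ⟨a1, a2⟩ := a
      have hdg := hD.2.1 _ ha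
      obtain ⟨hg1, hg2, hg3⟩ := hD.2.1 _ ha
      simp only at hg1 hg2 hg3
      have hb := bound_aux n D hD rr hrr u hu.2 a2 a1 a2 (by omega) (Or.inl ha)
      rw [extend_diag (not_side_of_diag hdg)] at hb
      refine ⟨hb.1, le_trans hb.2 ?_⟩
      apply Finset.sum_le_sum_of_subset_of_nonneg
      · intro i hi
        simp only [Finset.mem_Ioc] at hi ⊢
        omega
      · intro i _ _; exact hrr i
    · rw [hu.1 a ha]; exact ⟨le_refl _, hBnn⟩
  have hinj : Set.InjOn (fun (u : ℕ × ℕ → ℤ) => (fun d : {a // a ∈ D} => u d))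
      (IntDiagSet n D rr) := by
    intro u hu v hv h
    funext a
    by_cases ha : a ∈ D
    · exact congrFun h ⟨a, ha⟩
    · rw [hu.1 a ha, hv.1 a ha]
  apply Set.Finite.of_finite_image ?_ hinj
  apply Set.Finite.subset (Set.Finite.pi (fun _ : {a // a ∈ D} => Set.finite_Icc (0 : ℤ) B))
  rintro f ⟨u, hu, rfl⟩
  simp only [Set.mem_pi]
  intro d _
  exact key u hu d

lemma shift_ineq (B1 B2 B3 B4 x c : ℤ)
    (hc : c = max (max (B2 - B3) (B3 - B2)) (max (B1 - B4) (B4 - B1)) -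
      max (max (B1 - B2) (B2 - B1)) (max (B3 - B4) (B4 - B3)))
    (h1 : B1 - B2 ≤ x) (h2 : B2 - B1 ≤ x) (h3 : x ≤ B1 + B2)
    (h4 : B3 - B4 ≤ x) (h5 : B4 - B3 ≤ x) (h6 : x ≤ B3 + B4) :
    (B2 - B3 ≤ x + c) ∧ (B3 - B2 ≤ x + c) ∧ (x + c ≤ B2 + B3) ∧
      (B1 - (x + c) ≤ B4) ∧ ((x + c) - B1 ≤ B4) ∧ (B4 ≤ B1 + (x + c)) := by
  omega

lemma classify1 (n : ℕ) (D : Finset (ℕ × ℕ))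
    (hDd : ∀ d ∈ D, IsDiag n d.1 d.2)
    (hnc : ∀ d ∈ D, ∀ d' ∈ D, d ≠ d' → ¬Crosses d d')
    (p q r s : ℕ) (hpq : p < q) (hqr : q < r) (hrs : r < s) (hsn : s < n)
    (ha1 : IsEdge n D p q) (ha2 : IsEdge n D q r) (ha3 : IsEdge n D r s)
    (ha4 : IsEdge n D p s)
    (x y z : ℕ) (ht : IsTriangleOf n D x y z)
    (hcase : (x, y) = (p, r) ∨ (y, z) = (p, r) ∨ (x, z) = (p, r)) :
    (x = p ∧ y = q ∧ z = r) ∨ (x = p ∧ y = r ∧ z = s) := by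
  obtain ⟨hxy, hyz, e1, e2, e3⟩ := ht
  rcases hcase with h | h | h
  · -- (x,y) = (p,r) : triangle (p, r, z) with z > r; show z = s
    have hq1 : p = x := (congrArg Prod.fst h).symm
    have hq2 : r = y := (congrArg Prod.snd h).symm
    subst hq1; subst hq2
    right
    have hzn : z < n := (edge_lt hDd e2).2
    rcases Nat.lt_trichotomy z s with hlt | heq | hgt
    · exfalso
      rcases edge_not_cross hnc e3 ha3 (Or.inl ⟨by omega, by omega, hlt⟩) with hside | hside <;>
        · obtain ⟨_, _, hor⟩ := hside; omega
    · exact ⟨rfl, rfl, heq⟩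
    · exfalso
      rcases edge_not_cross hnc e2 ha4 (Or.inr ⟨by omega, hrs, hgt⟩) with hside | hside <;>
        · obtain ⟨_, _, hor⟩ := hside; omega
  · -- (y,z) = (p,r) : triangle (x, p, r) with x < p; impossible
    exfalso
    have hq1 : p = y := (congrArg Prod.fst h).symm
    have hq2 : r = z := (congrArg Prod.snd h).symm
    subst hq1; subst hq2
    rcases edge_not_cross hnc e3 ha4 (Or.inl ⟨hxy, hyz, hrs⟩) with hside | hside <;>
      · obtain ⟨_, _, hor⟩ := hside; omega
  · -- (x,z) = (p,r) : triangle (p, y, r); show y = q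
    have hq1 : p = x := (congrArg Prod.fst h).symm
    have hq2 : r = z := (congrArg Prod.snd h).symm
    subst hq1; subst hq2
    left
    have hrn : r < n := (edge_lt hDd e2).2
    rcases Nat.lt_trichotomy y q with hlt | heq | hgt
    · exfalso
      rcases edge_not_cross hnc e2 ha1 (Or.inr ⟨hxy, hlt, hqr⟩) with hside | hside <;>
        · obtain ⟨_, _, hor⟩ := hside; omega
    · exact ⟨rfl, heq, rfl⟩
    · exfalso
      rcases edge_not_cross hnc e1 ha2 (Or.inl ⟨hpq, hgt, hyz⟩) with hside | hside <;>
        · obtain ⟨_, _, hor⟩ := hside; omega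

lemma classify2 (n : ℕ) (D : Finset (ℕ × ℕ))
    (hDd : ∀ d ∈ D, IsDiag n d.1 d.2)
    (hnc : ∀ d ∈ D, ∀ d' ∈ D, d ≠ d' → ¬Crosses d d')
    (p q r s : ℕ) (hpq : p < q) (hqr : q < r) (hrs : r < s) (hsn : s < n)
    (hb1 : IsEdge n D p q) (hb2 : IsEdge n D q r) (hb3 : IsEdge n D r s)
    (hb4 : IsEdge n D p s)
    (x y z : ℕ) (ht : IsTriangleOf n D x y z)
    (hcase : (x, y) = (q, s) ∨ (y, z) = (q, s) ∨ (x, z) = (q, s)) :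
    (x = q ∧ y = r ∧ z = s) ∨ (x = p ∧ y = q ∧ z = s) := by
  obtain ⟨hxy, hyz, e1, e2, e3⟩ := ht
  rcases hcase with h | h | h
  · -- (x,y) = (q,s) : triangle (q, s, z), z > s; impossible
    exfalso
    have hq1 : q = x := (congrArg Prod.fst h).symm
    have hq2 : s = y := (congrArg Prod.snd h).symm
    subst hq1; subst hq2
    have hzn : z < n := (edge_lt hDd e2).2
    rcases edge_not_cross hnc e3 hb4 (Or.inr ⟨hpq, by omega, hyz⟩) with hside | hside <;>
      · obtain ⟨_, _, hor⟩ := hside; omega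
  · -- (y,z) = (q,s) : triangle (x, q, s) with x < q; show x = p
    have hq1 : q = y := (congrArg Prod.fst h).symm
    have hq2 : s = z := (congrArg Prod.snd h).symm
    subst hq1; subst hq2
    right
    rcases Nat.lt_trichotomy x p with hlt | heq | hgt
    · exfalso
      rcases edge_not_cross hnc e1 hb4 (Or.inl ⟨hlt, by omega, by omega⟩) with hside | hside <;>
        · obtain ⟨_, _, hor⟩ := hside; omega
    · exact ⟨heq, rfl, rfl⟩
    · exfalso
      rcases edge_not_cross hnc e3 hb1 (Or.inr ⟨hgt, hxy, by omega⟩) with hside | hside <;>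
        · obtain ⟨_, _, hor⟩ := hside; omega
  · -- (x,z) = (q,s) : triangle (q, y, s); show y = r
    have hq1 : q = x := (congrArg Prod.fst h).symm
    have hq2 : s = z := (congrArg Prod.snd h).symm
    subst hq1; subst hq2
    left
    rcases Nat.lt_trichotomy y r with hlt | heq | hgt
    · exfalso
      rcases edge_not_cross hnc e2 hb2 (Or.inr ⟨hxy, hlt, by omega⟩) with hside | hside <;>
        · obtain ⟨_, _, hor⟩ := hside; omega
    · exact ⟨rfl, heq, rfl⟩
    · exfalso
      rcases edge_not_cross hnc e1 hb3 (Or.inl ⟨hqr, hgt, hyz⟩) with hside | hside <;>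
        · obtain ⟨_, _, hor⟩ := hside; omega

noncomputable def wmShift (n : ℕ) (rr : ℕ → ℤ) (p q r s : ℕ) (v : ℕ × ℕ → ℤ) : ℤ :=
  max (max (extendByLengths n rr v (q, r) - extendByLengths n rr v (r, s))
        (extendByLengths n rr v (r, s) - extendByLengths n rr v (q, r)))
      (max (extendByLengths n rr v (p, q) - extendByLengths n rr v (p, s))
        (extendByLengths n rr v (p, s) - extendByLengths n rr v (p, q))) -
    max (max (extendByLengths n rr v (p, q) - extendByLengths n rr v (q, r))
        (extendByLengths n rr v (q, r) - extendByLengths n rr v (p, q)))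
      (max (extendByLengths n rr v (r, s) - extendByLengths n rr v (p, s))
        (extendByLengths n rr v (p, s) - extendByLengths n rr v (r, s)))

noncomputable def wmF (n : ℕ) (rr : ℕ → ℤ) (p q r s : ℕ) (v : ℕ × ℕ → ℤ) : ℕ × ℕ → ℤ :=
  fun a => if a = (q, s) then v (p, r) + wmShift n rr p q r s v
    else if a = (p, r) then 0 else v a

noncomputable def wmG (n : ℕ) (rr : ℕ → ℤ) (p q r s : ℕ) (v : ℕ × ℕ → ℤ) : ℕ × ℕ → ℤ :=
  fun a => if a = (p, r) then v (q, s) - wmShift n rr p q r s v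
    else if a = (q, s) then 0 else v a


/-- If `Γ1` and `Γ2` are triangulations of the `n`-gon related by a Whitehead move
replacing the diagonal `d = {p, r}` by `d' = {q, s}`, and `r 1, …, r n` are nonnegative
integers, then the set of integer-valued functions on the diagonals of `Γ1` satisfying
(together with the side lengths `r i`) the triangle inequalities of `Γ1` is finite, and
its cardinality equals the cardinality of the corresponding set for `Γ2`. -/
theorem whitehead_move_integral_points (n : ℕ) (hn : 4 ≤ n)
    (D1 : Finset (ℕ × ℕ)) (hD1 : IsTriangulation n D1)
    (p q r s : ℕ) (hpq : p < q) (hqr : q < r) (hrs : r < s)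
    (ha1 : IsEdge n D1 p q) (ha2 : IsEdge n D1 q r)
    (ha3 : IsEdge n D1 r s) (ha4 : IsEdge n D1 p s)
    (hd : (p, r) ∈ D1)
    (hD2 : IsTriangulation n (D1.erase (p, r) ∪ {(q, s)}))
    (rr : ℕ → ℤ) (hrr : ∀ i, 0 ≤ rr i) :
    (IntDiagSet n D1 rr).Finite ∧
      (IntDiagSet n (D1.erase (p, r) ∪ {(q, s)}) rr).Finite ∧
      Nat.card (IntDiagSet n D1 rr) =
        Nat.card (IntDiagSet n (D1.erase (p, r) ∪ {(q, s)}) rr) := by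
  classical
  set D2 := D1.erase (p, r) ∪ {(q, s)} with hD2def
  have hcard1 := hD1.1
  have hDd1 := hD1.2.1
  have hnc1 := hD1.2.2
  have hcard2 := hD2.1
  have hDd2 := hD2.2.1
  have hnc2 := hD2.2.2
  have hqsD2 : (q, s) ∈ D2 := Finset.mem_union_right _ (Finset.mem_singleton_self _)
  have hdPR : IsDiag n p r := hDd1 _ hd
  have hdQS : IsDiag n q s := hDd2 _ hqsD2
  have hrn : r < n := hdPR.2.1
  have hsn : s < n := hdQS.2.1
  have hne_pr_qs : ((p, r) : ℕ × ℕ) ≠ (q, s) := by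
    simp only [ne_eq, Prod.mk.injEq, not_and]; omega
  have hne_qs_pr : ((q, s) : ℕ × ℕ) ≠ (p, r) := by
    simp only [ne_eq, Prod.mk.injEq, not_and]; omega
  have hne_pq_qs : ((p, q) : ℕ × ℕ) ≠ (q, s) := by
    simp only [ne_eq, Prod.mk.injEq, not_and]; omega
  have hne_pq_pr : ((p, q) : ℕ × ℕ) ≠ (p, r) := by
    simp only [ne_eq, Prod.mk.injEq, not_and]; omega
  have hne_qr_qs : ((q, r) : ℕ × ℕ) ≠ (q, s) := by
    simp only [ne_eq, Prod.mk.injEq, not_and]; omega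
  have hne_qr_pr : ((q, r) : ℕ × ℕ) ≠ (p, r) := by
    simp only [ne_eq, Prod.mk.injEq, not_and]; omega
  have hne_rs_qs : ((r, s) : ℕ × ℕ) ≠ (q, s) := by
    simp only [ne_eq, Prod.mk.injEq, not_and]; omega
  have hne_rs_pr : ((r, s) : ℕ × ℕ) ≠ (p, r) := by
    simp only [ne_eq, Prod.mk.injEq, not_and]; omega
  have hne_ps_qs : ((p, s) : ℕ × ℕ) ≠ (q, s) := by
    simp only [ne_eq, Prod.mk.injEq, not_and]; omega
  have hne_ps_pr : ((p, s) : ℕ × ℕ) ≠ (p, r) := by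
    simp only [ne_eq, Prod.mk.injEq, not_and]; omega
  have hQSnotD1 : (q, s) ∉ D1 := by
    intro hmem
    have hsub : ({(q, s)} : Finset (ℕ × ℕ)) ⊆ D1.erase (p, r) :=
      Finset.singleton_subset_iff.mpr (Finset.mem_erase.mpr ⟨hne_qs_pr, hmem⟩)
    have heq : D2 = D1.erase (p, r) := by
      rw [hD2def]; exact Finset.union_eq_left.mpr hsub
    rw [heq, Finset.card_erase_of_mem hd, hcard1] at hcard2
    omega
  have hPRnotD2 : (p, r) ∉ D2 := by
    intro h
    rcases Finset.mem_union.mp h with h | h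
    · exact (Finset.mem_erase.mp h).1 rfl
    · exact hne_pr_qs (Finset.mem_singleton.mp h)
  have hedge12 : ∀ a b : ℕ, ((a, b) : ℕ × ℕ) ≠ (p, r) → IsEdge n D1 a b → IsEdge n D2 a b := by
    intro a b hne h
    rcases h with h | h
    · exact Or.inl h
    · exact Or.inr (Finset.mem_union_left _ (Finset.mem_erase.mpr ⟨hne, h⟩))
  have hedge21 : ∀ a b : ℕ, ((a, b) : ℕ × ℕ) ≠ (q, s) → IsEdge n D2 a b → IsEdge n D1 a b := by
    intro a b hne h
    rcases h with h | h
    · exact Or.inl h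
    · rcases Finset.mem_union.mp h with h | h
      · exact Or.inr (Finset.mem_of_mem_erase h)
      · exact absurd (Finset.mem_singleton.mp h) hne
  have hb1 : IsEdge n D2 p q := hedge12 _ _ hne_pq_pr ha1
  have hb2 : IsEdge n D2 q r := hedge12 _ _ hne_qr_pr ha2
  have hb3 : IsEdge n D2 r s := hedge12 _ _ hne_rs_pr ha3
  have hb4 : IsEdge n D2 p s := hedge12 _ _ hne_ps_pr ha4
  have htA : IsTriangleOf n D1 p q r := ⟨hpq, hqr, ha1, ha2, Or.inr hd⟩
  have htB : IsTriangleOf n D1 p r s := ⟨by omega, hrs, Or.inr hd, ha3, ha4⟩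
  have htC : IsTriangleOf n D2 q r s := ⟨hqr, hrs, hb2, hb3, Or.inr hqsD2⟩
  have htD : IsTriangleOf n D2 p q s := ⟨hpq, by omega, hb1, Or.inr hqsD2, hb4⟩
  -- value lemmas
  have hFval : ∀ (u : ℕ × ℕ → ℤ) (a : ℕ × ℕ), a ≠ (q, s) → a ≠ (p, r) →
      wmF n rr p q r s u a = u a := by
    intro u a h1 h2; simp [wmF, h1, h2]
  have hGval : ∀ (u : ℕ × ℕ → ℤ) (a : ℕ × ℕ), a ≠ (q, s) → a ≠ (p, r) →
      wmG n rr p q r s u a = u a := by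
    intro u a h1 h2; simp [wmG, h1, h2]
  have hFshift : ∀ u : ℕ × ℕ → ℤ,
      wmShift n rr p q r s (wmF n rr p q r s u) = wmShift n rr p q r s u := by
    intro u
    unfold wmShift
    rw [extend_congr (hFval u (p, q) hne_pq_qs hne_pq_pr),
      extend_congr (hFval u (q, r) hne_qr_qs hne_qr_pr),
      extend_congr (hFval u (r, s) hne_rs_qs hne_rs_pr),
      extend_congr (hFval u (p, s) hne_ps_qs hne_ps_pr)]
  have hGshift : ∀ u : ℕ × ℕ → ℤ,
      wmShift n rr p q r s (wmG n rr p q r s u) = wmShift n rr p q r s u := by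
    intro u
    unfold wmShift
    rw [extend_congr (hGval u (p, q) hne_pq_qs hne_pq_pr),
      extend_congr (hGval u (q, r) hne_qr_qs hne_qr_pr),
      extend_congr (hGval u (r, s) hne_rs_qs hne_rs_pr),
      extend_congr (hGval u (p, s) hne_ps_qs hne_ps_pr)]
  -- forward map
  have hmapF : Set.MapsTo (wmF n rr p q r s) (IntDiagSet n D1 rr) (IntDiagSet n D2 rr) := by
    rintro u ⟨hu1, hu2⟩
    have hEpr : extendByLengths n rr u (p, r) = u (p, r) :=
      extend_diag (not_side_of_diag hdPR)
    have hA := hu2 p q r htA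
    have hB := hu2 p r s htB
    dsimp only at hA hB
    rw [hEpr] at hA hB
    have j1 : |extendByLengths n rr u (p, q) - extendByLengths n rr u (q, r)| ≤ u (p, r) := by
      exact_mod_cast hA.1
    have j2 : u (p, r) ≤ extendByLengths n rr u (p, q) + extendByLengths n rr u (q, r) := by
      exact_mod_cast hA.2
    have j3 : |u (p, r) - extendByLengths n rr u (r, s)| ≤ extendByLengths n rr u (p, s) := by
      exact_mod_cast hB.1
    have j4 : extendByLengths n rr u (p, s) ≤ u (p, r) + extendByLengths n rr u (r, s) := by
      exact_mod_cast hB.2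
    rw [abs_sub_le_iff] at j1 j3
    obtain ⟨k1, k2, k3, k4, k5, k6⟩ :=
      shift_ineq (extendByLengths n rr u (p, q)) (extendByLengths n rr u (q, r))
        (extendByLengths n rr u (r, s)) (extendByLengths n rr u (p, s))
        (u (p, r)) (wmShift n rr p q r s u) rfl
        j1.1 j1.2 j2 (by omega) (by omega) (by omega)
    have hEqs : extendByLengths n rr (wmF n rr p q r s u) (q, s)
        = u (p, r) + wmShift n rr p q r s u := by
      rw [extend_diag (not_side_of_diag hdQS)]
      simp [wmF]
    have hv1 : extendByLengths n rr (wmF n rr p q r s u) (p, q)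
        = extendByLengths n rr u (p, q) := extend_congr (hFval u (p, q) hne_pq_qs hne_pq_pr)
    have hv2 : extendByLengths n rr (wmF n rr p q r s u) (q, r)
        = extendByLengths n rr u (q, r) := extend_congr (hFval u (q, r) hne_qr_qs hne_qr_pr)
    have hv3 : extendByLengths n rr (wmF n rr p q r s u) (r, s)
        = extendByLengths n rr u (r, s) := extend_congr (hFval u (r, s) hne_rs_qs hne_rs_pr)
    have hv4 : extendByLengths n rr (wmF n rr p q r s u) (p, s)
        = extendByLengths n rr u (p, s) := extend_congr (hFval u (p, s) hne_ps_qs hne_ps_pr)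
    constructor
    · intro a ha
      have hne1 : a ≠ (q, s) := fun h => ha (h ▸ hqsD2)
      by_cases hne2 : a = (p, r)
      · rw [hne2]
        simp [wmF, hne_pr_qs]
      · rw [hFval u a hne1 hne2]
        apply hu1
        intro hmem
        exact ha (Finset.mem_union_left _ (Finset.mem_erase.mpr ⟨hne2, hmem⟩))
    · intro x y z ht
      by_cases hcs : (x, y) = (q, s) ∨ (y, z) = (q, s) ∨ (x, z) = (q, s)
      · have hclass := classify2 n D2 hDd2 hnc2 p q r s hpq hqr hrs hsn hb1 hb2 hb3 hb4
          x y z ht hcs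
        rcases hclass with ⟨h1, h2, h3⟩ | ⟨h1, h2, h3⟩
        · subst h1; subst h2; subst h3
          dsimp only
          rw [hv2, hv3, hEqs]
          constructor
          · exact_mod_cast abs_sub_le_iff.mpr ⟨k1, k2⟩
          · exact_mod_cast k3
        · subst h1; subst h2; subst h3
          dsimp only
          rw [hv1, hv4, hEqs]
          constructor
          · exact_mod_cast abs_sub_le_iff.mpr ⟨k4, k5⟩
          · exact_mod_cast k6
      · push_neg at hcs
        obtain ⟨hcxy, hcyz, hcxz⟩ := hcs
        obtain ⟨o1, o2, e1, e2, e3⟩ := ht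
        have hprxy : ((x, y) : ℕ × ℕ) ≠ (p, r) := by
          intro h
          have hx' := congrArg Prod.fst h
          have hy' := congrArg Prod.snd h
          dsimp only at hx' hy'
          rw [hx', hy'] at e1
          rcases e1 with h' | h'
          · exact not_side_of_diag hdPR h'
          · exact hPRnotD2 h'
        have hpryz : ((y, z) : ℕ × ℕ) ≠ (p, r) := by
          intro h
          have hx' := congrArg Prod.fst h
          have hy' := congrArg Prod.snd h
          dsimp only at hx' hy'
          rw [hx', hy'] at e2
          rcases e2 with h' | h'
          · exact not_side_of_diag hdPR h'
          · exact hPRnotD2 h'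
        have hprxz : ((x, z) : ℕ × ℕ) ≠ (p, r) := by
          intro h
          have hx' := congrArg Prod.fst h
          have hy' := congrArg Prod.snd h
          dsimp only at hx' hy'
          rw [hx', hy'] at e3
          rcases e3 with h' | h'
          · exact not_side_of_diag hdPR h'
          · exact hPRnotD2 h'
        have ht1 : IsTriangleOf n D1 x y z :=
          ⟨o1, o2, hedge21 _ _ hcxy e1, hedge21 _ _ hcyz e2, hedge21 _ _ hcxz e3⟩
        have hres := hu2 x y z ht1
        dsimp only at hres ⊢
        rw [extend_congr (hFval u (x, y) hcxy hprxy),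
          extend_congr (hFval u (y, z) hcyz hpryz),
          extend_congr (hFval u (x, z) hcxz hprxz)]
        exact hres
  -- backward map
  have hmapG : Set.MapsTo (wmG n rr p q r s) (IntDiagSet n D2 rr) (IntDiagSet n D1 rr) := by
    rintro u ⟨hu1, hu2⟩
    have hEqs : extendByLengths n rr u (q, s) = u (q, s) :=
      extend_diag (not_side_of_diag hdQS)
    have hC := hu2 q r s htC
    have hD' := hu2 p q s htD
    dsimp only at hC hD'
    rw [hEqs] at hC hD'
    have j1 : |extendByLengths n rr u (q, r) - extendByLengths n rr u (r, s)| ≤ u (q, s) := by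
      exact_mod_cast hC.1
    have j2 : u (q, s) ≤ extendByLengths n rr u (q, r) + extendByLengths n rr u (r, s) := by
      exact_mod_cast hC.2
    have j3 : |extendByLengths n rr u (p, q) - u (q, s)| ≤ extendByLengths n rr u (p, s) := by
      exact_mod_cast hD'.1
    have j4 : extendByLengths n rr u (p, s) ≤ extendByLengths n rr u (p, q) + u (q, s) := by
      exact_mod_cast hD'.2
    rw [abs_sub_le_iff] at j1 j3
    obtain ⟨k1, k2, k3, k4, k5, k6⟩ :=
      shift_ineq (extendByLengths n rr u (q, r)) (extendByLengths n rr u (r, s))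
        (extendByLengths n rr u (p, s)) (extendByLengths n rr u (p, q))
        (u (q, s)) (-(wmShift n rr p q r s u)) (by
          unfold wmShift
          rw [neg_sub]
          congr 1
          · rw [max_comm (max (extendByLengths n rr u (p, q) - extendByLengths n rr u (q, r))
                (extendByLengths n rr u (q, r) - extendByLengths n rr u (p, q))),
              max_comm (extendByLengths n rr u (p, q) - extendByLengths n rr u (q, r))]
          · rw [max_comm (extendByLengths n rr u (p, s) - extendByLengths n rr u (p, q))])
        j1.1 j1.2 j2 (by omega) (by omega) (by omega)
    -- six facts about w := u (q,s) - wmShift u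
    have l1 : extendByLengths n rr u (p, q) - extendByLengths n rr u (q, r) ≤
        u (q, s) - wmShift n rr p q r s u := by omega
    have l2 : extendByLengths n rr u (q, r) - extendByLengths n rr u (p, q) ≤
        u (q, s) - wmShift n rr p q r s u := by omega
    have l3 : u (q, s) - wmShift n rr p q r s u ≤
        extendByLengths n rr u (p, q) + extendByLengths n rr u (q, r) := by omega
    have l4 : (u (q, s) - wmShift n rr p q r s u) - extendByLengths n rr u (r, s) ≤
        extendByLengths n rr u (p, s) := by omega
    have l5 : extendByLengths n rr u (r, s) - (u (q, s) - wmShift n rr p q r s u) ≤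
        extendByLengths n rr u (p, s) := by omega
    have l6 : extendByLengths n rr u (p, s) ≤
        (u (q, s) - wmShift n rr p q r s u) + extendByLengths n rr u (r, s) := by omega
    have hEprG : extendByLengths n rr (wmG n rr p q r s u) (p, r)
        = u (q, s) - wmShift n rr p q r s u := by
      rw [extend_diag (not_side_of_diag hdPR)]
      simp [wmG]
    have hv1 : extendByLengths n rr (wmG n rr p q r s u) (p, q)
        = extendByLengths n rr u (p, q) := extend_congr (hGval u (p, q) hne_pq_qs hne_pq_pr)
    have hv2 : extendByLengths n rr (wmG n rr p q r s u) (q, r)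
        = extendByLengths n rr u (q, r) := extend_congr (hGval u (q, r) hne_qr_qs hne_qr_pr)
    have hv3 : extendByLengths n rr (wmG n rr p q r s u) (r, s)
        = extendByLengths n rr u (r, s) := extend_congr (hGval u (r, s) hne_rs_qs hne_rs_pr)
    have hv4 : extendByLengths n rr (wmG n rr p q r s u) (p, s)
        = extendByLengths n rr u (p, s) := extend_congr (hGval u (p, s) hne_ps_qs hne_ps_pr)
    constructor
    · intro a ha
      have hne2 : a ≠ (p, r) := fun h => ha (h ▸ hd)
      by_cases hne1 : a = (q, s)
      · rw [hne1]
        simp [wmG, hne_qs_pr]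
      · rw [hGval u a hne1 hne2]
        apply hu1
        intro hmem
        rcases Finset.mem_union.mp hmem with h | h
        · exact ha (Finset.mem_of_mem_erase h)
        · exact hne1 (Finset.mem_singleton.mp h)
    · intro x y z ht
      by_cases hcs : (x, y) = (p, r) ∨ (y, z) = (p, r) ∨ (x, z) = (p, r)
      · have hclass := classify1 n D1 hDd1 hnc1 p q r s hpq hqr hrs hsn ha1 ha2 ha3 ha4
          x y z ht hcs
        rcases hclass with ⟨h1, h2, h3⟩ | ⟨h1, h2, h3⟩
        · subst h1; subst h2; subst h3
          dsimp only
          rw [hv1, hv2, hEprG]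
          constructor
          · exact_mod_cast abs_sub_le_iff.mpr ⟨l1, l2⟩
          · exact_mod_cast l3
        · subst h1; subst h2; subst h3
          dsimp only
          rw [hv3, hv4, hEprG]
          constructor
          · exact_mod_cast abs_sub_le_iff.mpr ⟨l4, l5⟩
          · exact_mod_cast l6
      · push_neg at hcs
        obtain ⟨hcxy, hcyz, hcxz⟩ := hcs
        obtain ⟨o1, o2, e1, e2, e3⟩ := ht
        have hqsxy : ((x, y) : ℕ × ℕ) ≠ (q, s) := by
          intro h
          have hx' := congrArg Prod.fst h
          have hy' := congrArg Prod.snd h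
          dsimp only at hx' hy'
          rw [hx', hy'] at e1
          rcases e1 with h' | h'
          · exact not_side_of_diag hdQS h'
          · exact hQSnotD1 h'
        have hqsyz : ((y, z) : ℕ × ℕ) ≠ (q, s) := by
          intro h
          have hx' := congrArg Prod.fst h
          have hy' := congrArg Prod.snd h
          dsimp only at hx' hy'
          rw [hx', hy'] at e2
          rcases e2 with h' | h'
          · exact not_side_of_diag hdQS h'
          · exact hQSnotD1 h'
        have hqsxz : ((x, z) : ℕ × ℕ) ≠ (q, s) := by
          intro h
          have hx' := congrArg Prod.fst h
          have hy' := congrArg Prod.snd h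
          dsimp only at hx' hy'
          rw [hx', hy'] at e3
          rcases e3 with h' | h'
          · exact not_side_of_diag hdQS h'
          · exact hQSnotD1 h'
        have ht2 : IsTriangleOf n D2 x y z :=
          ⟨o1, o2, hedge12 _ _ hcxy e1, hedge12 _ _ hcyz e2, hedge12 _ _ hcxz e3⟩
        have hres := hu2 x y z ht2
        dsimp only at hres ⊢
        rw [extend_congr (hGval u (x, y) hqsxy hcxy),
          extend_congr (hGval u (y, z) hqsyz hcyz),
          extend_congr (hGval u (x, z) hqsxz hcxz)]
        exact hres
  -- inverse properties
  have hleft : ∀ u ∈ IntDiagSet n D1 rr, wmG n rr p q r s (wmF n rr p q r s u) = u := by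
    intro u hu
    funext a
    by_cases h1 : a = (p, r)
    · rw [h1]
      show wmG n rr p q r s (wmF n rr p q r s u) (p, r) = u (p, r)
      have hqsv : wmF n rr p q r s u (q, s) = u (p, r) + wmShift n rr p q r s u := by
        simp [wmF]
      have hstep : wmG n rr p q r s (wmF n rr p q r s u) (p, r)
          = wmF n rr p q r s u (q, s) - wmShift n rr p q r s (wmF n rr p q r s u) := by
        simp [wmG]
      rw [hstep, hqsv, hFshift u]
      ring
    · by_cases h2 : a = (q, s)
      · rw [h2]
        show wmG n rr p q r s (wmF n rr p q r s u) (q, s) = u (q, s)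
        simp only [wmG, if_neg hne_qs_pr, if_pos rfl]
        exact (hu.1 _ hQSnotD1).symm
      · show wmG n rr p q r s (wmF n rr p q r s u) a = u a
        simp only [wmG, if_neg h1, if_neg h2]
        exact hFval u a h2 h1
  have hright : ∀ u ∈ IntDiagSet n D2 rr, wmF n rr p q r s (wmG n rr p q r s u) = u := by
    intro u hu
    funext a
    by_cases h2 : a = (q, s)
    · rw [h2]
      show wmF n rr p q r s (wmG n rr p q r s u) (q, s) = u (q, s)
      have hprv : wmG n rr p q r s u (p, r) = u (q, s) - wmShift n rr p q r s u := by
        simp [wmG]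
      have hstep : wmF n rr p q r s (wmG n rr p q r s u) (q, s)
          = wmG n rr p q r s u (p, r) + wmShift n rr p q r s (wmG n rr p q r s u) := by
        simp [wmF]
      rw [hstep, hprv, hGshift u]
      ring
    · by_cases h1 : a = (p, r)
      · rw [h1]
        show wmF n rr p q r s (wmG n rr p q r s u) (p, r) = u (p, r)
        simp only [wmF, if_neg hne_pr_qs, if_pos rfl]
        exact (hu.1 _ hPRnotD2).symm
      · show wmF n rr p q r s (wmG n rr p q r s u) a = u a
        simp only [wmF, if_neg h2, if_neg h1]
        exact hGval u a h2 h1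
  have hbij : Set.BijOn (wmF n rr p q r s) (IntDiagSet n D1 rr) (IntDiagSet n D2 rr) :=
    Set.InvOn.bijOn ⟨fun u hu => hleft u hu, fun u hu => hright u hu⟩ hmapF hmapG
  exact ⟨intdiag_finite n D1 hD1 rr hrr, intdiag_finite n D2 hD2 rr hrr,
    Nat.card_congr (Set.BijOn.equiv _ hbij)⟩
end

section
/- Let Γ be a triangulation of the n-gon and let u be a function from the edges of Γ to ℝ satisfying the triangle inequalities of Γ. Then there exist points P_0, P_1, …, P_{n−1} in the Euclidean plane ℝ² such that ‖P_p − P_q‖ = u({p,q}) for every edge {p,q} of Γ. -/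
open Classical

/-! A set of pairwise non-crossing chords of length at least two on the vertices `lo, …, hi`
has at most `hi - lo - 1` elements: inside each chord pick the farthest neighbour `r` of its
left end, and no other chord nested in it passes over `r`, so these vertices are distinct.
Hence a triangulation is maximal, and every edge `(p, q)` with `q ≥ p + 2` is the base of a
triangle `(p, k, q)` of it. The polygon is then built from the outer side `(0, n - 1)` inwards:
given points for `p` and `q` at distance `u (p, q)`, the triangle inequalities let the circles
of radii `u (p, k)` and `u (k, q)` about them meet in a point for `k`, and the two sub-polygons
on `p, …, k` and `k, …, q` are built recursively; no edge other than `(p, q)` passes over `k`. -/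

open Module RealInnerProductSpace

theorem not_crosses_self (d : ℕ × ℕ) : ¬Crosses d d := by
  unfold Crosses; omega

theorem exists_greatest_neighbor (R : ℕ → ℕ → Prop) {p q : ℕ} (hpq : p + 2 ≤ q) :
    ∃ r, p < r ∧ r < q ∧ (r = p + 1 ∨ R p r) ∧ ∀ b, r < b → b < q → ¬R p b := by
  let S := fun b => b < q ∧ (b = p + 1 ∨ R p b)
  have hS : S (p + 1) := ⟨by omega, Or.inl rfl⟩
  have hr := Nat.findGreatest_spec (by omega : p + 1 ≤ q) hS
  refine ⟨Nat.findGreatest S q, ?_, hr.1, hr.2, fun b hb hbq hRb => ?_⟩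
  · exact Nat.lt_of_succ_le (Nat.le_findGreatest (by omega) hS)
  · exact Nat.findGreatest_is_greatest hb hbq.le ⟨hbq, Or.inr hRb⟩

theorem card_le_of_pairwise_not_crosses {E : Finset (ℕ × ℕ)} {lo hi : ℕ}
    (hE : ∀ d ∈ E, lo ≤ d.1 ∧ d.1 + 2 ≤ d.2 ∧ d.2 ≤ hi)
    (hnc : ∀ d ∈ E, ∀ d' ∈ E, ¬Crosses d d') :
    E.card ≤ hi - lo - 1 := by
  have hfree : ∀ d ∈ E, ∃ k, d.1 < k ∧ k < d.2 ∧
      ∀ e ∈ E, e ≠ d → d.1 ≤ e.1 → e.2 ≤ d.2 → ¬(e.1 < k ∧ k < e.2) := by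
    rintro ⟨p, q⟩ hd
    obtain ⟨r, hpr, hrq, hr, hmax⟩ :=
      exists_greatest_neighbor (fun a b => (a, b) ∈ E) (hE _ hd).2.1
    refine ⟨r, hpr, hrq, ?_⟩
    rintro ⟨a, b⟩ he hne hpa hbq ⟨har, hrb⟩
    rcases hpa.eq_or_lt with rfl | hpa
    · exact hmax b hrb (lt_of_le_of_ne hbq fun h => hne (by rw [h])) he
    · have hcr := hnc _ (hr.resolve_left (by omega)) _ he
      exact hcr (Or.inl ⟨hpa, har, hrb⟩)
  choose! k hk using hfree
  calc E.card ≤ (Finset.Ioo lo hi).card := by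
        refine Finset.card_le_card_of_injOn k (fun d hd => ?_) fun d hd d' hd' hkd => ?_
        · have := hE d hd; have := hk d hd; simp only [Finset.coe_Ioo, Set.mem_Ioo]; omega
        · by_contra hne
          have h₁ := hnc d hd d' hd'
          have h₂ := hnc d' hd' d hd
          have f₁ := (hk d hd).2.2 d' hd' (Ne.symm hne)
          have f₂ := (hk d' hd').2.2 d hd hne
          have := hk d hd; have := hk d' hd'
          unfold Crosses at h₁ h₂
          omega
    _ = hi - lo - 1 := Nat.card_Ioo lo hi

namespace IsTriangulation

variable {n : ℕ} {D : Finset (ℕ × ℕ)} (hD : IsTriangulation n D)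
include hD

theorem isEdge_lt {p q : ℕ} (he : IsEdge n D p q) : p < q ∧ q < n :=
  he.elim (fun h => ⟨h.1, h.2.1⟩) fun h => ⟨(hD.2.1 _ h).1, (hD.2.1 _ h).2.1⟩

theorem not_crosses_of_isEdge {a b c d : ℕ} (h₁ : IsEdge n D a b) (h₂ : IsEdge n D c d) :
    ¬Crosses (a, b) (c, d) := by
  have := hD.isEdge_lt h₁
  have := hD.isEdge_lt h₂
  rcases h₁ with ⟨-, -, hs⟩ | hm₁
  · unfold Crosses; omega
  rcases h₂ with ⟨-, -, hs⟩ | hm₂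
  · unfold Crosses; omega
  by_cases hne : (a, b) = (c, d)
  · rw [hne]; exact not_crosses_self _
  · exact hD.2.2 _ hm₁ _ hm₂ hne

theorem exists_crosses_of_notMem {p q : ℕ} (hdiag : IsDiag n p q) (hnot : (p, q) ∉ D) :
    ∃ d ∈ D, Crosses d (p, q) ∨ Crosses (p, q) d := by
  by_contra! h
  obtain ⟨hpq, hqn, hns⟩ := hdiag
  set F := insert (0, n - 1) (insert (p, q) D)
  have hout : (0, n - 1) ∉ insert (p, q) D := by
    rw [Finset.mem_insert, not_or]
    exact ⟨by simp only [Prod.ext_iff]; omega, fun hm => (hD.2.1 _ hm).2.2 (Or.inr ⟨rfl, rfl⟩)⟩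
  have hbd : ∀ d ∈ F, 0 ≤ d.1 ∧ d.1 + 2 ≤ d.2 ∧ d.2 ≤ n - 1 := by
    simp only [F, Finset.mem_insert]
    rintro d (rfl | rfl | hd)
    · simp only; omega
    · simp only; omega
    · obtain ⟨h₁, h₂, h₃⟩ := hD.2.1 d hd; omega
  have hnc : ∀ d ∈ F, ∀ d' ∈ F, ¬Crosses d d' := by
    intro d hd d' hd'
    have := hbd d hd
    have := hbd d' hd'
    rcases Finset.mem_insert.mp hd with rfl | hd
    · unfold Crosses; omega
    rcases Finset.mem_insert.mp hd' with rfl | hd'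
    · unfold Crosses; omega
    rcases Finset.mem_insert.mp hd with rfl | hd <;> rcases Finset.mem_insert.mp hd' with rfl | hd'
    · exact not_crosses_self _
    · exact (h d' hd').2
    · exact (h d hd).1
    · exact hD.not_crosses_of_isEdge (Or.inr hd) (Or.inr hd')
  -- Adding the polygon's own chord `(0, n - 1)` and `(p, q)` to `D` gives too many chords.
  have hcard := card_le_of_pairwise_not_crosses hbd hnc
  rw [Finset.card_insert_of_notMem hout, Finset.card_insert_of_notMem hnot, hD.1] at hcard
  omega

theorem exists_apex {p q : ℕ} (he : IsEdge n D p q) (hpq : p + 2 ≤ q) :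
    ∃ k, p < k ∧ k < q ∧ IsEdge n D p k ∧ IsEdge n D k q := by
  have hqn := (hD.isEdge_lt he).2
  obtain ⟨r, hpr, hrq, hr, hmax⟩ := exists_greatest_neighbor (IsEdge n D) hpq
  have hpr' : IsEdge n D p r := hr.elim (fun h => Or.inl ⟨hpr, by omega, Or.inl h⟩) id
  refine ⟨r, hpr, hrq, hpr', ?_⟩
  by_cases hside : q = r + 1
  · exact Or.inl ⟨hrq, hqn, Or.inl hside⟩
  by_contra hrq'
  obtain ⟨⟨a, b⟩, hd, hcr⟩ :=
    hD.exists_crosses_of_notMem ⟨hrq, hqn, by omega⟩ fun h => hrq' (Or.inr h)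
  have hab : IsEdge n D a b := Or.inr hd
  have := hD.not_crosses_of_isEdge he hab
  have := hD.not_crosses_of_isEdge hab he
  have := hD.not_crosses_of_isEdge hpr' hab
  have hb : ¬(a = p ∧ r < b ∧ b < q) := fun ⟨ha, hrb, hbq⟩ => hmax b hrb hbq (ha ▸ hab)
  unfold Crosses at *
  omega

theorem eq_of_isEdge_of_lt_of_lt {p k q a b : ℕ} (hpk : IsEdge n D p k) (hkq : IsEdge n D k q)
    (hab : IsEdge n D a b) (hpa : p ≤ a) (hak : a < k) (hkb : k < b) (hbq : b ≤ q) :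
    a = p ∧ b = q := by
  have := hD.not_crosses_of_isEdge hpk hab
  have := hD.not_crosses_of_isEdge hab hkq
  unfold Crosses at *
  omega

end IsTriangulation

section

variable {E : Type*} [NormedAddCommGroup E] [InnerProductSpace ℝ E]

theorem exists_norm_eq_one_inner_eq_zero [FiniteDimensional ℝ E] (hE : 2 ≤ finrank ℝ E)
    (w : E) :
    ∃ v : E, ‖v‖ = 1 ∧ ⟪w, v⟫ = 0 := by
  have hK : 0 < finrank ℝ (ℝ ∙ w)ᗮ := by
    have hw : finrank ℝ (ℝ ∙ w) ≤ 1 := by simpa using finrank_span_le_card ({w} : Set E)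
    have := (ℝ ∙ w).finrank_add_finrank_orthogonal
    omega
  obtain ⟨v, hv⟩ := Module.finrank_pos_iff_exists_ne_zero.mp hK
  have hv0 : (v : E) ≠ 0 := by exact_mod_cast hv
  refine ⟨‖(v : E)‖⁻¹ • (v : E), norm_smul_inv_norm hv0, ?_⟩
  rw [inner_smul_right, Submodule.mem_orthogonal_singleton_iff_inner_right.mp v.2, mul_zero]

theorem norm_smul_add_smul_sq {w v : E} (hv : ‖v‖ = 1) (hwv : ⟪w, v⟫ = 0) (s h : ℝ) :
    ‖s • w + h • v‖ ^ 2 = s ^ 2 * ‖w‖ ^ 2 + h ^ 2 := by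
  rw [norm_add_sq_real, real_inner_smul_left, real_inner_smul_right, hwv, norm_smul, norm_smul,
    hv, Real.norm_eq_abs, Real.norm_eq_abs, mul_pow, mul_pow, sq_abs, sq_abs]
  ring

theorem exists_norm_sub_eq_norm_sub_eq [FiniteDimensional ℝ E] (hE : 2 ≤ finrank ℝ E)
    {A B : E} {a b : ℝ} (ha : 0 ≤ a) (hb : 0 ≤ b) (h₁ : |a - b| ≤ ‖A - B‖) (h₂ : ‖A - B‖ ≤ a + b) :
    ∃ P : E, ‖P - A‖ = a ∧ ‖P - B‖ = b := by
  obtain ⟨v, hv, hwv⟩ := exists_norm_eq_one_inner_eq_zero hE (B - A)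
  obtain ⟨c, hc⟩ : ∃ c, ‖B - A‖ = c := ⟨_, rfl⟩
  rw [norm_sub_rev, hc] at h₁ h₂
  obtain ⟨h₁', h₁''⟩ := abs_le.mp h₁
  -- The point is `A + t • (B - A) + h • v`; `t` solves `t² c² - (t - 1)² c² = a² - b²`.
  set t := (c ^ 2 + a ^ 2 - b ^ 2) / (2 * c ^ 2)
  have ht : t * c ^ 2 * 2 = c ^ 2 + a ^ 2 - b ^ 2 := by
    rcases eq_or_ne c 0 with rfl | hc0
    · nlinarith
    · simp only [t]; field_simp
  have htc : t ^ 2 * c ^ 2 ≤ a ^ 2 := by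
    have : 0 ≤ c ^ 2 * (a ^ 2 - t ^ 2 * c ^ 2) := by
      nlinarith [mul_nonneg (mul_nonneg (by linarith : 0 ≤ a + c - b) (by linarith : 0 ≤ a + c + b))
        (mul_nonneg (by linarith : 0 ≤ b - a + c) (by linarith : 0 ≤ b + a - c))]
    rcases eq_or_ne c 0 with rfl | hc0
    · simpa using sq_nonneg a
    · nlinarith [pow_pos (lt_of_le_of_ne (hc ▸ norm_nonneg _) hc0.symm) 2]
  set h := √(a ^ 2 - t ^ 2 * c ^ 2)
  have hh : h ^ 2 = a ^ 2 - t ^ 2 * c ^ 2 := Real.sq_sqrt (by linarith)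
  refine ⟨A + t • (B - A) + h • v, ?_, ?_⟩
  · rw [← sq_eq_sq₀ (norm_nonneg _) ha, add_sub_right_comm, add_sub_cancel_left,
      norm_smul_add_smul_sq hv hwv, hc, hh]
    ring
  · have : A + t • (B - A) + h • v - B = (t - 1) • (B - A) + h • v := by
      rw [sub_smul, one_smul]; abel
    rw [← sq_eq_sq₀ (norm_nonneg _) hb, this, norm_smul_add_smul_sq hv hwv, hc, hh]
    linear_combination -ht

theorem IsTriangulation.exists_realization_between [FiniteDimensional ℝ E]
    (hE : 2 ≤ finrank ℝ E) {n : ℕ} {D : Finset (ℕ × ℕ)} (hD : IsTriangulation n D) {u : ℕ × ℕ → ℝ}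
    (hu : SatisfiesTriangleIneqs n D u) {p q : ℕ} (he : IsEdge n D p q) {A B : E}
    (hAB : ‖A - B‖ = u (p, q)) :
    ∃ P : ℕ → E, P p = A ∧ P q = B ∧
      ∀ a b, p ≤ a → b ≤ q → IsEdge n D a b → ‖P a - P b‖ = u (a, b) := by
  induction hm : q - p using Nat.strong_induction_on generalizing p q A B with
  | _ m ih =>
  have hpq := (hD.isEdge_lt he).1
  by_cases hside : q = p + 1
  · refine ⟨fun v => if v = p then A else B, if_pos rfl, if_neg (by omega), ?_⟩
    intro a b hpa hbq hab
    obtain rfl : a = p := by have := (hD.isEdge_lt hab).1; omega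
    obtain rfl : b = q := by have := (hD.isEdge_lt hab).1; omega
    simpa [if_neg (show b ≠ a by omega)] using hAB
  obtain ⟨k, hpk, hkq, hepk, hekq⟩ := hD.exists_apex he (by omega)
  obtain ⟨t₁, t₂⟩ := hu p k q ⟨hpk, hkq, hepk, hekq, he⟩
  have ht₁ := abs_le.mp t₁
  obtain ⟨C, hCA, hCB⟩ := exists_norm_sub_eq_norm_sub_eq hE (a := u (p, k)) (b := u (k, q))
    (by linarith) (by linarith) (hAB ▸ t₁) (hAB ▸ t₂)
  obtain ⟨P₁, hP₁p, hP₁k, hP₁⟩ :=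
    ih (k - p) (by omega) hepk ((norm_sub_rev A C).trans hCA) rfl
  obtain ⟨P₂, hP₂k, hP₂q, hP₂⟩ := ih (q - k) (by omega) hekq hCB rfl
  refine ⟨fun v => if v ≤ k then P₁ v else P₂ v, by simp [hpk.le, hP₁p],
    by simp [hkq.not_ge, hP₂q], ?_⟩
  intro a b hpa hbq hab
  have hlt := (hD.isEdge_lt hab).1
  rcases le_or_gt b k with hbk | hkb
  · simpa [hbk, hlt.le.trans hbk] using hP₁ a b hpa hbk hab
  rcases lt_or_ge a k with hak | hka
  · obtain ⟨rfl, rfl⟩ := hD.eq_of_isEdge_of_lt_of_lt hepk hekq hab hpa hak hkb hbq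
    simpa [hak.le, hkb.not_ge, hP₁p, hP₂q] using hAB
  · have hPa : (if a ≤ k then P₁ a else P₂ a) = P₂ a := by
      split_ifs with h
      · rw [le_antisymm h hka, hP₁k, hP₂k]
      · rfl
    simpa [hPa, hkb.not_ge] using hP₂ a b hka hbq hab

end

/-- Any assignment of lengths to the sides and diagonals of a triangulation of the `n`-gon
satisfying all the triangle inequalities is realized by an actual (possibly degenerate)
polygon in the Euclidean plane: there are points `P 0, …, P (n-1)` in `ℝ²` such that
`‖P p - P q‖ = u (p, q)` for every edge `{p, q}` of the triangulation. -/
theorem triangle_ineqs_realizable (n : ℕ) (hn : 3 ≤ n)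
    (D : Finset (ℕ × ℕ)) (hD : IsTriangulation n D)
    (u : ℕ × ℕ → ℝ) (hu : SatisfiesTriangleIneqs n D u) :
    ∃ P : ℕ → EuclideanSpace ℝ (Fin 2),
      ∀ p q : ℕ, IsEdge n D p q → ‖P p - P q‖ = u (p, q) := by
  have hedge : IsEdge n D 0 (n - 1) := Or.inl ⟨by omega, by omega, Or.inr ⟨rfl, rfl⟩⟩
  obtain ⟨k, hk₁, hk₂, he₁, he₂⟩ := hD.exists_apex hedge (by omega)
  have hu₀ : 0 ≤ u (0, n - 1) :=
    (abs_nonneg _).trans (hu 0 k (n - 1) ⟨hk₁, hk₂, he₁, he₂, hedge⟩).1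
  obtain ⟨P, -, -, hP⟩ := hD.exists_realization_between (E := EuclideanSpace ℝ (Fin 2))
    (by simp) hu hedge (A := 0) (B := EuclideanSpace.single 0 (u (0, n - 1)))
    (by simp [abs_of_nonneg hu₀])
  refine ⟨P, fun p q he => hP p q (Nat.zero_le p) ?_ he⟩
  have := hD.isEdge_lt he
  omega
end

section
/- Let Γ be a triangulation of the n-gon and let c > 0 be a real number. For 1 ≤ k < l ≤ n define u_{kl} on the edges of Γ by u_{kl}(a) = c/2 if exactly one of k, l belongs to I_a, and u_{kl}(a) = 0 otherwise. Then the set Δ = { u : edges(Γ) → ℝ | u satisfies the triangle inequalities of Γ and u(e_1)+⋯+u(e_n) = c } equals the convex hull of the n(n−1)/2 points u_{kl}; moreover these points are pairwise distinct and are precisely the extreme points of Δ. -/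
open Classical

/-- For an edge `a = (p, q)` with `p < q`, the set `I_a = {p+1, …, q} ⊆ {1, …, n}`. -/
def edgeIndexSet (a : ℕ × ℕ) : Finset ℕ :=
  Finset.Icc (a.1 + 1) a.2

/-- The point `u_{kl}` of the moment polytope: its value on an edge `a` is `c / 2` if
exactly one of `k`, `l` belongs to `I_a`, and `0` otherwise (values off the edges of the
triangulation are set to zero). -/
noncomputable def fixedPoint (n : ℕ) (D : Finset (ℕ × ℕ)) (c : ℝ) (k l : ℕ) :
    ℕ × ℕ → ℝ := fun a =>
  if IsEdge n D a.1 a.2 ∧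
      ((k ∈ edgeIndexSet a ∧ l ∉ edgeIndexSet a) ∨
        (k ∉ edgeIndexSet a ∧ l ∈ edgeIndexSet a)) then
    c / 2
  else 0

/-- The moment polytope `Δ`: functions on the edges of the triangulation (encoded as
functions on ordered pairs vanishing off the edges) satisfying the triangle inequalities
and whose values on the sides `e_1, …, e_n` sum to `c`. -/
def MomentPolytope (n : ℕ) (D : Finset (ℕ × ℕ)) (c : ℝ) : Set (ℕ × ℕ → ℝ) :=
  {u | (∀ a : ℕ × ℕ, ¬IsEdge n D a.1 a.2 → u a = 0) ∧ SatisfiesTriangleIneqs n D u ∧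
    (∑ i ∈ Finset.range (n - 1), u (i, i + 1)) + u (0, n - 1) = c}

def SideG (S : Finset ℕ) (p q : ℕ) : Prop :=
  p < q ∧ p ∈ S ∧ q ∈ S ∧
    ((∀ x ∈ S, ¬(p < x ∧ x < q)) ∨ (∀ x ∈ S, p ≤ x ∧ x ≤ q))

def DiagG (S : Finset ℕ) (p q : ℕ) : Prop :=
  p < q ∧ p ∈ S ∧ q ∈ S ∧ ¬ SideG S p q

def EdgeG (S : Finset ℕ) (D : Finset (ℕ × ℕ)) (p q : ℕ) : Prop :=
  SideG S p q ∨ (p, q) ∈ D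

def TriG (S : Finset ℕ) (D : Finset (ℕ × ℕ)) : Prop :=
  D.card = S.card - 3 ∧ (∀ d ∈ D, DiagG S d.1 d.2) ∧
    ∀ d ∈ D, ∀ d' ∈ D, d ≠ d' → ¬Crosses d d'

lemma edgeG_spec {S D p q} (hdiag : ∀ d ∈ D, DiagG S d.1 d.2)
    (h : EdgeG S D p q) : p < q ∧ p ∈ S ∧ q ∈ S := by
  rcases h with h | h
  · exact ⟨h.1, h.2.1, h.2.2.1⟩
  · exact ⟨(hdiag _ h).1, (hdiag _ h).2.1, (hdiag _ h).2.2.1⟩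

/-- splitting a noncrossing family of diagonals along one diagonal. -/
lemma diag_split (S : Finset ℕ) (D : Finset (ℕ × ℕ))
    (hdiag : ∀ d ∈ D, DiagG S d.1 d.2)
    (hcross : ∀ d ∈ D, ∀ d' ∈ D, d ≠ d' → ¬Crosses d d')
    {a b : ℕ} (hab : (a, b) ∈ D) :
    (3 ≤ (S.filter (fun x => a ≤ x ∧ x ≤ b)).card ∧
     3 ≤ (S.filter (fun x => ¬(a < x ∧ x < b))).card ∧
     (S.filter (fun x => a ≤ x ∧ x ≤ b)).card < S.card ∧
     (S.filter (fun x => ¬(a < x ∧ x < b))).card < S.card ∧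
     (S.filter (fun x => a ≤ x ∧ x ≤ b)).card +
       (S.filter (fun x => ¬(a < x ∧ x < b))).card = S.card + 2) ∧
    (∀ d ∈ (D.erase (a,b)).filter (fun d => a ≤ d.1 ∧ d.2 ≤ b),
        DiagG (S.filter (fun x => a ≤ x ∧ x ≤ b)) d.1 d.2) ∧
    (∀ d ∈ (D.erase (a,b)).filter (fun d => ¬(a ≤ d.1 ∧ d.2 ≤ b)),
        DiagG (S.filter (fun x => ¬(a < x ∧ x < b))) d.1 d.2) ∧
    ((D.erase (a,b)).filter (fun d => a ≤ d.1 ∧ d.2 ≤ b)).card +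
      ((D.erase (a,b)).filter (fun d => ¬(a ≤ d.1 ∧ d.2 ≤ b))).card + 1 = D.card := by
  have hd := hdiag _ hab
  simp only [DiagG] at hd
  obtain ⟨hab_lt, haS, hbS, hnots⟩ := hd
  have hbet : ∃ q ∈ S, a < q ∧ q < b := by
    by_contra h
    push_neg at h
    exact hnots ⟨hab_lt, haS, hbS, Or.inl (fun x hx hx2 => by
      rcases h x hx with h'
      omega)⟩
  have hout : ∃ s ∈ S, s < a ∨ b < s := by
    by_contra h
    push_neg at h
    exact hnots ⟨hab_lt, haS, hbS, Or.inr (fun x hx => by rcases h x hx with ⟨h1, h2⟩; omega)⟩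
  obtain ⟨q, hqS, hq1, hq2⟩ := hbet
  obtain ⟨s, hsS, hs⟩ := hout
  set S1 := S.filter (fun x => a ≤ x ∧ x ≤ b) with hS1
  set S2 := S.filter (fun x => ¬(a < x ∧ x < b)) with hS2
  have haS1 : a ∈ S1 := by simp [hS1, haS]; omega
  have hbS1 : b ∈ S1 := by simp [hS1, hbS]; omega
  have hqS1 : q ∈ S1 := by simp [hS1, hqS]; omega
  have haS2 : a ∈ S2 := by simp [hS2, haS]
  have hbS2 : b ∈ S2 := by simp [hS2, hbS]
  have hsS2 : s ∈ S2 := by simp [hS2, hsS]; omega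
  have hsnot1 : s ∉ S1 := by simp [hS1]; intro _; omega
  have hqnot2 : q ∉ S2 := by simp [hS2, hqS]; omega
  have hcard1 : 3 ≤ S1.card := by
    have h3 : ({a, q, b} : Finset ℕ) ⊆ S1 := by
      intro x hx; simp at hx; rcases hx with rfl | rfl | rfl <;> assumption
    have hc : ({a, q, b} : Finset ℕ).card = 3 := by
      rw [Finset.card_insert_of_notMem (by simp; omega),
        Finset.card_insert_of_notMem (by simp; omega), Finset.card_singleton]
    have := Finset.card_le_card h3
    omega
  have hcard2 : 3 ≤ S2.card := by
    have h3 : ({a, b, s} : Finset ℕ) ⊆ S2 := by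
      intro x hx; simp at hx; rcases hx with rfl | rfl | rfl <;> assumption
    have hc : ({a, b, s} : Finset ℕ).card = 3 := by
      rw [Finset.card_insert_of_notMem (by simp; omega),
        Finset.card_insert_of_notMem (by simp; omega), Finset.card_singleton]
    have := Finset.card_le_card h3
    omega
  have hlt1 : S1.card < S.card :=
    Finset.card_lt_card ((Finset.ssubset_iff_of_subset (Finset.filter_subset _ _)).2
      ⟨s, hsS, hsnot1⟩)
  have hlt2 : S2.card < S.card :=
    Finset.card_lt_card ((Finset.ssubset_iff_of_subset (Finset.filter_subset _ _)).2
      ⟨q, hqS, hqnot2⟩)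
  have hsum : S1.card + S2.card = S.card + 2 := by
    have hfab : S.filter (fun x => x = a ∨ x = b) = {a, b} := by
      ext x
      simp only [Finset.mem_filter, Finset.mem_insert, Finset.mem_singleton]
      constructor
      · rintro ⟨-, h⟩; exact h
      · rintro (rfl | rfl) <;> exact ⟨by assumption, by tauto⟩
    have h2 : (S.filter (fun x => x = a ∨ x = b)).card = 2 := by
      rw [hfab, Finset.card_insert_of_notMem (by simp; omega), Finset.card_singleton]
    rw [hS1, hS2, Finset.card_filter, Finset.card_filter]
    rw [← Finset.sum_add_distrib]
    have : ∀ x ∈ S, ((if a ≤ x ∧ x ≤ b then 1 else 0) + if ¬(a < x ∧ x < b) then 1 else 0)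
        = 1 + ((fun x => if x = a ∨ x = b then 1 else 0) x : ℕ) := by
      intro x hx
      by_cases h1 : a ≤ x ∧ x ≤ b <;> by_cases h2 : a < x ∧ x < b <;>
        by_cases h3 : x = a ∨ x = b <;> simp [h1, h2, h3] <;> omega
    rw [Finset.sum_congr rfl this, Finset.sum_add_distrib, Finset.sum_const, smul_eq_mul,
      mul_one, ← Finset.card_filter]
    omega
  refine ⟨⟨hcard1, hcard2, hlt1, hlt2, hsum⟩, ?_, ?_, ?_⟩
  · rintro ⟨x, y⟩ hd
    simp only [Finset.mem_filter, Finset.mem_erase] at hd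
    obtain ⟨⟨hne, hmem⟩, hax, hyb⟩ := hd
    obtain ⟨hxy, hxS, hyS, hnotside⟩ := hdiag _ hmem
    dsimp only at hxy hxS hyS hnotside hax hyb
    have hxS1 : x ∈ S1 := by simp [hS1, hxS]; omega
    have hyS1 : y ∈ S1 := by simp [hS1, hyS]; omega
    refine ⟨hxy, hxS1, hyS1, ?_⟩
    rintro ⟨-, -, -, hside | hwrap⟩
    · refine hnotside ⟨hxy, hxS, hyS, Or.inl fun z hz hz2 => ?_⟩
      exact hside z (by simp [hS1, hz]; omega) hz2
    · have h1 := hwrap a haS1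
      have h2 := hwrap b hbS1
      exact hne (by ext <;> dsimp <;> omega)
  · rintro ⟨x, y⟩ hd
    simp only [Finset.mem_filter, Finset.mem_erase] at hd
    obtain ⟨⟨hne, hmem⟩, hfneg⟩ := hd
    obtain ⟨hxy, hxS, hyS, hnotside⟩ := hdiag _ hmem
    have hne' : ¬(x = a ∧ y = b) := fun ⟨h1, h2⟩ => hne (by subst h1; subst h2; rfl)
    have hnc1 := hcross _ hmem _ hab (by intro h; exact hne h)
    have hnc2 := hcross _ hab _ hmem (by intro h; exact hne h.symm)
    simp only [Crosses, not_or, not_and] at hnc1 hnc2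
    -- both endpoints avoid the open interval (a,b)
    have hx2 : ¬(a < x ∧ x < b) := by omega
    have hy2 : ¬(a < y ∧ y < b) := by omega
    have hxS2 : x ∈ S2 := by simp [hS2, hxS]; omega
    have hyS2 : y ∈ S2 := by simp [hS2, hyS]; omega
    refine ⟨hxy, hxS2, hyS2, ?_⟩
    rintro ⟨-, -, -, hside | hwrap⟩
    · -- no S2-vertex strictly between x and y; derive a contradiction or x,y consecutive in S
      refine hnotside ⟨hxy, hxS, hyS, Or.inl fun z hz hz2 => ?_⟩
      by_cases hzab : a < z ∧ z < b
      · -- z in the open interval; then a or b lies strictly between x and y, in S2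
        rcases Nat.lt_or_ge x a with h | h
        · exact hside a haS2 ⟨by omega, by omega⟩
        · exact hside b hbS2 ⟨by omega, by omega⟩
      · exact hside z (by simp [hS2, hz]; omega) hz2
    · have h1 := hwrap a haS2
      have h2 := hwrap b hbS2
      refine hnotside ⟨hxy, hxS, hyS, Or.inr fun z hz => ?_⟩
      by_cases hzab : a < z ∧ z < b
      · omega
      · have := hwrap z (by simp [hS2, hz]; omega); omega
  · have h1 := Finset.card_filter_add_card_filter_not
      (s := D.erase (a,b)) (p := fun d => a ≤ d.1 ∧ d.2 ≤ b)
    have h2 : (D.erase (a,b)).card = D.card - 1 := Finset.card_erase_of_mem hab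
    have h3 : 1 ≤ D.card := Finset.card_pos.2 ⟨_, hab⟩
    omega

lemma diag_between {S : Finset ℕ} {a b : ℕ} (h : DiagG S a b) : ∃ q ∈ S, a < q ∧ q < b := by
  obtain ⟨hab, haS, hbS, hnots⟩ := h
  by_contra hcon
  push_neg at hcon
  exact hnots ⟨hab, haS, hbS, Or.inl (fun x hx hx2 => by rcases hcon x hx with h'; omega)⟩

lemma diag_bound : ∀ m : ℕ, ∀ S : Finset ℕ, S.card = m → 3 ≤ S.card →
    ∀ D : Finset (ℕ × ℕ), (∀ d ∈ D, DiagG S d.1 d.2) →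
    (∀ d ∈ D, ∀ d' ∈ D, d ≠ d' → ¬Crosses d d') → D.card + 3 ≤ S.card := by
  intro m
  induction m using Nat.strong_induction_on with
  | _ m IH =>
    rintro S rfl h3 D hdiag hcross
    rcases D.eq_empty_or_nonempty with rfl | ⟨⟨a, b⟩, hab⟩
    · simpa using h3
    · obtain ⟨⟨hc1, hc2, hlt1, hlt2, hsum⟩, hd1, hd2, hcnt⟩ := diag_split S D hdiag hcross hab
      have hsub1 : (D.erase (a,b)).filter (fun d => a ≤ d.1 ∧ d.2 ≤ b) ⊆ D :=
        (Finset.filter_subset _ _).trans (Finset.erase_subset _ _)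
      have hsub2 : (D.erase (a,b)).filter (fun d => ¬(a ≤ d.1 ∧ d.2 ≤ b)) ⊆ D :=
        (Finset.filter_subset _ _).trans (Finset.erase_subset _ _)
      have hb1 := IH _ hlt1 _ rfl hc1 _ hd1
        (fun d hd d' hd' hne => hcross _ (hsub1 hd) _ (hsub1 hd') hne)
      have hb2 := IH _ hlt2 _ rfl hc2 _ hd2
        (fun d hd d' hd' hne => hcross _ (hsub2 hd) _ (hsub2 hd') hne)
      omega

lemma ear_exists : ∀ m : ℕ, ∀ S : Finset ℕ, S.card = m → 4 ≤ S.card →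
    ∀ D : Finset (ℕ × ℕ), TriG S D →
    ∃ p q r, p ∈ S ∧ q ∈ S ∧ r ∈ S ∧ p < q ∧ q < r ∧
      (∀ x ∈ S, ¬(p < x ∧ x < q)) ∧ (∀ x ∈ S, ¬(q < x ∧ x < r)) ∧ (p, r) ∈ D := by
  intro m
  induction m using Nat.strong_induction_on with
  | _ m IH =>
    rintro S rfl h4 D ⟨hcard, hdiag, hcross⟩
    have hD_ne : D.Nonempty := by rw [← Finset.card_pos, hcard]; omega
    obtain ⟨⟨a, b⟩, hab⟩ := hD_ne
    obtain ⟨⟨hc1, hc2, hlt1, hlt2, hsum⟩, hd1, hd2, hcnt⟩ := diag_split S D hdiag hcross hab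
    have hsub1 : (D.erase (a,b)).filter (fun d => a ≤ d.1 ∧ d.2 ≤ b) ⊆ D :=
      (Finset.filter_subset _ _).trans (Finset.erase_subset _ _)
    have hsub2 : (D.erase (a,b)).filter (fun d => ¬(a ≤ d.1 ∧ d.2 ≤ b)) ⊆ D :=
      (Finset.filter_subset _ _).trans (Finset.erase_subset _ _)
    have hb1 := diag_bound _ _ rfl hc1 _ hd1
      (fun d hd d' hd' hne => hcross _ (hsub1 hd) _ (hsub1 hd') hne)
    have hb2 := diag_bound _ _ rfl hc2 _ hd2
      (fun d hd d' hd' hne => hcross _ (hsub2 hd) _ (hsub2 hd') hne)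
    have hdab := hdiag _ hab
    have haS : a ∈ S := hdab.2.1
    have hbS : b ∈ S := hdab.2.2.1
    by_cases h31 : (S.filter (fun x => a ≤ x ∧ x ≤ b)).card = 3
    · obtain ⟨q, hqS, hq1, hq2⟩ := diag_between hdab
      have hsub3 : ({a, q, b} : Finset ℕ) ⊆ S.filter (fun x => a ≤ x ∧ x ≤ b) := by
        intro x hx
        simp only [Finset.mem_insert, Finset.mem_singleton] at hx
        rcases hx with rfl | rfl | rfl <;> simp [haS, hqS, hbS] <;> omega
      have hc3 : ({a, q, b} : Finset ℕ).card = 3 := by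
        rw [Finset.card_insert_of_notMem (by simp; omega),
          Finset.card_insert_of_notMem (by simp; omega), Finset.card_singleton]
      have heq := Finset.eq_of_subset_of_card_le hsub3 (by omega)
      refine ⟨a, q, b, haS, hqS, hbS, hq1, hq2, ?_, ?_, hab⟩
      · intro x hx hx2
        have hx1 : x ∈ S.filter (fun x => a ≤ x ∧ x ≤ b) := by simp [hx]; omega
        rw [← heq] at hx1
        simp only [Finset.mem_insert, Finset.mem_singleton] at hx1
        omega
      · intro x hx hx2
        have hx1 : x ∈ S.filter (fun x => a ≤ x ∧ x ≤ b) := by simp [hx]; omega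
        rw [← heq] at hx1
        simp only [Finset.mem_insert, Finset.mem_singleton] at hx1
        omega
    · have hT1 : TriG (S.filter (fun x => a ≤ x ∧ x ≤ b))
          ((D.erase (a,b)).filter (fun d => a ≤ d.1 ∧ d.2 ≤ b)) := by
        refine ⟨by omega, hd1, fun d hd d' hd' hne => hcross _ (hsub1 hd) _ (hsub1 hd') hne⟩
      obtain ⟨p, q, r, hp, hq, hr, hpq, hqr, g1, g2, hpr⟩ :=
        IH _ hlt1 _ rfl (by omega) _ hT1
      simp only [Finset.mem_filter] at hp hq hr
      refine ⟨p, q, r, hp.1, hq.1, hr.1, hpq, hqr, ?_, ?_, hsub1 hpr⟩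
      · intro x hx hx2
        exact g1 x (by simp [hx]; omega) hx2
      · intro x hx hx2
        exact g2 x (by simp [hx]; omega) hx2

/-- `A` is an "arc" of the cyclically ordered vertex set `S`: a nonempty convex
(in the linear order) subset of `S` avoiding the minimum of `S`. -/
def ArcOf (S A : Finset ℕ) : Prop :=
  A ⊆ S ∧ A.Nonempty ∧
    (∀ x ∈ S, ∀ a ∈ A, ∀ b ∈ A, a ≤ x → x ≤ b → x ∈ A) ∧
    ∃ s ∈ S, ∀ a ∈ A, s < a

noncomputable def arcs (S : Finset ℕ) : Finset (Finset ℕ) :=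
  S.powerset.filter (ArcOf S)

/-- The cut vector of a subset `A`: value 1 on edges with exactly one endpoint in `A`. -/
noncomputable def cutv (S : Finset ℕ) (D : Finset (ℕ × ℕ)) (A : Finset ℕ) : ℕ × ℕ → ℝ :=
  fun a => if EdgeG S D a.1 a.2 ∧ ((a.1 ∈ A ∧ a.2 ∉ A) ∨ (a.1 ∉ A ∧ a.2 ∈ A)) then 1 else 0

lemma cutv_one {S D A x y} (he : EdgeG S D x y)
    (h : (x ∈ A ∧ y ∉ A) ∨ (x ∉ A ∧ y ∈ A)) : cutv S D A (x, y) = 1 := if_pos ⟨he, h⟩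

lemma cutv_zero {S D A x y} (h : ¬((x ∈ A ∧ y ∉ A) ∨ (x ∉ A ∧ y ∈ A))) :
    cutv S D A (x, y) = 0 := if_neg (fun hc => h hc.2)

lemma cutv_zero' {S D A x y} (h : ¬EdgeG S D x y) : cutv S D A (x, y) = 0 :=
  if_neg (fun hc => h hc.1)

lemma mem_arcs {S A : Finset ℕ} : A ∈ arcs S ↔ ArcOf S A := by
  unfold arcs
  simp only [Finset.mem_filter, Finset.mem_powerset]
  exact ⟨fun h => h.2, fun h => ⟨h.1, h⟩⟩

/-- Context: `q` is an ear vertex of the triangulation, with neighbours `p < q < r`. -/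
structure EarCtx (S : Finset ℕ) (D : Finset (ℕ × ℕ)) (p q r : ℕ) : Prop where
  hdiag : ∀ d ∈ D, DiagG S d.1 d.2
  hcross : ∀ d ∈ D, ∀ d' ∈ D, d ≠ d' → ¬Crosses d d'
  hpS : p ∈ S
  hqS : q ∈ S
  hrS : r ∈ S
  hpq : p < q
  hqr : q < r
  g1 : ∀ x ∈ S, ¬(p < x ∧ x < q)
  g2 : ∀ x ∈ S, ¬(q < x ∧ x < r)
  hprD : (p, r) ∈ D

namespace EarCtx

variable {S : Finset ℕ} {D : Finset (ℕ × ℕ)} {p q r : ℕ}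

lemma no_diag_q (E : EarCtx S D p q r) : ∀ d ∈ D, d.1 ≠ q ∧ d.2 ≠ q := by
  have hpq := E.hpq
  have hqr := E.hqr
  rintro ⟨x, y⟩ hd
  obtain ⟨hxy, hxS, hyS, hns⟩ := E.hdiag _ hd
  constructor
  · intro hxq
    have hy : ¬(q < y ∧ y < r) := E.g2 y hyS
    rcases Nat.lt_or_ge r y with h | h
    · exact E.hcross _ hd _ E.hprD (by intro hc; rw [Prod.mk.injEq] at hc; omega)
        (Or.inr ⟨by omega, by omega, by omega⟩)
    · have hyr : y = r := by omega
      refine hns ?_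
      rw [hxq, hyr]
      exact ⟨E.hqr, E.hqS, E.hrS, Or.inl E.g2⟩
  · intro hyq
    have hx : ¬(p < x ∧ x < q) := E.g1 x hxS
    rcases Nat.lt_or_ge x p with h | h
    · exact E.hcross _ hd _ E.hprD (by intro hc; rw [Prod.mk.injEq] at hc; omega)
        (Or.inl ⟨by omega, by omega, by omega⟩)
    · have hxp : x = p := by omega
      refine hns ?_
      rw [hxp, hyq]
      exact ⟨E.hpq, E.hpS, E.hqS, Or.inl E.g1⟩

lemma side_pq (E : EarCtx S D p q r) : SideG S p q := ⟨E.hpq, E.hpS, E.hqS, Or.inl E.g1⟩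

lemma side_qr (E : EarCtx S D p q r) : SideG S q r := ⟨E.hqr, E.hqS, E.hrS, Or.inl E.g2⟩

lemma hpS' (E : EarCtx S D p q r) : p ∈ S.erase q :=
  Finset.mem_erase.2 ⟨by have := E.hpq; omega, E.hpS⟩

lemma hrS' (E : EarCtx S D p q r) : r ∈ S.erase q :=
  Finset.mem_erase.2 ⟨by have := E.hqr; omega, E.hrS⟩

lemma side'_pr (E : EarCtx S D p q r) : SideG (S.erase q) p r := by
  have hpq := E.hpq
  have hqr := E.hqr
  refine ⟨by omega, E.hpS', E.hrS', Or.inl fun z hz hz2 => ?_⟩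
  rw [Finset.mem_erase] at hz
  rcases Nat.lt_or_ge z q with h | h
  · exact E.g1 z hz.2 ⟨hz2.1, h⟩
  · have : q < z := by rcases hz with ⟨h1, _⟩; omega
    exact E.g2 z hz.2 ⟨this, hz2.2⟩

lemma edge_at_q_left (E : EarCtx S D p q r) {x : ℕ} (he : EdgeG S D x q) : x = p := by
  have hpq := E.hpq
  have hqr := E.hqr
  rcases he with ⟨hxq, hxS, hqS2, hside | hwrap⟩ | hd
  · have h1 : ¬(p < x ∧ x < q) := E.g1 x hxS
    have h2 : x ≤ p := by omega
    rcases Nat.lt_or_ge x p with h | h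
    · exact absurd ⟨h, E.hpq⟩ (hside p E.hpS)
    · omega
  · have := hwrap r E.hrS
    omega
  · exact absurd rfl (E.no_diag_q _ hd).2

lemma edge_at_q_right (E : EarCtx S D p q r) {y : ℕ} (he : EdgeG S D q y) : y = r := by
  have hpq := E.hpq
  have hqr := E.hqr
  rcases he with ⟨hqy, hqS2, hyS, hside | hwrap⟩ | hd
  · have h1 : ¬(q < y ∧ y < r) := E.g2 y hyS
    rcases Nat.lt_or_ge r y with h | h
    · exact absurd ⟨E.hqr, h⟩ (hside r E.hrS)
    · omega
  · have := hwrap p E.hpS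
    omega
  · exact absurd rfl (E.no_diag_q _ hd).1

lemma edge'_sub (E : EarCtx S D p q r) {x y : ℕ} (he : EdgeG (S.erase q) (D.erase (p, r)) x y) :
    EdgeG S D x y := by
  have hpq := E.hpq
  have hqr := E.hqr
  rcases he with ⟨hxy, hxS', hyS', hside | hwrap⟩ | hd
  · rw [Finset.mem_erase] at hxS' hyS'
    by_cases hq : x < q ∧ q < y
    · -- the gap of the removed vertex q is inside (x,y); then (x,y) = (p,r)
      have hxp : x ≤ p := by
        have := E.g1 x hxS'.2; omega
      have hyr : r ≤ y := by
        have := E.g2 y hyS'.2; omega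
      have hxp2 : x = p := by
        rcases Nat.lt_or_ge x p with h | h
        · exact absurd ⟨h, by omega⟩ (hside p E.hpS')
        · omega
      have hyr2 : y = r := by
        rcases Nat.lt_or_ge r y with h | h
        · exact absurd ⟨by omega, h⟩ (hside r E.hrS')
        · omega
      subst hxp2; subst hyr2
      exact Or.inr E.hprD
    · refine Or.inl ⟨hxy, hxS'.2, hyS'.2, Or.inl fun z hz hz2 => ?_⟩
      have hzq : z ≠ q := by intro h; subst h; exact hq hz2
      exact hside z (Finset.mem_erase.2 ⟨hzq, hz⟩) hz2
  · rw [Finset.mem_erase] at hxS' hyS'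
    refine Or.inl ⟨hxy, hxS'.2, hyS'.2, Or.inr fun z hz => ?_⟩
    by_cases hzq : z = q
    · subst hzq
      have h1 := hwrap p E.hpS'
      have h2 := hwrap r E.hrS'
      omega
    · exact hwrap z (Finset.mem_erase.2 ⟨hzq, hz⟩)
  · exact Or.inr (Finset.mem_of_mem_erase hd)

lemma edge'_no_q (E : EarCtx S D p q r) {x y : ℕ} (he : EdgeG (S.erase q) (D.erase (p, r)) x y) :
    x ≠ q ∧ y ≠ q := by
  rcases he with ⟨hxy, hxS', hyS', _⟩ | hd
  · rw [Finset.mem_erase] at hxS' hyS'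
    exact ⟨hxS'.1, hyS'.1⟩
  · have := E.no_diag_q _ (Finset.mem_of_mem_erase hd)
    exact this

lemma edge_classify (E : EarCtx S D p q r) {x y : ℕ} (he : EdgeG S D x y) :
    (x, y) = (p, q) ∨ (x, y) = (q, r) ∨ EdgeG (S.erase q) (D.erase (p, r)) x y := by
  have hxy : x < y := (edgeG_spec E.hdiag he).1
  by_cases hxq : x = q
  · subst hxq
    have := E.edge_at_q_right he
    subst this
    exact Or.inr (Or.inl rfl)
  by_cases hyq : y = q
  · subst hyq
    have := E.edge_at_q_left he
    subst this
    exact Or.inl rfl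
  refine Or.inr (Or.inr ?_)
  rcases he with ⟨h1, hxS, hyS, hside | hwrap⟩ | hd
  · exact Or.inl ⟨h1, Finset.mem_erase.2 ⟨hxq, hxS⟩, Finset.mem_erase.2 ⟨hyq, hyS⟩,
      Or.inl fun z hz hz2 => hside z (Finset.mem_of_mem_erase hz) hz2⟩
  · exact Or.inl ⟨h1, Finset.mem_erase.2 ⟨hxq, hxS⟩, Finset.mem_erase.2 ⟨hyq, hyS⟩,
      Or.inr fun z hz => hwrap z (Finset.mem_of_mem_erase hz)⟩
  · by_cases hdpr : (x, y) = (p, r)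
    · rw [Prod.mk.injEq] at hdpr
      obtain ⟨rfl, rfl⟩ := hdpr
      exact Or.inl E.side'_pr
    · exact Or.inr (Finset.mem_erase.2 ⟨hdpr, hd⟩)

lemma triG' (E : EarCtx S D p q r) (hT : TriG S D) (h4 : 4 ≤ S.card) :
    TriG (S.erase q) (D.erase (p, r)) := by
  have hpq := E.hpq
  have hqr := E.hqr
  refine ⟨?_, ?_, fun d hd d' hd' hne =>
    hT.2.2 _ (Finset.mem_of_mem_erase hd) _ (Finset.mem_of_mem_erase hd') hne⟩
  · rw [Finset.card_erase_of_mem E.hprD, Finset.card_erase_of_mem E.hqS, hT.1]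
    omega
  · rintro ⟨x, y⟩ hd
    have hdD := Finset.mem_of_mem_erase hd
    have hnepr : (x, y) ≠ (p, r) := (Finset.mem_erase.1 hd).1
    obtain ⟨hxy, hxS, hyS, hns⟩ := E.hdiag _ hdD
    have hq := E.no_diag_q _ hdD
    refine ⟨hxy, Finset.mem_erase.2 ⟨hq.1, hxS⟩, Finset.mem_erase.2 ⟨hq.2, hyS⟩, ?_⟩
    rintro ⟨-, -, -, hside | hwrap⟩
    · by_cases hqin : x < q ∧ q < y
      · have hxp : x ≤ p := by have := E.g1 x hxS; omega
        have hyr : r ≤ y := by have := E.g2 y hyS; omega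
        rcases Nat.lt_or_ge x p with h | h
        · exact hside p E.hpS' ⟨h, by omega⟩
        · rcases Nat.lt_or_ge r y with h' | h'
          · exact hside r E.hrS' ⟨by omega, h'⟩
          · exact hnepr (by rw [Prod.mk.injEq]; omega)
      · refine hns ⟨hxy, hxS, hyS, Or.inl fun z hz hz2 => ?_⟩
        have hzq : z ≠ q := by intro h; subst h; exact hqin hz2
        exact hside z (Finset.mem_erase.2 ⟨hzq, hz⟩) hz2
    · refine hns ⟨hxy, hxS, hyS, Or.inr fun z hz => ?_⟩
      by_cases hzq : z = q
      · subst hzq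
        have h1 := hwrap p E.hpS'
        have h2 := hwrap r E.hrS'
        omega
      · exact hwrap z (Finset.mem_erase.2 ⟨hzq, hz⟩)

end EarCtx

namespace EarCtx

variable {S : Finset ℕ} {D : Finset (ℕ × ℕ)} {p q r : ℕ}

lemma singleton_arc (E : EarCtx S D p q r) : ({q} : Finset ℕ) ∈ arcs S := by
  rw [mem_arcs]
  refine ⟨by intro x hx; rw [Finset.mem_singleton] at hx; subst hx; exact E.hqS,
    ⟨q, Finset.mem_singleton_self q⟩, ?_, ⟨p, E.hpS, ?_⟩⟩
  · intro x hx a ha b hb hax hxb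
    rw [Finset.mem_singleton] at ha hb ⊢
    omega
  · intro a ha
    rw [Finset.mem_singleton] at ha
    subst ha
    exact E.hpq

lemma lift_arc_r (E : EarCtx S D p q r) {A' : Finset ℕ} (hA' : A' ∈ arcs (S.erase q)) :
    (if r ∈ A' then insert q A' else A') ∈ arcs S := by
  have hpq := E.hpq
  have hqr := E.hqr
  obtain ⟨hsub, hne, hconv, s₀, hs₀S, hs₀⟩ := mem_arcs.1 hA'
  have hsubS : A' ⊆ S := hsub.trans (Finset.erase_subset _ _)
  have hqA' : q ∉ A' := fun h => (Finset.mem_erase.1 (hsub h)).1 rfl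
  rw [mem_arcs]
  by_cases hr : r ∈ A'
  · rw [if_pos hr]
    refine ⟨?_, ⟨q, Finset.mem_insert_self _ _⟩, ?_, ?_⟩
    · intro x hx
      rcases Finset.mem_insert.1 hx with rfl | hx
      · exact E.hqS
      · exact hsubS hx
    · intro x hxS a ha b hb hax hxb
      by_cases hxq : x = q
      · subst hxq; exact Finset.mem_insert_self _ _
      · have hxS' : x ∈ S.erase q := Finset.mem_erase.2 ⟨hxq, hxS⟩
        refine Finset.mem_insert.2 (Or.inr ?_)
        rcases Finset.mem_insert.1 ha with haq | ha
        · -- a = q, so x > q hence x ≥ r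
          have hxr : r ≤ x := by
            have := E.g2 x hxS; omega
          rcases Finset.mem_insert.1 hb with hbq | hb
          · exfalso; omega
          · exact hconv x hxS' r hr b hb hxr hxb
        · rcases Finset.mem_insert.1 hb with hbq | hb
          · -- b = q, so x < q hence x ≤ p < r
            exact hconv x hxS' a ha r hr hax (by omega)
          · exact hconv x hxS' a ha b hb hax hxb
    · refine ⟨s₀, Finset.mem_of_mem_erase hs₀S, ?_⟩
      intro a ha
      rcases Finset.mem_insert.1 ha with haq | ha
      · -- s₀ < q since s₀ < r and s₀ ≠ q (s₀ ∈ S.erase q)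
        have h1 := hs₀ r hr
        have h2 := (Finset.mem_erase.1 hs₀S).1
        have h3 := E.g2 s₀ (Finset.mem_of_mem_erase hs₀S)
        omega
      · exact hs₀ a ha
  · rw [if_neg hr]
    refine ⟨hsubS, hne, ?_, ⟨s₀, Finset.mem_of_mem_erase hs₀S, hs₀⟩⟩
    intro x hxS a ha b hb hax hxb
    by_cases hxq : x = q
    · exfalso
      have haq : a ≠ q := fun h => hqA' (h ▸ ha)
      have hbq : b ≠ q := fun h => hqA' (h ▸ hb)
      have hbr : r ≤ b := by
        have := E.g2 b (hsubS hb); omega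
      exact hr (hconv r E.hrS' a ha b hb (by have := E.g1 a (hsubS ha); omega) hbr)
    · exact hconv x (Finset.mem_erase.2 ⟨hxq, hxS⟩) a ha b hb hax hxb

lemma lift_arc_p (E : EarCtx S D p q r) {A' : Finset ℕ} (hA' : A' ∈ arcs (S.erase q)) :
    (if p ∈ A' then insert q A' else A') ∈ arcs S := by
  have hpq := E.hpq
  have hqr := E.hqr
  obtain ⟨hsub, hne, hconv, s₀, hs₀S, hs₀⟩ := mem_arcs.1 hA'
  have hsubS : A' ⊆ S := hsub.trans (Finset.erase_subset _ _)
  have hqA' : q ∉ A' := fun h => (Finset.mem_erase.1 (hsub h)).1 rfl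
  rw [mem_arcs]
  by_cases hp : p ∈ A'
  · rw [if_pos hp]
    refine ⟨?_, ⟨q, Finset.mem_insert_self _ _⟩, ?_, ?_⟩
    · intro x hx
      rcases Finset.mem_insert.1 hx with rfl | hx
      · exact E.hqS
      · exact hsubS hx
    · intro x hxS a ha b hb hax hxb
      by_cases hxq : x = q
      · subst hxq; exact Finset.mem_insert_self _ _
      · have hxS' : x ∈ S.erase q := Finset.mem_erase.2 ⟨hxq, hxS⟩
        refine Finset.mem_insert.2 (Or.inr ?_)
        rcases Finset.mem_insert.1 ha with haq | ha
        · -- a = q ≤ x, x ≠ q so x > q ≥ p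
          rcases Finset.mem_insert.1 hb with hbq | hb
          · exfalso; omega
          · exact hconv x hxS' p hp b hb (by omega) hxb
        · rcases Finset.mem_insert.1 hb with hbq | hb
          · -- x ≤ b = q, x ≠ q so x < q hence x ≤ p
            have hxp : x ≤ p := by
              have := E.g1 x hxS; omega
            exact hconv x hxS' a ha p hp hax hxp
          · exact hconv x hxS' a ha b hb hax hxb
    · refine ⟨s₀, Finset.mem_of_mem_erase hs₀S, ?_⟩
      intro a ha
      rcases Finset.mem_insert.1 ha with haq | ha
      · have h1 := hs₀ p hp
        omega
      · exact hs₀ a ha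
  · rw [if_neg hp]
    refine ⟨hsubS, hne, ?_, ⟨s₀, Finset.mem_of_mem_erase hs₀S, hs₀⟩⟩
    intro x hxS a ha b hb hax hxb
    by_cases hxq : x = q
    · exfalso
      have haq : a ≠ q := fun h => hqA' (h ▸ ha)
      have hbq : b ≠ q := fun h => hqA' (h ▸ hb)
      have hap : a ≤ p := by
        have := E.g1 a (hsubS ha); omega
      exact hp (hconv p E.hpS' a ha b hb hap (by have := E.g2 b (hsubS hb); omega))
    · exact hconv x (Finset.mem_erase.2 ⟨hxq, hxS⟩) a ha b hb hax hxb

lemma mem_lift_iff {A' : Finset ℕ} (hqA' : q ∉ A') {w x : ℕ} (hx : x ≠ q) :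
    (x ∈ (if w ∈ A' then insert q A' else A') ↔ x ∈ A') := by
  split
  · rw [Finset.mem_insert]
    exact ⟨fun h => h.resolve_left hx, Or.inr⟩
  · rfl

lemma q_mem_lift_iff {A' : Finset ℕ} (hqA' : q ∉ A') {w : ℕ} :
    (q ∈ (if w ∈ A' then insert q A' else A') ↔ w ∈ A') := by
  split
  · simp [*]
  · simp [hqA', *]

end EarCtx

lemma coneRep_base {S : Finset ℕ} {D : Finset (ℕ × ℕ)} (hT : TriG S D)
    {a b c : ℕ} (hab : a < b) (hbc : b < c) (hS : S = {a, b, c})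
    (u : ℕ × ℕ → ℝ) (hvan : ∀ e : ℕ × ℕ, ¬EdgeG S D e.1 e.2 → u e = 0)
    (htri : ∀ x y z : ℕ, x < y → y < z → EdgeG S D x y → EdgeG S D y z → EdgeG S D x z →
      |u (x, y) - u (y, z)| ≤ u (x, z) ∧ u (x, z) ≤ u (x, y) + u (y, z)) :
    ∃ t : Finset ℕ → ℝ, (∀ A, 0 ≤ t A) ∧ u = ∑ A ∈ arcs S, t A • cutv S D A := by
  subst hS
  have hcard : ({a, b, c} : Finset ℕ).card = 3 := by
    rw [Finset.card_insert_of_notMem (by simp; omega),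
      Finset.card_insert_of_notMem (by simp; omega), Finset.card_singleton]
  have hD : D = ∅ := Finset.card_eq_zero.1 (by rw [hT.1, hcard])
  subst hD
  have hmemS : ∀ x, x ∈ ({a, b, c} : Finset ℕ) ↔ (x = a ∨ x = b ∨ x = c) := by
    intro x; simp
  have hedge : ∀ x y, EdgeG {a, b, c} ∅ x y ↔
      ((x, y) = (a, b) ∨ (x, y) = (b, c) ∨ (x, y) = (a, c)) := by
    intro x y
    constructor
    · rintro (⟨hxy, hxS, hyS, -⟩ | h)
      · rw [hmemS] at hxS hyS
        rw [Prod.mk.injEq, Prod.mk.injEq, Prod.mk.injEq]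
        omega
      · simp at h
    · rintro (h | h | h) <;> rw [Prod.mk.injEq] at h <;> obtain ⟨rfl, rfl⟩ := h
      · exact Or.inl ⟨hab, by simp, by simp, Or.inl (fun z hz hz2 => by
          rw [hmemS] at hz; omega)⟩
      · exact Or.inl ⟨hbc, by simp, by simp, Or.inl (fun z hz hz2 => by
          rw [hmemS] at hz; omega)⟩
      · exact Or.inl ⟨by omega, by simp, by simp, Or.inr (fun z hz => by
          rw [hmemS] at hz; omega)⟩
  have heab : EdgeG {a, b, c} ∅ a b := (hedge a b).2 (Or.inl rfl)
  have hebc : EdgeG {a, b, c} ∅ b c := (hedge b c).2 (Or.inr (Or.inl rfl))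
  have heac : EdgeG {a, b, c} ∅ a c := (hedge a c).2 (Or.inr (Or.inr rfl))
  have ht := htri a b c hab hbc heab hebc heac
  have ht1 := (abs_sub_le_iff.1 ht.1).1
  have ht2 := (abs_sub_le_iff.1 ht.1).2
  have ht3 := ht.2
  -- the three arcs
  have harc_b : ({b} : Finset ℕ) ∈ arcs {a, b, c} := by
    rw [mem_arcs]
    refine ⟨by intro x hx; rw [Finset.mem_singleton] at hx; subst hx; simp,
      ⟨b, Finset.mem_singleton_self b⟩, ?_, ⟨a, by simp, ?_⟩⟩
    · intro x hx a1 h1 b1 h2 hle1 hle2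
      rw [Finset.mem_singleton] at h1 h2 ⊢
      rw [hmemS] at hx
      omega
    · intro x hx; rw [Finset.mem_singleton] at hx; omega
  have harc_c : ({c} : Finset ℕ) ∈ arcs {a, b, c} := by
    rw [mem_arcs]
    refine ⟨by intro x hx; rw [Finset.mem_singleton] at hx; subst hx; simp,
      ⟨c, Finset.mem_singleton_self c⟩, ?_, ⟨a, by simp, ?_⟩⟩
    · intro x hx a1 h1 b1 h2 hle1 hle2
      rw [Finset.mem_singleton] at h1 h2 ⊢
      rw [hmemS] at hx
      omega
    · intro x hx; rw [Finset.mem_singleton] at hx; omega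
  have harc_bc : ({b, c} : Finset ℕ) ∈ arcs {a, b, c} := by
    rw [mem_arcs]
    refine ⟨by intro x hx; simp at hx ⊢; omega,
      ⟨b, by simp⟩, ?_, ⟨a, by simp, ?_⟩⟩
    · intro x hx a1 h1 b1 h2 hle1 hle2
      simp only [Finset.mem_insert, Finset.mem_singleton] at h1 h2 ⊢
      rw [hmemS] at hx
      omega
    · intro x hx; simp only [Finset.mem_insert, Finset.mem_singleton] at hx; omega
  have hne_bc : ({b} : Finset ℕ) ≠ {c} := by
    intro h
    have := Finset.mem_singleton_self b
    rw [h, Finset.mem_singleton] at this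
    omega
  have hne_bbc : ({b} : Finset ℕ) ≠ {b, c} := by
    intro h
    have : c ∈ ({b, c} : Finset ℕ) := by simp
    rw [← h, Finset.mem_singleton] at this
    omega
  have hne_cbc : ({c} : Finset ℕ) ≠ {b, c} := by
    intro h
    have : b ∈ ({b, c} : Finset ℕ) := by simp
    rw [← h, Finset.mem_singleton] at this
    omega
  refine ⟨fun A => if A = {b} then (u (a, b) + u (b, c) - u (a, c)) / 2
    else if A = {c} then (u (b, c) + u (a, c) - u (a, b)) / 2
    else if A = ({b, c} : Finset ℕ) then (u (a, b) + u (a, c) - u (b, c)) / 2 else 0,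
    ?_, ?_⟩
  · intro A
    dsimp only
    split_ifs <;> linarith
  · have htriple : ({{b}, {c}, {b, c}} : Finset (Finset ℕ)) ⊆ arcs {a, b, c} := by
      intro A hA
      simp only [Finset.mem_insert, Finset.mem_singleton] at hA
      rcases hA with rfl | rfl | rfl
      exacts [harc_b, harc_c, harc_bc]
    have hzero : ∀ A ∈ arcs ({a, b, c} : Finset ℕ),
        A ∉ ({{b}, {c}, {b, c}} : Finset (Finset ℕ)) →
        (if A = {b} then (u (a, b) + u (b, c) - u (a, c)) / 2
          else if A = {c} then (u (b, c) + u (a, c) - u (a, b)) / 2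
          else if A = ({b, c} : Finset ℕ) then (u (a, b) + u (a, c) - u (b, c)) / 2 else 0) •
          cutv {a, b, c} ∅ A = 0 := by
      intro A hA hnA
      simp only [Finset.mem_insert, Finset.mem_singleton, not_or] at hnA
      rw [if_neg hnA.1, if_neg hnA.2.1, if_neg hnA.2.2, zero_smul]
    rw [← Finset.sum_subset htriple hzero]
    rw [Finset.sum_insert (by
        simp only [Finset.mem_insert, Finset.mem_singleton, not_or]
        exact ⟨hne_bc, hne_bbc⟩),
      Finset.sum_insert (by rw [Finset.mem_singleton]; exact hne_cbc),
      Finset.sum_singleton]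
    rw [if_neg (Ne.symm hne_bc), if_neg (Ne.symm hne_bbc), if_neg (Ne.symm hne_cbc)]
    simp only [eq_self_iff_true, if_true]
    funext e
    obtain ⟨x, y⟩ := e
    simp only [Pi.add_apply, Pi.smul_apply, smul_eq_mul]
    have hnab : a ∉ ({b} : Finset ℕ) := by simp; omega
    have hnbb : b ∈ ({b} : Finset ℕ) := by simp
    have hncb : c ∉ ({b} : Finset ℕ) := by simp; omega
    have hnac : a ∉ ({c} : Finset ℕ) := by simp; omega
    have hnbc' : b ∉ ({c} : Finset ℕ) := by simp; omega
    have hncc : c ∈ ({c} : Finset ℕ) := by simp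
    have hnabc : a ∉ ({b, c} : Finset ℕ) := by simp; omega
    have hnbbc : b ∈ ({b, c} : Finset ℕ) := by simp
    have hncbc : c ∈ ({b, c} : Finset ℕ) := by simp
    by_cases he : EdgeG {a, b, c} ∅ x y
    · rcases (hedge x y).1 he with h | h | h <;> rw [Prod.mk.injEq] at h <;>
        obtain ⟨rfl, rfl⟩ := h
      · rw [cutv_one heab (Or.inr ⟨hnab, hnbb⟩), cutv_zero (by tauto),
          cutv_one heab (Or.inr ⟨hnabc, hnbbc⟩)]
        ring_nf
      · rw [cutv_one hebc (Or.inl ⟨hnbb, hncb⟩), cutv_one hebc (Or.inr ⟨hnbc', hncc⟩),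
          cutv_zero (by tauto)]
        ring_nf
      · rw [cutv_zero (by tauto), cutv_one heac (Or.inr ⟨hnac, hncc⟩),
          cutv_one heac (Or.inr ⟨hnabc, hncbc⟩)]
        ring_nf
    · rw [hvan _ he, cutv_zero' he, cutv_zero' he, cutv_zero' he]
      ring

lemma cutv_ite {S D A} {x y : ℕ} (he : EdgeG S D x y) :
    cutv S D A (x, y) = if (x ∈ A ∧ y ∉ A) ∨ (x ∉ A ∧ y ∈ A) then 1 else 0 := by
  by_cases h : (x ∈ A ∧ y ∉ A) ∨ (x ∉ A ∧ y ∈ A)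
  · rw [cutv_one he h, if_pos h]
  · rw [cutv_zero h, if_neg h]

lemma sum_fiber_smul (s T : Finset (Finset ℕ)) (g : Finset ℕ → Finset ℕ)
    (hmaps : ∀ A ∈ s, g A ∈ T) (t : Finset ℕ → ℝ) (v : Finset ℕ → ℕ × ℕ → ℝ) (μ : ℝ) :
    ∑ A ∈ T, (μ * ∑ A' ∈ s.filter (fun A' => g A' = A), t A') • v A
      = μ • ∑ A' ∈ s, t A' • v (g A') := by
  rw [Finset.smul_sum]
  rw [← Finset.sum_fiberwise_of_maps_to hmaps (fun A' => μ • (t A' • v (g A')))]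
  refine Finset.sum_congr rfl fun A hA => ?_
  rw [mul_smul, Finset.sum_smul, Finset.smul_sum]
  refine Finset.sum_congr rfl fun A' hA' => ?_
  rw [(Finset.mem_filter.1 hA').2]

theorem coneRep : ∀ m : ℕ, ∀ S : Finset ℕ, S.card = m → 3 ≤ S.card →
    ∀ D : Finset (ℕ × ℕ), TriG S D →
    ∀ u : ℕ × ℕ → ℝ, (∀ e : ℕ × ℕ, ¬EdgeG S D e.1 e.2 → u e = 0) →
    (∀ x y z : ℕ, x < y → y < z → EdgeG S D x y → EdgeG S D y z → EdgeG S D x z →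
      |u (x, y) - u (y, z)| ≤ u (x, z) ∧ u (x, z) ≤ u (x, y) + u (y, z)) →
    ∃ t : Finset ℕ → ℝ, (∀ A, 0 ≤ t A) ∧ u = ∑ A ∈ arcs S, t A • cutv S D A := by
  intro m
  induction m using Nat.strong_induction_on with
  | _ m IH =>
  rintro S rfl h3 D hT u hvan htri
  by_cases h4 : 4 ≤ S.card
  case neg =>
    obtain ⟨x, y, z, hxy, hxz, hyz, hSxyz⟩ := Finset.card_eq_three.1 (by omega : S.card = 3)
    have hperm : ∀ a b c : ℕ, a < b → b < c → ({a, b, c} : Finset ℕ) = {x, y, z} →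
        ∃ t : Finset ℕ → ℝ, (∀ A, 0 ≤ t A) ∧ u = ∑ A ∈ arcs S, t A • cutv S D A := by
      intro a b c hab hbc hset
      exact coneRep_base hT hab hbc (by rw [hSxyz, ← hset]) u hvan htri
    rcases Nat.lt_trichotomy x y with h1 | h1 | h1
    · rcases Nat.lt_trichotomy y z with h2 | h2 | h2
      · exact hperm x y z h1 h2 rfl
      · omega
      · rcases Nat.lt_trichotomy x z with h5 | h5 | h5
        · exact hperm x z y h5 h2 (by ext w; simp; tauto)
        · omega
        · exact hperm z x y h5 h1 (by ext w; simp; tauto)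
    · omega
    · rcases Nat.lt_trichotomy x z with h2 | h2 | h2
      · exact hperm y x z h1 h2 (by ext w; simp; tauto)
      · omega
      · rcases Nat.lt_trichotomy y z with h5 | h5 | h5
        · exact hperm y z x h5 h2 (by ext w; simp; tauto)
        · omega
        · exact hperm z y x h5 h1 (by ext w; simp; tauto)
  case pos =>
  obtain ⟨p, q, r, hpS, hqS, hrS, hpq, hqr, g1, g2, hprD⟩ := ear_exists _ _ rfl h4 D hT
  have E : EarCtx S D p q r := ⟨hT.2.1, hT.2.2, hpS, hqS, hrS, hpq, hqr, g1, g2, hprD⟩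
  have hT' : TriG (S.erase q) (D.erase (p, r)) := E.triG' hT h4
  have hqS' : q ∉ S.erase q := fun h => (Finset.mem_erase.1 h).1 rfl
  have hcardS' : (S.erase q).card = S.card - 1 := Finset.card_erase_of_mem hqS
  set u' : ℕ × ℕ → ℝ :=
    fun e => if EdgeG (S.erase q) (D.erase (p, r)) e.1 e.2 then u e else 0 with hu'def
  have hvan' : ∀ e : ℕ × ℕ, ¬EdgeG (S.erase q) (D.erase (p, r)) e.1 e.2 → u' e = 0 :=
    fun e he => if_neg he
  have hu'eq : ∀ e : ℕ × ℕ, EdgeG (S.erase q) (D.erase (p, r)) e.1 e.2 → u' e = u e :=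
    fun e he => if_pos he
  have htri' : ∀ x y z : ℕ, x < y → y < z →
      EdgeG (S.erase q) (D.erase (p, r)) x y → EdgeG (S.erase q) (D.erase (p, r)) y z →
      EdgeG (S.erase q) (D.erase (p, r)) x z →
      |u' (x, y) - u' (y, z)| ≤ u' (x, z) ∧ u' (x, z) ≤ u' (x, y) + u' (y, z) := by
    intro x y z h1 h2 e1 e2 e3
    rw [hu'eq (x, y) e1, hu'eq (y, z) e2, hu'eq (x, z) e3]
    exact htri x y z h1 h2 (E.edge'_sub e1) (E.edge'_sub e2) (E.edge'_sub e3)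
  obtain ⟨t, ht0, htu⟩ :=
    IH (S.erase q).card (by omega) (S.erase q) rfl (by omega) (D.erase (p, r)) hT' u' hvan' htri'
  -- ear edge facts
  have hepq : EdgeG S D p q := Or.inl E.side_pq
  have heqr : EdgeG S D q r := Or.inl E.side_qr
  have hepr : EdgeG S D p r := Or.inr hprD
  have hepr' : EdgeG (S.erase q) (D.erase (p, r)) p r := Or.inl E.side'_pr
  obtain ⟨htr1, htr2⟩ := htri p q r hpq hqr hepq heqr hepr
  set X := u (p, q) with hX
  set Y := u (q, r) with hY
  set Z := u (p, r) with hZ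
  have habs1 : X - Y ≤ Z := (abs_sub_le_iff.1 htr1).1
  have habs2 : Y - X ≤ Z := (abs_sub_le_iff.1 htr1).2
  have hZ0 : 0 ≤ Z := le_trans (abs_nonneg _) htr1
  set W : ℝ := (X + Y - Z) / 2 with hWdef
  have hW0 : 0 ≤ W := by rw [hWdef]; linarith
  set μ : ℝ := if Z = 0 then 1 / 2 else (X - Y + Z) / (2 * Z) with hμdef
  have hμ0 : 0 ≤ μ := by
    rw [hμdef]; split_ifs with h
    · norm_num
    · exact div_nonneg (by linarith) (by linarith)
  have hμ1 : μ ≤ 1 := by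
    rw [hμdef]; split_ifs with h
    · norm_num
    · have hZpos : 0 < Z := lt_of_le_of_ne hZ0 (Ne.symm h)
      rw [div_le_one (by positivity)]
      linarith
  -- evaluation of the collapsed sum on edges of the smaller polygon
  have hueval : ∀ x y : ℕ, EdgeG (S.erase q) (D.erase (p, r)) x y →
      ∑ A' ∈ arcs (S.erase q), t A' * cutv (S.erase q) (D.erase (p, r)) A' (x, y)
        = u (x, y) := by
    intro x y he
    have h1 := congrFun htu (x, y)
    rw [hu'eq (x, y) he] at h1
    rw [Finset.sum_apply] at h1
    simp only [Pi.smul_apply, smul_eq_mul] at h1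
    exact h1.symm
  have hq_notin : ∀ A' ∈ arcs (S.erase q), q ∉ A' :=
    fun A' hA' h => hqS' ((mem_arcs.1 hA').1 h)
  -- pointwise comparison lemmas for lifted cut vectors
  have hlift_edge : ∀ (w : ℕ) (A' : Finset ℕ), A' ∈ arcs (S.erase q) → ∀ x y : ℕ,
      EdgeG (S.erase q) (D.erase (p, r)) x y →
      cutv S D (if w ∈ A' then insert q A' else A') (x, y)
        = cutv (S.erase q) (D.erase (p, r)) A' (x, y) := by
    intro w A' hA' x y he
    have hqA' := hq_notin A' hA'
    have hxq := (E.edge'_no_q he).1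
    have hyq := (E.edge'_no_q he).2
    rw [cutv_ite (E.edge'_sub he), cutv_ite he]
    simp only [EarCtx.mem_lift_iff hqA' hxq, EarCtx.mem_lift_iff hqA' hyq]
  have hliftR_pq : ∀ A' ∈ arcs (S.erase q),
      cutv S D (if r ∈ A' then insert q A' else A') (p, q)
        = cutv (S.erase q) (D.erase (p, r)) A' (p, r) := by
    intro A' hA'
    have hqA' := hq_notin A' hA'
    rw [cutv_ite hepq, cutv_ite hepr']
    simp only [EarCtx.mem_lift_iff hqA' (show p ≠ q by omega),
      EarCtx.q_mem_lift_iff hqA']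
  have hliftR_qr : ∀ A' ∈ arcs (S.erase q),
      cutv S D (if r ∈ A' then insert q A' else A') (q, r) = 0 := by
    intro A' hA'
    have hqA' := hq_notin A' hA'
    refine cutv_zero ?_
    simp only [EarCtx.mem_lift_iff hqA' (show r ≠ q by omega),
      EarCtx.q_mem_lift_iff hqA']
    tauto
  have hliftP_pq : ∀ A' ∈ arcs (S.erase q),
      cutv S D (if p ∈ A' then insert q A' else A') (p, q) = 0 := by
    intro A' hA'
    have hqA' := hq_notin A' hA'
    refine cutv_zero ?_
    simp only [EarCtx.mem_lift_iff hqA' (show p ≠ q by omega),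
      EarCtx.q_mem_lift_iff hqA']
    tauto
  have hliftP_qr : ∀ A' ∈ arcs (S.erase q),
      cutv S D (if p ∈ A' then insert q A' else A') (q, r)
        = cutv (S.erase q) (D.erase (p, r)) A' (p, r) := by
    intro A' hA'
    have hqA' := hq_notin A' hA'
    rw [cutv_ite heqr, cutv_ite hepr']
    simp only [EarCtx.mem_lift_iff hqA' (show r ≠ q by omega),
      EarCtx.q_mem_lift_iff hqA']
  -- values of the cut vector of the singleton arc {q}
  have hqv_pq : cutv S D {q} (p, q) = 1 :=
    cutv_one hepq (Or.inr ⟨by rw [Finset.mem_singleton]; omega, Finset.mem_singleton_self q⟩)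
  have hqv_qr : cutv S D {q} (q, r) = 1 :=
    cutv_one heqr (Or.inl ⟨Finset.mem_singleton_self q, by rw [Finset.mem_singleton]; omega⟩)
  have hqv_edge : ∀ x y : ℕ, EdgeG (S.erase q) (D.erase (p, r)) x y →
      cutv S D {q} (x, y) = 0 := by
    intro x y he
    refine cutv_zero ?_
    rw [Finset.mem_singleton, Finset.mem_singleton]
    have hxq := (E.edge'_no_q he).1
    have hyq := (E.edge'_no_q he).2
    tauto
  refine ⟨fun A => (if A = {q} then W else 0)
    + μ * ∑ A' ∈ (arcs (S.erase q)).filter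
        (fun A' => (if r ∈ A' then insert q A' else A') = A), t A'
    + (1 - μ) * ∑ A' ∈ (arcs (S.erase q)).filter
        (fun A' => (if p ∈ A' then insert q A' else A') = A), t A', ?_, ?_⟩
  · intro A
    dsimp only
    have n1 : (0:ℝ) ≤ if A = {q} then W else 0 := by split_ifs <;> [exact hW0; exact le_rfl]
    have n2 : (0:ℝ) ≤ μ * ∑ A' ∈ (arcs (S.erase q)).filter
        (fun A' => (if r ∈ A' then insert q A' else A') = A), t A' :=
      mul_nonneg hμ0 (Finset.sum_nonneg fun A' _ => ht0 A')
    have n3 : (0:ℝ) ≤ (1 - μ) * ∑ A' ∈ (arcs (S.erase q)).filter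
        (fun A' => (if p ∈ A' then insert q A' else A') = A), t A' :=
      mul_nonneg (by linarith) (Finset.sum_nonneg fun A' _ => ht0 A')
    linarith
  · -- the sum splits into three pieces
    have hsplit : ∑ A ∈ arcs S, ((if A = {q} then W else 0)
        + μ * ∑ A' ∈ (arcs (S.erase q)).filter
            (fun A' => (if r ∈ A' then insert q A' else A') = A), t A'
        + (1 - μ) * ∑ A' ∈ (arcs (S.erase q)).filter
            (fun A' => (if p ∈ A' then insert q A' else A') = A), t A') • cutv S D A
        = W • cutv S D {q}
          + μ • ∑ A' ∈ arcs (S.erase q),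
              t A' • cutv S D (if r ∈ A' then insert q A' else A')
          + (1 - μ) • ∑ A' ∈ arcs (S.erase q),
              t A' • cutv S D (if p ∈ A' then insert q A' else A') := by
      have e1 : ∀ A ∈ arcs S, ((if A = {q} then W else 0)
          + μ * ∑ A' ∈ (arcs (S.erase q)).filter
              (fun A' => (if r ∈ A' then insert q A' else A') = A), t A'
          + (1 - μ) * ∑ A' ∈ (arcs (S.erase q)).filter
              (fun A' => (if p ∈ A' then insert q A' else A') = A), t A') • cutv S D A
          = (if A = {q} then W • cutv S D A else 0)
            + (μ * ∑ A' ∈ (arcs (S.erase q)).filter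
                (fun A' => (if r ∈ A' then insert q A' else A') = A), t A') • cutv S D A
            + ((1 - μ) * ∑ A' ∈ (arcs (S.erase q)).filter
                (fun A' => (if p ∈ A' then insert q A' else A') = A), t A') • cutv S D A := by
        intro A _
        rw [add_smul, add_smul, ite_smul, zero_smul]
      rw [Finset.sum_congr rfl e1, Finset.sum_add_distrib, Finset.sum_add_distrib]
      rw [Finset.sum_ite_eq' (arcs S) ({q} : Finset ℕ) (fun A => W • cutv S D A),
        if_pos E.singleton_arc]
      rw [sum_fiber_smul _ _ _ (fun A' hA' => E.lift_arc_r hA') t (cutv S D) μ,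
        sum_fiber_smul _ _ _ (fun A' hA' => E.lift_arc_p hA') t (cutv S D) (1 - μ)]
    rw [hsplit]
    -- now prove the pointwise identity
    funext e
    obtain ⟨x, y⟩ := e
    simp only [Pi.add_apply, Pi.smul_apply, Finset.sum_apply, smul_eq_mul]
    by_cases he : EdgeG S D x y
    · rcases E.edge_classify he with hc | hc | hc
      · rw [hc]
        have hR : ∑ A' ∈ arcs (S.erase q),
            t A' * cutv S D (if r ∈ A' then insert q A' else A') (p, q) = Z := by
          rw [Finset.sum_congr rfl (fun A' hA' => by rw [hliftR_pq A' hA'])]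
          exact hueval p r hepr'
        have hP : ∑ A' ∈ arcs (S.erase q),
            t A' * cutv S D (if p ∈ A' then insert q A' else A') (p, q) = 0 := by
          rw [Finset.sum_congr rfl (fun A' hA' => by rw [hliftP_pq A' hA', mul_zero])]
          exact Finset.sum_const_zero
        rw [hR, hP, hqv_pq, mul_zero, add_zero, mul_one]
        rw [hμdef, hWdef]
        split_ifs with h
        · have hXY : X = Y := by
            have := abs_nonneg (X - Y)
            have h2 : |X - Y| = 0 := le_antisymm (h ▸ htr1) this
            have := abs_eq_zero.1 h2
            linarith
          rw [h]
          linarith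
        · field_simp
          ring
      · rw [hc]
        have hR : ∑ A' ∈ arcs (S.erase q),
            t A' * cutv S D (if r ∈ A' then insert q A' else A') (q, r) = 0 := by
          rw [Finset.sum_congr rfl (fun A' hA' => by rw [hliftR_qr A' hA', mul_zero])]
          exact Finset.sum_const_zero
        have hP : ∑ A' ∈ arcs (S.erase q),
            t A' * cutv S D (if p ∈ A' then insert q A' else A') (q, r) = Z := by
          rw [Finset.sum_congr rfl (fun A' hA' => by rw [hliftP_qr A' hA'])]
          exact hueval p r hepr'
        rw [hR, hP, hqv_qr, mul_zero, add_zero, mul_one]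
        rw [hμdef, hWdef]
        split_ifs with h
        · have hXY : X = Y := by
            have := abs_nonneg (X - Y)
            have h2 : |X - Y| = 0 := le_antisymm (h ▸ htr1) this
            have := abs_eq_zero.1 h2
            linarith
          rw [h]
          linarith
        · field_simp
          ring
      · -- an edge of the smaller polygon
        have hR : ∑ A' ∈ arcs (S.erase q),
            t A' * cutv S D (if r ∈ A' then insert q A' else A') (x, y)
            = u (x, y) := by
          rw [Finset.sum_congr rfl (fun A' hA' => by rw [hlift_edge r A' hA' x y hc])]
          exact hueval x y hc
        have hP : ∑ A' ∈ arcs (S.erase q),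
            t A' * cutv S D (if p ∈ A' then insert q A' else A') (x, y)
            = u (x, y) := by
          rw [Finset.sum_congr rfl (fun A' hA' => by rw [hlift_edge p A' hA' x y hc])]
          exact hueval x y hc
        rw [hR, hP, hqv_edge x y hc, mul_zero]
        ring
    · have hR : ∑ A' ∈ arcs (S.erase q),
          t A' * cutv S D (if r ∈ A' then insert q A' else A') (x, y) = 0 := by
        rw [Finset.sum_congr rfl (fun A' hA' => by rw [cutv_zero' he, mul_zero])]
        exact Finset.sum_const_zero
      have hP : ∑ A' ∈ arcs (S.erase q),
          t A' * cutv S D (if p ∈ A' then insert q A' else A') (x, y) = 0 := by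
        rw [Finset.sum_congr rfl (fun A' hA' => by rw [cutv_zero' he, mul_zero])]
        exact Finset.sum_const_zero
      rw [hR, hP, cutv_zero' he, hvan _ he]
      ring

-- translation between the concrete and generalized notions
lemma sideG_range_iff {n p q : ℕ} (hn : 1 ≤ n) :
    SideG (Finset.range n) p q ↔ IsSide n p q := by
  unfold SideG IsSide
  simp only [Finset.mem_range]
  constructor
  · rintro ⟨h1, h2, h3, h4 | h4⟩
    · refine ⟨h1, h3, Or.inl ?_⟩
      by_contra hne
      exact h4 (p + 1) (by omega) (by omega)
    · refine ⟨h1, h3, Or.inr ⟨?_, ?_⟩⟩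
      · have := h4 0 (by omega); omega
      · have := h4 (n - 1) (by omega); omega
  · rintro ⟨h1, h2, h3 | h3⟩
    · exact ⟨h1, by omega, h2, Or.inl (fun x hx => by omega)⟩
    · exact ⟨h1, by omega, h2, Or.inr (fun x hx => by omega)⟩

lemma edgeG_range_iff {n : ℕ} {D : Finset (ℕ × ℕ)} {p q : ℕ} (hn : 1 ≤ n) :
    EdgeG (Finset.range n) D p q ↔ IsEdge n D p q :=
  or_congr (sideG_range_iff hn) Iff.rfl

lemma triG_range {n : ℕ} {D : Finset (ℕ × ℕ)} (hn : 3 ≤ n) (hD : IsTriangulation n D) :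
    TriG (Finset.range n) D := by
  refine ⟨by rw [Finset.card_range]; exact hD.1, ?_, hD.2.2⟩
  intro d hd
  obtain ⟨h1, h2, h3⟩ := hD.2.1 d hd
  refine ⟨h1, by simp; omega, by simp; omega, ?_⟩
  intro hside
  exact h3 (((sideG_range_iff (by omega)).1 hside).2.2)

lemma fixedPoint_eval {n : ℕ} {D : Finset (ℕ × ℕ)} {c : ℝ} {k l x y : ℕ}
    (he : IsEdge n D x y) :
    fixedPoint n D c k l (x, y) =
      if (k ∈ edgeIndexSet (x, y) ∧ l ∉ edgeIndexSet (x, y)) ∨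
          (k ∉ edgeIndexSet (x, y) ∧ l ∈ edgeIndexSet (x, y)) then c / 2 else 0 := by
  unfold fixedPoint
  by_cases h : (k ∈ edgeIndexSet (x, y) ∧ l ∉ edgeIndexSet (x, y)) ∨
      (k ∉ edgeIndexSet (x, y) ∧ l ∈ edgeIndexSet (x, y))
  · rw [if_pos ⟨he, h⟩, if_pos h]
  · rw [if_neg (fun hc => h hc.2), if_neg h]

lemma fixedPoint_nonedge {n : ℕ} {D : Finset (ℕ × ℕ)} {c : ℝ} {k l : ℕ} {e : ℕ × ℕ}
    (he : ¬IsEdge n D e.1 e.2) : fixedPoint n D c k l e = 0 := by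
  unfold fixedPoint
  exact if_neg (fun hc => he hc.1)

lemma tri_ineq_vals (h : ℝ) (hh : 0 ≤ h) (a1 a2 b1 b2 : Prop)
    [Decidable a1] [Decidable a2] [Decidable b1] [Decidable b2]
    (ha : ¬(a1 ∧ a2)) (hb : ¬(b1 ∧ b2)) :
    |(if (a1 ∧ ¬b1) ∨ (¬a1 ∧ b1) then h else 0) -
        (if (a2 ∧ ¬b2) ∨ (¬a2 ∧ b2) then h else 0)| ≤
      (if ((a1 ∨ a2) ∧ ¬(b1 ∨ b2)) ∨ (¬(a1 ∨ a2) ∧ (b1 ∨ b2)) then h else 0) ∧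
    (if ((a1 ∨ a2) ∧ ¬(b1 ∨ b2)) ∨ (¬(a1 ∨ a2) ∧ (b1 ∨ b2)) then h else 0) ≤
      (if (a1 ∧ ¬b1) ∨ (¬a1 ∧ b1) then h else 0) +
        (if (a2 ∧ ¬b2) ∨ (¬a2 ∧ b2) then h else 0) := by
  constructor
  · rw [abs_sub_le_iff]
    constructor <;> split_ifs <;> first | linarith | tauto
  · split_ifs <;> first | linarith | tauto

lemma fixedPoint_mem {n : ℕ} {D : Finset (ℕ × ℕ)} {c : ℝ} {k l : ℕ}
    (hn : 3 ≤ n) (hD : IsTriangulation n D) (hc : 0 < c)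
    (hk : 1 ≤ k) (hkl : k < l) (hl : l ≤ n) :
    fixedPoint n D c k l ∈ MomentPolytope n D c := by
  refine ⟨fun a ha => fixedPoint_nonedge ha, ?_, ?_⟩
  · intro x y z ⟨hxy, hyz, e1, e2, e3⟩
    rw [fixedPoint_eval e1, fixedPoint_eval e2, fixedPoint_eval e3]
    have hiffk : (k ∈ edgeIndexSet (x, z)) ↔
        (k ∈ edgeIndexSet (x, y) ∨ k ∈ edgeIndexSet (y, z)) := by
      simp only [edgeIndexSet, Finset.mem_Icc]
      omega
    have hiffl : (l ∈ edgeIndexSet (x, z)) ↔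
        (l ∈ edgeIndexSet (x, y) ∨ l ∈ edgeIndexSet (y, z)) := by
      simp only [edgeIndexSet, Finset.mem_Icc]
      omega
    simp only [hiffk, hiffl]
    refine tri_ineq_vals (c / 2) (by linarith) _ _ _ _ ?_ ?_
    · simp only [edgeIndexSet, Finset.mem_Icc]
      omega
    · simp only [edgeIndexSet, Finset.mem_Icc]
      omega
  · have hside : ∀ i ∈ Finset.range (n - 1), fixedPoint n D c k l (i, i + 1)
        = (if i + 1 = k then c / 2 else 0) + (if i + 1 = l then c / 2 else 0) := by
      intro i hi
      rw [Finset.mem_range] at hi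
      have he : IsEdge n D i (i + 1) := Or.inl ⟨by omega, by omega, Or.inl rfl⟩
      rw [fixedPoint_eval he]
      have hIk : k ∈ edgeIndexSet (i, i + 1) ↔ i + 1 = k := by
        simp only [edgeIndexSet, Finset.mem_Icc]; omega
      have hIl : l ∈ edgeIndexSet (i, i + 1) ↔ i + 1 = l := by
        simp only [edgeIndexSet, Finset.mem_Icc]; omega
      simp only [hIk, hIl]
      by_cases h1 : i + 1 = k <;> by_cases h2 : i + 1 = l
      · exfalso; omega
      · simp [h1, h2, hkl.ne, hkl.ne']
      · simp [h1, h2, hkl.ne, hkl.ne']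
      · simp [h1, h2, hkl.ne, hkl.ne']
    rw [Finset.sum_congr rfl hside, Finset.sum_add_distrib]
    have hk_sum : ∑ i ∈ Finset.range (n - 1), (if i + 1 = k then c / 2 else 0) = c / 2 := by
      rw [Finset.sum_congr rfl (fun i _ => if_congr (show i + 1 = k ↔ i = k - 1 by omega)
        rfl rfl)]
      rw [Finset.sum_ite_eq' (Finset.range (n - 1)) (k - 1) (fun _ => c / 2)]
      rw [if_pos (Finset.mem_range.2 (by omega))]
    have hl_sum : ∑ i ∈ Finset.range (n - 1), (if i + 1 = l then c / 2 else 0)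
        = if l ≤ n - 1 then c / 2 else 0 := by
      rw [Finset.sum_congr rfl (fun i _ => if_congr (show i + 1 = l ↔ i = l - 1 by omega)
        rfl rfl)]
      rw [Finset.sum_ite_eq' (Finset.range (n - 1)) (l - 1) (fun _ => c / 2)]
      by_cases h : l ≤ n - 1
      · rw [if_pos (Finset.mem_range.2 (by omega)), if_pos h]
      · rw [if_neg (by rw [Finset.mem_range]; omega), if_neg h]
    have hwrap : fixedPoint n D c k l (0, n - 1) = if l ≤ n - 1 then 0 else c / 2 := by
      have he : IsEdge n D 0 (n - 1) := Or.inl ⟨by omega, by omega, Or.inr ⟨rfl, rfl⟩⟩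
      rw [fixedPoint_eval he]
      have hIk : k ∈ edgeIndexSet (0, n - 1) ↔ True := by
        simp only [edgeIndexSet, Finset.mem_Icc, iff_true]; omega
      have hIl : l ∈ edgeIndexSet (0, n - 1) ↔ l ≤ n - 1 := by
        simp only [edgeIndexSet, Finset.mem_Icc]; omega
      simp only [hIk, hIl, iff_true]
      by_cases h : l ≤ n - 1
      · rw [if_neg (by tauto), if_pos h]
      · rw [if_pos (by tauto), if_neg h]
    rw [hk_sum, hl_sum, hwrap]
    by_cases h : l ≤ n - 1 <;> simp [h] <;> ring

lemma momentPolytope_convex (n : ℕ) (D : Finset (ℕ × ℕ)) (c : ℝ) :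
    Convex ℝ (MomentPolytope n D c) := by
  rintro u hu v hv a b ha hb hab
  obtain ⟨hu1, hu2, hu3⟩ := hu
  obtain ⟨hv1, hv2, hv3⟩ := hv
  refine ⟨?_, ?_, ?_⟩
  · intro e he
    simp only [Pi.add_apply, Pi.smul_apply, smul_eq_mul, hu1 e he, hv1 e he]
    ring
  · intro x y z ht
    obtain ⟨hA1, hA2⟩ := hu2 x y z ht
    obtain ⟨hB1, hB2⟩ := hv2 x y z ht
    obtain ⟨hA11, hA12⟩ := abs_sub_le_iff.1 hA1
    obtain ⟨hB11, hB12⟩ := abs_sub_le_iff.1 hB1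
    simp only [Pi.add_apply, Pi.smul_apply, smul_eq_mul]
    constructor
    · rw [abs_sub_le_iff]
      constructor <;> nlinarith
    · nlinarith
  · simp only [Pi.add_apply, Pi.smul_apply, smul_eq_mul]
    rw [Finset.sum_add_distrib, ← Finset.mul_sum, ← Finset.mul_sum]
    calc a * (∑ i ∈ Finset.range (n - 1), u (i, i + 1)) +
          b * (∑ i ∈ Finset.range (n - 1), v (i, i + 1)) +
          (a * u (0, n - 1) + b * v (0, n - 1))
        = a * ((∑ i ∈ Finset.range (n - 1), u (i, i + 1)) + u (0, n - 1)) +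
          b * ((∑ i ∈ Finset.range (n - 1), v (i, i + 1)) + v (0, n - 1)) := by ring
      _ = a * c + b * c := by rw [hu3, hv3]
      _ = c := by rw [← add_mul, hab, one_mul]

lemma arc_fixedPoint {n : ℕ} {D : Finset (ℕ × ℕ)} {c : ℝ} (hn : 3 ≤ n)
    (hD : IsTriangulation n D)
    {A : Finset ℕ} (hA : A ∈ arcs (Finset.range n)) :
    ∃ k l : ℕ, 1 ≤ k ∧ k < l ∧ l ≤ n ∧
      (c / 2) • cutv (Finset.range n) D A = fixedPoint n D c k l := by
  obtain ⟨hsub, hne, hconv, s₀, hs₀S, hs₀lt⟩ := mem_arcs.1 hA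
  set k := A.min' hne with hk
  set L := A.max' hne with hL
  have hkA : k ∈ A := A.min'_mem hne
  have hLA : L ∈ A := A.max'_mem hne
  have hk1 : 1 ≤ k := by
    have h1 := hs₀lt k hkA
    omega
  have hLn : L < n := Finset.mem_range.1 (hsub hLA)
  have hkL : k ≤ L := Finset.min'_le _ _ hLA
  have hmem : ∀ x, x ∈ A ↔ (x < n ∧ k ≤ x ∧ x ≤ L) := by
    intro x
    constructor
    · intro hx
      exact ⟨Finset.mem_range.1 (hsub hx), Finset.min'_le _ _ hx, Finset.le_max' _ _ hx⟩
    · rintro ⟨h1, h2, h3⟩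
      exact hconv x (Finset.mem_range.2 h1) k hkA L hLA h2 h3
  refine ⟨k, L + 1, hk1, by omega, by omega, ?_⟩
  funext e
  obtain ⟨x, y⟩ := e
  simp only [Pi.smul_apply, smul_eq_mul]
  by_cases he : EdgeG (Finset.range n) D x y
  · obtain ⟨hxy, hxS, hyS⟩ := edgeG_spec (triG_range hn hD).2.1 he
    rw [Finset.mem_range] at hxS hyS
    rw [cutv_ite he, fixedPoint_eval ((edgeG_range_iff (by omega)).1 he)]
    rw [mul_ite, mul_one, mul_zero]
    refine if_congr ?_ rfl rfl
    rw [hmem x, hmem y]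
    simp only [edgeIndexSet, Finset.mem_Icc]
    omega
  · rw [cutv_zero' he, mul_zero,
      fixedPoint_nonedge (fun h => he ((edgeG_range_iff (by omega)).2 h))]

lemma subset_hull {n : ℕ} {D : Finset (ℕ × ℕ)} {c : ℝ} (hn : 3 ≤ n)
    (hD : IsTriangulation n D) (hc : 0 < c) :
    MomentPolytope n D c ⊆ convexHull ℝ
      {v | ∃ k l : ℕ, 1 ≤ k ∧ k < l ∧ l ≤ n ∧ v = fixedPoint n D c k l} := by
  intro u hu
  obtain ⟨hvan, htri, hper⟩ := hu
  have hTG : TriG (Finset.range n) D := triG_range hn hD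
  have hcard : (Finset.range n).card = n := Finset.card_range n
  obtain ⟨t, ht0, htu⟩ := coneRep (Finset.range n).card (Finset.range n) rfl (by omega) D hTG u
    (fun e he => hvan e (fun h => he ((edgeG_range_iff (by omega)).2 h)))
    (fun x y z h1 h2 e1 e2 e3 => htri x y z ⟨h1, h2, (edgeG_range_iff (by omega)).1 e1,
      (edgeG_range_iff (by omega)).1 e2, (edgeG_range_iff (by omega)).1 e3⟩)
  set Per : (ℕ × ℕ → ℝ) → ℝ :=
    fun w => (∑ i ∈ Finset.range (n - 1), w (i, i + 1)) + w (0, n - 1) with hPerdef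
  have hPer_u : Per u = c := hper
  have hPer_sum : Per (∑ A ∈ arcs (Finset.range n), t A • cutv (Finset.range n) D A)
      = ∑ A ∈ arcs (Finset.range n), t A * Per (cutv (Finset.range n) D A) := by
    rw [hPerdef]
    simp only [Finset.sum_apply, Pi.smul_apply, smul_eq_mul]
    rw [Finset.sum_comm, ← Finset.sum_add_distrib]
    refine Finset.sum_congr rfl fun A hA => ?_
    rw [mul_add, Finset.mul_sum]
  have hPer_cut : ∀ A ∈ arcs (Finset.range n), Per (cutv (Finset.range n) D A) = 2 := by
    intro A hA
    obtain ⟨k, l, hk, hkl, hl, hfp⟩ := arc_fixedPoint hn hD (c := c) hA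
    have h1 : Per (fixedPoint n D c k l) = c := (fixedPoint_mem hn hD hc hk hkl hl).2.2
    rw [← hfp] at h1
    have h2 : Per ((c / 2) • cutv (Finset.range n) D A)
        = (c / 2) * Per (cutv (Finset.range n) D A) := by
      rw [hPerdef]
      simp only [Pi.smul_apply, smul_eq_mul]
      rw [mul_add, Finset.mul_sum]
    rw [h2] at h1
    exact mul_left_cancel₀ (show (c : ℝ) / 2 ≠ 0 by positivity) (by rw [h1]; ring)
  have hsum_t : (∑ A ∈ arcs (Finset.range n), t A) * 2 = c := by
    rw [← hPer_u, htu, hPer_sum, Finset.sum_mul]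
    exact Finset.sum_congr rfl fun A hA => by rw [hPer_cut A hA]
  have hw1 : ∑ A ∈ arcs (Finset.range n), t A * (2 / c) = 1 := by
    rw [← Finset.sum_mul]
    field_simp
    linarith
  have hmemV : ∀ A ∈ arcs (Finset.range n), (c / 2) • cutv (Finset.range n) D A ∈
      {v | ∃ k l : ℕ, 1 ≤ k ∧ k < l ∧ l ≤ n ∧ v = fixedPoint n D c k l} := by
    intro A hA
    obtain ⟨k, l, h1, h2, h3, hfp⟩ := arc_fixedPoint hn hD (c := c) hA
    exact ⟨k, l, h1, h2, h3, hfp⟩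
  have hcm := Finset.centerMass_mem_convexHull (arcs (Finset.range n))
    (w := fun A => t A * (2 / c)) (fun A _ => mul_nonneg (ht0 A) (by positivity))
    (by rw [hw1]; norm_num) hmemV
  rw [Finset.centerMass_eq_of_sum_1 _ _ hw1] at hcm
  have hfin : ∑ A ∈ arcs (Finset.range n),
      (t A * (2 / c)) • ((c / 2) • cutv (Finset.range n) D A)
      = ∑ A ∈ arcs (Finset.range n), t A • cutv (Finset.range n) D A := by
    refine Finset.sum_congr rfl fun A hA => ?_
    rw [smul_smul]
    congr 1
    field_simp
  rw [hfin, ← htu] at hcm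
  exact hcm

lemma ite_eq_ite_iff_prop {c : ℝ} (hc : c ≠ 0) {P Q : Prop} [Decidable P] [Decidable Q]
    (h : (if P then c else 0) = (if Q then c else 0)) : P ↔ Q := by
  by_cases hP : P <;> by_cases hQ : Q
  · exact iff_of_true hP hQ
  · rw [if_pos hP, if_neg hQ] at h; exact absurd h hc
  · rw [if_neg hP, if_pos hQ] at h; exact absurd h.symm hc
  · exact iff_of_false hP hQ

lemma fixedPoint_side_eval {n : ℕ} {D : Finset (ℕ × ℕ)} {c : ℝ} {k l : ℕ}
    (hn : 3 ≤ n) (hk : 1 ≤ k) (hkl : k < l) (hl : l ≤ n) {i : ℕ} (hi1 : 1 ≤ i)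
    (hi2 : i ≤ n - 1) :
    fixedPoint n D c k l (i - 1, i) = if i = k ∨ i = l then c / 2 else 0 := by
  have he : IsEdge n D (i - 1) i := Or.inl ⟨by omega, by omega, Or.inl (by omega)⟩
  rw [fixedPoint_eval he]
  refine if_congr ?_ rfl rfl
  simp only [edgeIndexSet, Finset.mem_Icc]
  omega

lemma fixedPoint_wrap_eval {n : ℕ} {D : Finset (ℕ × ℕ)} {c : ℝ} {k l : ℕ}
    (hn : 3 ≤ n) (hk : 1 ≤ k) (hkl : k < l) (hl : l ≤ n) :
    fixedPoint n D c k l (0, n - 1) = if l = n then c / 2 else 0 := by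
  have he : IsEdge n D 0 (n - 1) := Or.inl ⟨by omega, by omega, Or.inr ⟨rfl, rfl⟩⟩
  rw [fixedPoint_eval he]
  refine if_congr ?_ rfl rfl
  simp only [edgeIndexSet, Finset.mem_Icc]
  omega

lemma fixedPoint_inj {n : ℕ} {D : Finset (ℕ × ℕ)} {c : ℝ} (hn : 3 ≤ n) (hc : 0 < c) :
    ∀ k l k' l' : ℕ, 1 ≤ k → k < l → l ≤ n → 1 ≤ k' → k' < l' → l' ≤ n →
      fixedPoint n D c k l = fixedPoint n D c k' l' → k = k' ∧ l = l' := by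
  intro k l k' l' hk hkl hl hk' hkl' hl' heq
  have hc2 : (c : ℝ) / 2 ≠ 0 := by positivity
  have hwrap : (l = n) ↔ (l' = n) := by
    have h := congrFun heq (0, n - 1)
    rw [fixedPoint_wrap_eval hn hk hkl hl, fixedPoint_wrap_eval hn hk' hkl' hl'] at h
    exact ite_eq_ite_iff_prop hc2 h
  have hside : ∀ i, 1 ≤ i → i ≤ n - 1 → ((i = k ∨ i = l) ↔ (i = k' ∨ i = l')) := by
    intro i h1 h2
    have h := congrFun heq (i - 1, i)
    rw [fixedPoint_side_eval hn hk hkl hl h1 h2,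
      fixedPoint_side_eval hn hk' hkl' hl' h1 h2] at h
    exact ite_eq_ite_iff_prop hc2 h
  by_cases hln : l = n
  · have hln' : l' = n := hwrap.1 hln
    have h1 := (hside k (by omega) (by omega)).1 (Or.inl rfl)
    omega
  · have hln' : ¬(l' = n) := fun h => hln (hwrap.2 h)
    have h1 := (hside k (by omega) (by omega)).1 (Or.inl rfl)
    have h2 := (hside l (by omega) (by omega)).1 (Or.inr rfl)
    have h3 := (hside k' (by omega) (by omega)).2 (Or.inl rfl)
    have h4 := (hside l' (by omega) (by omega)).2 (Or.inr rfl)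
    omega

lemma polytope_eq_hull {n : ℕ} {D : Finset (ℕ × ℕ)} {c : ℝ} (hn : 3 ≤ n)
    (hD : IsTriangulation n D) (hc : 0 < c) :
    MomentPolytope n D c = convexHull ℝ
      {v | ∃ k l : ℕ, 1 ≤ k ∧ k < l ∧ l ≤ n ∧ v = fixedPoint n D c k l} :=
  Set.Subset.antisymm (subset_hull hn hD hc)
    (convexHull_min
      (by rintro v ⟨k, l, h1, h2, h3, rfl⟩; exact fixedPoint_mem hn hD hc h1 h2 h3)
      (momentPolytope_convex n D c))

section Extreme

variable {n : ℕ} {D : Finset (ℕ × ℕ)} {c : ℝ}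

lemma edge_mem_EF (hD : IsTriangulation n D) {e : ℕ × ℕ} (he : IsEdge n D e.1 e.2) :
    e ∈ (Finset.range n ×ˢ Finset.range n).filter (fun e => IsEdge n D e.1 e.2) := by
  have hb : e.1 < e.2 ∧ e.2 < n := by
    rcases he with ⟨h1, h2, -⟩ | hd
    · exact ⟨h1, h2⟩
    · have := hD.2.1 e hd
      exact ⟨this.1, this.2.1⟩
  rw [Finset.mem_filter, Finset.mem_product, Finset.mem_range, Finset.mem_range]
  exact ⟨⟨by omega, by omega⟩, he⟩

lemma fixedPoint_extreme (hn : 3 ≤ n) (hD : IsTriangulation n D) (hc : 0 < c)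
    {k l : ℕ} (hk : 1 ≤ k) (hkl : k < l) (hl : l ≤ n) :
    fixedPoint n D c k l ∈ Set.extremePoints ℝ (MomentPolytope n D c) := by
  set V : Set (ℕ × ℕ → ℝ) :=
    {v | ∃ k l : ℕ, 1 ≤ k ∧ k < l ∧ l ≤ n ∧ v = fixedPoint n D c k l} with hV
  have heqΔ : MomentPolytope n D c = convexHull ℝ V := polytope_eq_hull hn hD hc
  set EF : Finset (ℕ × ℕ) :=
    (Finset.range n ×ˢ Finset.range n).filter (fun e => IsEdge n D e.1 e.2) with hEF
  have hEFedge : ∀ e ∈ EF, IsEdge n D e.1 e.2 := fun e he => (Finset.mem_filter.1 he).2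
  set cnd : ℕ → ℕ → ℕ × ℕ → Prop := fun k0 l0 e =>
    (k0 ∈ edgeIndexSet e ∧ l0 ∉ edgeIndexSet e) ∨
      (k0 ∉ edgeIndexSet e ∧ l0 ∈ edgeIndexSet e) with hcnd
  set φ : (ℕ × ℕ → ℝ) → ℝ :=
    fun w => ∑ e ∈ EF, (if cnd k l e then (1 : ℝ) else -1) * w e with hφ
  have hterm : ∀ (k0 l0 : ℕ) (e : ℕ × ℕ), e ∈ EF →
      fixedPoint n D c k0 l0 e = if cnd k0 l0 e then c / 2 else 0 := by
    intro k0 l0 e he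
    obtain ⟨x, y⟩ := e
    exact fixedPoint_eval (hEFedge _ he)
  have hfpval : ∀ (k0 l0 : ℕ) (e : ℕ × ℕ), fixedPoint n D c k0 l0 e ≠ 0 → e ∈ EF := by
    intro k0 l0 e hne
    by_contra hmem
    exact hne (fixedPoint_nonedge (fun h => hmem (edge_mem_EF hD h)))
  -- strict maximality of φ at the chosen fixed point
  have hmax : ∀ v ∈ V, v ≠ fixedPoint n D c k l → φ v < φ (fixedPoint n D c k l) := by
    rintro v ⟨k', l', hk', hkl', hl', rfl⟩ hne
    rw [hφ]
    refine Finset.sum_lt_sum ?_ ?_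
    · intro e he
      rw [hterm k l e he, hterm k' l' e he]
      by_cases h1 : cnd k l e <;> by_cases h2 : cnd k' l' e <;>
        simp [h1, h2] <;> linarith
    · have hex : ∃ e : ℕ × ℕ, fixedPoint n D c k' l' e ≠ fixedPoint n D c k l e := by
        by_contra hcon
        push_neg at hcon
        exact hne (funext hcon)
      obtain ⟨e, hediff⟩ := hex
      have heEF : e ∈ EF := by
        rcases eq_or_ne (fixedPoint n D c k' l' e) 0 with h | h
        · refine hfpval k l e ?_
          intro h2
          exact hediff (by rw [h, h2])
        · exact hfpval k' l' e h
      refine ⟨e, heEF, ?_⟩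
      rw [hterm k l e heEF, hterm k' l' e heEF]
      rw [hterm k l e heEF, hterm k' l' e heEF] at hediff
      by_cases h1 : cnd k l e <;> by_cases h2 : cnd k' l' e <;>
        simp [h1, h2] at hediff ⊢ <;> linarith
  have hcomb : ∀ (a b : ℝ) (u v : ℕ × ℕ → ℝ), φ (a • u + b • v) = a * φ u + b * φ v := by
    intro a b u v
    rw [hφ]
    simp only [Pi.add_apply, Pi.smul_apply, smul_eq_mul]
    rw [Finset.mul_sum, Finset.mul_sum, ← Finset.sum_add_distrib]
    exact Finset.sum_congr rfl fun e _ => by ring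
  have hhull_le : ∀ x ∈ convexHull ℝ V, φ x ≤ φ (fixedPoint n D c k l) := by
    have hconv : Convex ℝ {x : ℕ × ℕ → ℝ | φ x ≤ φ (fixedPoint n D c k l)} := by
      rintro u hu v hv a b ha hb hab
      simp only [Set.mem_setOf_eq] at hu hv ⊢
      rw [hcomb]
      have h1 := mul_le_mul_of_nonneg_left hu ha
      have h2 := mul_le_mul_of_nonneg_left hv hb
      have h3 : a * φ (fixedPoint n D c k l) + b * φ (fixedPoint n D c k l)
          = φ (fixedPoint n D c k l) := by rw [← add_mul, hab, one_mul]
      linarith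
    have hsub : V ⊆ {x : ℕ × ℕ → ℝ | φ x ≤ φ (fixedPoint n D c k l)} := by
      intro v hv
      simp only [Set.mem_setOf_eq]
      rcases eq_or_ne v (fixedPoint n D c k l) with rfl | hne
      · exact le_rfl
      · exact le_of_lt (hmax v hv hne)
    exact fun x hx => convexHull_min hsub hconv hx
  -- the finite set of vertices
  set VF : Finset (ℕ × ℕ → ℝ) :=
    ((Finset.Icc 1 n ×ˢ Finset.Icc 1 n).filter (fun kl => kl.1 < kl.2)).image
      (fun kl => fixedPoint n D c kl.1 kl.2) with hVFdef
  have hVF : (VF : Set (ℕ × ℕ → ℝ)) = V := by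
    ext v
    simp only [hVFdef, Finset.coe_image, Set.mem_image, Finset.mem_coe, Finset.mem_filter,
      Finset.mem_product, Finset.mem_Icc, hV, Set.mem_setOf_eq]
    constructor
    · rintro ⟨⟨k0, l0⟩, ⟨⟨⟨h1, h2⟩, h3, h4⟩, h5⟩, rfl⟩
      exact ⟨k0, l0, h1, h5, h4, rfl⟩
    · rintro ⟨k0, l0, h1, h2, h3, rfl⟩
      exact ⟨(k0, l0), ⟨⟨⟨h1, by omega⟩, by omega, h3⟩, h2⟩, rfl⟩
  have hsumφ : ∀ μ : (ℕ × ℕ → ℝ) → ℝ,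
      φ (∑ w ∈ VF, μ w • w) = ∑ w ∈ VF, μ w * φ w := by
    intro μ
    rw [hφ]
    simp only [Finset.sum_apply, Pi.smul_apply, smul_eq_mul]
    have h1 : ∀ e ∈ EF, (if cnd k l e then (1 : ℝ) else -1) * (∑ w ∈ VF, μ w * w e)
        = ∑ w ∈ VF, μ w * ((if cnd k l e then (1 : ℝ) else -1) * w e) := by
      intro e _
      rw [Finset.mul_sum]
      exact Finset.sum_congr rfl fun w _ => by ring
    rw [Finset.sum_congr rfl h1, Finset.sum_comm]
    exact Finset.sum_congr rfl fun w _ => (Finset.mul_sum _ _ _).symm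
  have hfpV : fixedPoint n D c k l ∈ V := ⟨k, l, hk, hkl, hl, rfl⟩
  have hfpVF : fixedPoint n D c k l ∈ VF := by
    rw [← Finset.mem_coe, hVF]
    exact hfpV
  -- points of the hull where φ attains its maximum must be the fixed point itself
  have hface : ∀ x ∈ convexHull ℝ V, φ x = φ (fixedPoint n D c k l) →
      x = fixedPoint n D c k l := by
    intro x hx hφx
    rw [← hVF, Finset.convexHull_eq] at hx
    obtain ⟨μ, hμ0, hμ1, hμx⟩ := hx
    rw [Finset.centerMass_eq_of_sum_1 _ _ hμ1] at hμx
    simp only [id] at hμx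
    have hφx' : ∑ w ∈ VF, μ w * φ w = φ (fixedPoint n D c k l) := by
      rw [← hsumφ, hμx, hφx]
    have hall : ∀ w ∈ VF, w ≠ fixedPoint n D c k l → μ w = 0 := by
      intro w hw hwne
      by_contra hμw
      have hμpos : 0 < μ w := lt_of_le_of_ne (hμ0 w hw) (Ne.symm hμw)
      have hwV : w ∈ V := by rw [← hVF]; exact Finset.mem_coe.2 hw
      have hstrict : ∑ w' ∈ VF, μ w' * φ w'
          < ∑ w' ∈ VF, μ w' * φ (fixedPoint n D c k l) := by
        refine Finset.sum_lt_sum ?_ ⟨w, hw, ?_⟩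
        · intro w' hw'
          have hw'V : w' ∈ V := by rw [← hVF]; exact Finset.mem_coe.2 hw'
          rcases eq_or_ne w' (fixedPoint n D c k l) with rfl | hne
          · exact le_rfl
          · exact mul_le_mul_of_nonneg_left (le_of_lt (hmax w' hw'V hne)) (hμ0 w' hw')
        · exact mul_lt_mul_of_pos_left (hmax w hwV hwne) hμpos
      rw [hφx', ← Finset.sum_mul, hμ1, one_mul] at hstrict
      exact lt_irrefl _ hstrict
    have hx_eq : x = μ (fixedPoint n D c k l) • fixedPoint n D c k l := by
      rw [← hμx]
      exact Finset.sum_eq_single_of_mem _ hfpVF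
        (fun w hw hne => by rw [hall w hw hne, zero_smul])
    have hμfp : μ (fixedPoint n D c k l) = 1 := by
      rw [← hμ1]
      exact (Finset.sum_eq_single_of_mem _ hfpVF (fun w hw hne => hall w hw hne)).symm
    rw [hx_eq, hμfp, one_smul]
  rw [mem_extremePoints]
  refine ⟨fixedPoint_mem hn hD hc hk hkl hl, ?_⟩
  intro x₁ h₁ x₂ h₂ hseg
  obtain ⟨a, b, ha, hb, hab, hx⟩ := hseg
  rw [heqΔ] at h₁ h₂
  have hφ1 := hhull_le x₁ h₁
  have hφ2 := hhull_le x₂ h₂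
  have heq2 : a * φ x₁ + b * φ x₂ = φ (fixedPoint n D c k l) := by
    rw [← hcomb, hx]
  have hm1 : a * φ x₁ ≤ a * φ (fixedPoint n D c k l) := mul_le_mul_of_nonneg_left hφ1 ha.le
  have hm2 : b * φ x₂ ≤ b * φ (fixedPoint n D c k l) := mul_le_mul_of_nonneg_left hφ2 hb.le
  have hm3 : a * φ (fixedPoint n D c k l) + b * φ (fixedPoint n D c k l)
      = φ (fixedPoint n D c k l) := by rw [← add_mul, hab, one_mul]
  have hφ1' : φ x₁ = φ (fixedPoint n D c k l) :=
    mul_left_cancel₀ (ne_of_gt ha) (by linarith)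
  have hφ2' : φ x₂ = φ (fixedPoint n D c k l) :=
    mul_left_cancel₀ (ne_of_gt hb) (by linarith)
  exact ⟨hface x₁ h₁ hφ1', hface x₂ h₂ hφ2'⟩

end Extreme

/-- The moment polytope `Δ` equals the convex hull of the `n(n-1)/2` points `u_{kl}`
(`1 ≤ k < l ≤ n`); moreover these points are pairwise distinct and are precisely the
extreme points of `Δ`. -/
theorem moment_polytope_eq_convexHull_fixedPoints (n : ℕ) (hn : 3 ≤ n)
    (D : Finset (ℕ × ℕ)) (hD : IsTriangulation n D) (c : ℝ) (hc : 0 < c) :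
    MomentPolytope n D c =
        convexHull ℝ {v | ∃ k l : ℕ, 1 ≤ k ∧ k < l ∧ l ≤ n ∧ v = fixedPoint n D c k l} ∧
      (∀ k l k' l' : ℕ, 1 ≤ k → k < l → l ≤ n → 1 ≤ k' → k' < l' → l' ≤ n →
        fixedPoint n D c k l = fixedPoint n D c k' l' → k = k' ∧ l = l') ∧
      Set.extremePoints ℝ (MomentPolytope n D c) =
        {v | ∃ k l : ℕ, 1 ≤ k ∧ k < l ∧ l ≤ n ∧ v = fixedPoint n D c k l} := by
  refine ⟨polytope_eq_hull hn hD hc, fixedPoint_inj hn hc, ?_⟩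
  apply Set.Subset.antisymm
  · rw [polytope_eq_hull hn hD hc]
    exact extremePoints_convexHull_subset
  · rintro v ⟨k, l, h1, h2, h3, rfl⟩
    exact fixedPoint_extreme hn hD hc h1 h2 h3
end
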